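/- arXiv:math/9911243 — 7 statements merged into one kernel-verified Lean document; each statement's English description precedes it below -/
import Mathlib

section
/- For all integers k, n with 2 < k ≤ n and any m with 1 ≤ m ≤ k, the number of permutations of {1,…,n} that avoid every pattern in T_k^m equals (k-2)!·(k-1)^(n+2-k). -/
/-!
An entry of `α` starts an occurrence of a pattern of `T_k^m` exactly when at least `m - 1` smaller
and at least `k - m` larger entries follow it: it is then the `m`-th smallest entry of the
occurrence it forms with them. In the permutation with first entry `v` followed by `π` with its
values shifted past `v`, the first entry is followed by `v` smaller and `n - v` larger entries,
and every other entry sees the same as in `π`. So exactly `min (n + 1) (k - 1)` first entries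
are admissible, and the count is `∏_{j=1}^n min j (k - 1) = (k - 2)! (k - 1)^(n + 2 - k)` once
`n ≥ k`.
-/

/-- An occurrence of the pattern `τ` in `α` at the strictly increasing
index sequence `f`: the subsequence `α ∘ f` is order-isomorphic to `τ`. -/
def PattOccursAt {k n : ℕ} (τ : Equiv.Perm (Fin k)) (α : Equiv.Perm (Fin n))
    (f : Fin k → Fin n) : Prop :=
  StrictMono f ∧ ∀ i j : Fin k, τ i < τ j ↔ α (f i) < α (f j)

/-- `α` contains the pattern `τ`. -/
def Contains {k n : ℕ} (τ : Equiv.Perm (Fin k)) (α : Equiv.Perm (Fin n)) : Prop :=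
  ∃ f, PattOccursAt τ α f

/-- `α` avoids the pattern `τ`. -/
def Avoids {k n : ℕ} (τ : Equiv.Perm (Fin k)) (α : Equiv.Perm (Fin n)) : Prop :=
  ¬ Contains τ α

/-- `α` contains the pattern `τ` exactly once. -/
def ContainsExactlyOnce {k n : ℕ} (τ : Equiv.Perm (Fin k)) (α : Equiv.Perm (Fin n)) : Prop :=
  ∃! f, PattOccursAt τ α f

/-- `T_k^m`: the permutations `σ` of length `k` with first entry `σ(1) = m`
(one-based; in `Fin k` terms, `(σ 0) + 1 = m`). -/
def Tkm (k m : ℕ) : Set (Equiv.Perm (Fin k)) :=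
  {σ | ∀ i : Fin k, (i : ℕ) = 0 → (σ i : ℕ) + 1 = m}

open Finset Equiv
open scoped Nat

section PatternOccurrence

variable {k n : ℕ}

lemma card_filter_apply_lt (τ : Perm (Fin k)) (c : Fin k) : #{j | τ j < c} = c := by
  rw [card_equiv τ (t := {y | y < c}) (by simp), filter_gt_eq_Iio]
  simp

lemma card_filter_lt_apply (τ : Perm (Fin k)) (c : Fin k) : #{j | c < τ j} = k - 1 - c := by
  rw [card_equiv τ (t := {y | c < y}) (by simp), filter_lt_eq_Ioi]
  simp

variable {τ : Perm (Fin k)} {α : Perm (Fin n)} {f : Fin k → Fin n}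

lemma PattOccursAt.val_eq_card (h : PattOccursAt τ α f) (a : Fin k) :
    (τ a : ℕ) = #{x ∈ univ.map ⟨f, h.1.injective⟩ | α x < α (f a)} := by
  rw [← card_filter_apply_lt τ (τ a), filter_map, card_map]
  simp only [Function.comp_def, Function.Embedding.coeFn_mk, h.2]

lemma PattOccursAt.sub_val_eq_card (h : PattOccursAt τ α f) (a : Fin k) :
    k - 1 - τ a = #{x ∈ univ.map ⟨f, h.1.injective⟩ | α (f a) < α x} := by
  rw [← card_filter_lt_apply τ (τ a), filter_map, card_map]
  simp only [Function.comp_def, Function.Embedding.coeFn_mk, h.2]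

lemma exists_pattOccursAt (α : Perm (Fin n)) (hf : StrictMono f) :
    ∃ τ : Perm (Fin k), PattOccursAt τ α f := by
  set s := Tuple.sort (α ∘ f)
  have hs : StrictMono (α ∘ f ∘ s) :=
    (Tuple.monotone_sort (α ∘ f)).strictMono_of_injective
      (α.injective.comp (hf.injective.comp s.injective))
  refine ⟨s.symm, hf, fun i j => ?_⟩
  simpa using (hs.lt_iff_lt (a := s.symm i) (b := s.symm j)).symm

end PatternOccurrence

section TkmHead

variable {k m n : ℕ}

def smallerAfter (σ : Perm (Fin n)) (i : Fin n) : ℕ := #{j | i < j ∧ σ j < σ i}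

def largerAfter (σ : Perm (Fin n)) (i : Fin n) : ℕ := #{j | i < j ∧ σ i < σ j}

def IsTkmHead (k m : ℕ) (σ : Perm (Fin n)) (i : Fin n) : Prop :=
  m - 1 ≤ smallerAfter σ i ∧ k - m ≤ largerAfter σ i

lemma PattOccursAt.isTkmHead [NeZero k] {τ : Perm (Fin k)} {α : Perm (Fin n)}
    {f : Fin k → Fin n} (h : PattOccursAt τ α f) (hτ : τ ∈ Tkm k m) :
    IsTkmHead k m α (f 0) := by
  have hτ0 : (τ 0 : ℕ) + 1 = m := hτ 0 rfl
  have hafter : ∀ x ∈ univ.map ⟨f, h.1.injective⟩, x ≠ f 0 → f 0 < x := by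
    simp only [mem_map, mem_univ, true_and, Function.Embedding.coeFn_mk]
    rintro _ ⟨j, rfl⟩ hj
    exact h.1 ((Fin.pos_iff_ne_zero' j).2 fun h0 => hj (by rw [h0]))
  constructor
  · calc m - 1 = τ 0 := by omega
      _ = #{x ∈ univ.map ⟨f, h.1.injective⟩ | α x < α (f 0)} := h.val_eq_card 0
      _ ≤ smallerAfter α (f 0) := card_le_card fun x hx => by
        obtain ⟨hxf, hlt⟩ := mem_filter.1 hx
        exact mem_filter.2 ⟨mem_univ x, hafter x hxf (by rintro rfl; exact hlt.false), hlt⟩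
  · calc k - m = k - 1 - τ 0 := by omega
      _ = #{x ∈ univ.map ⟨f, h.1.injective⟩ | α (f 0) < α x} := h.sub_val_eq_card 0
      _ ≤ largerAfter α (f 0) := card_le_card fun x hx => by
        obtain ⟨hxf, hlt⟩ := mem_filter.1 hx
        exact mem_filter.2 ⟨mem_univ x, hafter x hxf (by rintro rfl; exact hlt.false), hlt⟩

lemma IsTkmHead.exists_mem_tkm_contains (hm1 : 1 ≤ m) (hmk : m ≤ k) {α : Perm (Fin n)}
    {i : Fin n} (hi : IsTkmHead k m α i) : ∃ τ ∈ Tkm k m, Contains τ α := by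
  obtain ⟨S, hS, hSc⟩ := exists_subset_card_eq hi.1
  obtain ⟨T, hT, hTc⟩ := exists_subset_card_eq hi.2
  simp only [subset_iff, mem_filter, mem_univ, true_and] at hS hT
  have hiST : i ∉ S ∪ T := by
    rw [mem_union]
    rintro (hx | hx)
    exacts [(hS hx).1.false, (hT hx).1.false]
  have hST : Disjoint S T :=
    disjoint_left.2 fun x hxS hxT => ((hS hxS).2.trans (hT hxT).2).false
  have hF : #(insert i (S ∪ T)) = k := by
    rw [card_insert_of_notMem hiST, card_union_of_disjoint hST]
    omega
  have : NeZero k := ⟨by omega⟩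
  set f := (insert i (S ∪ T)).orderEmbOfFin hF
  have hf0 : f 0 = i := by
    refine (orderEmbOfFin_zero hF (Nat.pos_of_neZero k)).trans
      (le_antisymm (min'_le _ _ (mem_insert_self _ _)) (le_min' _ _ _ fun x hx => ?_))
    rcases mem_insert.1 hx with rfl | hx
    · exact le_rfl
    · rcases mem_union.1 hx with hx | hx
      exacts [(hS hx).1.le, (hT hx).1.le]
  obtain ⟨τ, hτ⟩ := exists_pattOccursAt α f.strictMono
  have himage : univ.map ⟨f, hτ.1.injective⟩ = insert i (S ∪ T) := map_orderEmbOfFin_univ _ hF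
  have hsmaller : m - 1 ≤ τ 0 := by
    rw [hτ.val_eq_card, himage, hf0, ← hSc]
    exact card_le_card fun x hx =>
      mem_filter.2 ⟨mem_insert_of_mem (mem_union_left _ hx), (hS hx).2⟩
  have hlarger : k - m ≤ k - 1 - τ 0 := by
    rw [hτ.sub_val_eq_card, himage, hf0, ← hTc]
    exact card_le_card fun x hx =>
      mem_filter.2 ⟨mem_insert_of_mem (mem_union_right _ hx), (hT hx).2⟩
  refine ⟨τ, fun j hj => ?_, f, hτ⟩
  obtain rfl : j = 0 := Fin.ext hj
  have := (τ 0).isLt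
  omega

lemma forall_avoids_tkm_iff (hm1 : 1 ≤ m) (hmk : m ≤ k) (α : Perm (Fin n)) :
    (∀ τ ∈ Tkm k m, Avoids τ α) ↔ ∀ i, ¬ IsTkmHead k m α i := by
  have : NeZero k := ⟨by omega⟩
  constructor
  · intro hα i hi
    obtain ⟨τ, hτ, hcont⟩ := hi.exists_mem_tkm_contains hm1 hmk
    exact hα τ hτ hcont
  · rintro hα τ hτ ⟨f, hf⟩
    exact hα (f 0) (hf.isTkmHead hτ)

end TkmHead

section Prepend

variable {n : ℕ}

lemma cons_succAbove_comp_injective (v : Fin (n + 1)) (π : Perm (Fin n)) :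
    Function.Injective (Fin.cons v (v.succAbove ∘ π) : Fin (n + 1) → Fin (n + 1)) :=
  Fin.cons_injective_iff.2
    ⟨fun ⟨j, hj⟩ => Fin.succAbove_ne v (π j) hj, Fin.succAbove_right_injective.comp π.injective⟩

noncomputable def prependPerm (v : Fin (n + 1)) (π : Perm (Fin n)) : Perm (Fin (n + 1)) :=
  Equiv.ofBijective _ (cons_succAbove_comp_injective v π).bijective_of_finite

@[simp]
lemma prependPerm_zero (v : Fin (n + 1)) (π : Perm (Fin n)) : prependPerm v π 0 = v := rfl

@[simp]
lemma prependPerm_succ (v : Fin (n + 1)) (π : Perm (Fin n)) (j : Fin n) :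
    prependPerm v π j.succ = v.succAbove (π j) := rfl

lemma prependPerm_injective :
    Function.Injective fun p : Fin (n + 1) × Perm (Fin n) => prependPerm p.1 p.2 := by
  rintro ⟨v, π⟩ ⟨v', π'⟩ h
  obtain rfl : v = v' := by simpa using DFunLike.congr_fun h 0
  obtain rfl : π = π' :=
    Equiv.ext fun j => by simpa using DFunLike.congr_fun h j.succ
  rfl

noncomputable def prependEquiv : Fin (n + 1) × Perm (Fin n) ≃ Perm (Fin (n + 1)) :=
  Equiv.ofBijective _ <| (Fintype.bijective_iff_injective_and_card _).2
    ⟨prependPerm_injective, by simp [Fintype.card_perm, Nat.factorial_succ]⟩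

lemma smallerAfter_prependPerm_zero (v : Fin (n + 1)) (π : Perm (Fin n)) :
    smallerAfter (prependPerm v π) 0 = v := by
  rw [smallerAfter, Fin.card_filter_univ_succ']
  simp only [Fin.succ_pos, prependPerm_zero, prependPerm_succ,
    Fin.succAbove_lt_iff_castSucc_lt, lt_self_iff_false, and_false, if_false, true_and, zero_add]
  rw [card_equiv π (t := {y : Fin n | (y : ℕ) < v}) (by simp [Fin.lt_def]), Fin.card_filter_val_lt]
  omega

lemma largerAfter_prependPerm_zero (v : Fin (n + 1)) (π : Perm (Fin n)) :
    largerAfter (prependPerm v π) 0 = n - v := by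
  rw [largerAfter, Fin.card_filter_univ_succ']
  simp only [Fin.succ_pos, prependPerm_zero, prependPerm_succ,
    Fin.lt_succAbove_iff_le_castSucc, lt_self_iff_false, and_false, if_false, true_and, zero_add]
  have h := card_filter_add_card_filter_not (s := univ) (fun y : Fin n => (y : ℕ) < v)
  rw [Fin.card_filter_val_lt, card_univ, Fintype.card_fin] at h
  rw [card_equiv π (t := {y : Fin n | ¬ (y : ℕ) < v}) (by simp [Fin.le_def])]
  omega

lemma smallerAfter_prependPerm_succ (v : Fin (n + 1)) (π : Perm (Fin n)) (i : Fin n) :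
    smallerAfter (prependPerm v π) i.succ = smallerAfter π i := by
  rw [smallerAfter, Fin.card_filter_univ_succ']
  simp [smallerAfter]

lemma largerAfter_prependPerm_succ (v : Fin (n + 1)) (π : Perm (Fin n)) (i : Fin n) :
    largerAfter (prependPerm v π) i.succ = largerAfter π i := by
  rw [largerAfter, Fin.card_filter_univ_succ']
  simp [largerAfter]

end Prepend

section Counting

variable {k m : ℕ}

lemma card_filter_not_le_and_le_sub (a b N : ℕ) :
    #{v : Fin (N + 1) | ¬ (a ≤ (v : ℕ) ∧ b ≤ N - v)} = min (N + 1) (a + b) := by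
  have hbad : #{v : Fin (N + 1) | a ≤ (v : ℕ) ∧ b ≤ N - v} = N + 1 - b - a := by
    rw [← Nat.card_Ico, ← card_map Fin.valEmbedding]
    congr 1
    ext x
    simp only [mem_map, mem_filter, mem_univ, true_and, Fin.valEmbedding_apply, mem_Ico]
    constructor
    · rintro ⟨v, hv, rfl⟩
      omega
    · exact fun hx => ⟨⟨x, by omega⟩, by simp only; omega, rfl⟩
  have h := card_filter_add_card_filter_not (s := univ)
    (fun v : Fin (N + 1) => a ≤ (v : ℕ) ∧ b ≤ N - v)
  rw [hbad, card_univ, Fintype.card_fin] at h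
  omega

lemma forall_not_isTkmHead_prependPerm_iff {n : ℕ} (v : Fin (n + 1)) (π : Perm (Fin n)) :
    (∀ i, ¬ IsTkmHead k m (prependPerm v π) i) ↔
      ¬ (m - 1 ≤ (v : ℕ) ∧ k - m ≤ n - v) ∧ ∀ i, ¬ IsTkmHead k m π i := by
  simp only [Fin.forall_fin_succ, IsTkmHead, smallerAfter_prependPerm_zero,
    largerAfter_prependPerm_zero, smallerAfter_prependPerm_succ, largerAfter_prependPerm_succ]

lemma card_tkmHeadFree_succ (hm1 : 1 ≤ m) (hmk : m ≤ k) (n : ℕ) :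
    Nat.card {σ : Perm (Fin (n + 1)) // ∀ i, ¬ IsTkmHead k m σ i} =
      min (n + 1) (k - 1) * Nat.card {π : Perm (Fin n) // ∀ i, ¬ IsTkmHead k m π i} := by
  rw [← Nat.card_congr ((Equiv.subtypeProdEquivProd
      (p := fun v : Fin (n + 1) => ¬ (m - 1 ≤ (v : ℕ) ∧ k - m ≤ n - v))
      (q := fun π : Perm (Fin n) => ∀ i, ¬ IsTkmHead k m π i)).symm.trans
      (prependEquiv.subtypeEquiv fun p => (forall_not_isTkmHead_prependPerm_iff p.1 p.2).symm)),
    Nat.card_prod, Nat.card_eq_fintype_card (α := {v : Fin (n + 1) // _}), Fintype.card_subtype,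
    card_filter_not_le_and_le_sub]
  congr 2
  omega

lemma card_tkmHeadFree_of_le (hm1 : 1 ≤ m) (hmk : m ≤ k) {n : ℕ} (hn : n ≤ k - 1) :
    Nat.card {σ : Perm (Fin n) // ∀ i, ¬ IsTkmHead k m σ i} = n ! := by
  induction n with
  | zero => simp
  | succ n ih =>
    rw [card_tkmHeadFree_succ hm1 hmk, ih (by omega), Nat.factorial_succ, min_eq_left hn]

lemma card_tkmHeadFree_of_ge (hm1 : 1 ≤ m) (hmk : m ≤ k) {n : ℕ} (hn : k - 1 ≤ n) :
    Nat.card {σ : Perm (Fin n) // ∀ i, ¬ IsTkmHead k m σ i} =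
      (k - 1)! * (k - 1) ^ (n - (k - 1)) := by
  induction n, hn using Nat.le_induction with
  | base => simp [card_tkmHeadFree_of_le hm1 hmk le_rfl]
  | succ n hn ih =>
    rw [card_tkmHeadFree_succ hm1 hmk, ih, min_eq_right (by omega),
      show n + 1 - (k - 1) = n - (k - 1) + 1 by omega, pow_succ]
    ring

end Counting

theorem stmt0_general (k m n : ℕ) (hkn : k ≤ n) (hm1 : 1 ≤ m) (hmk : m ≤ k) :
    Set.ncard {α : Equiv.Perm (Fin n) | ∀ τ ∈ Tkm k m, Avoids τ α}
      = Nat.factorial (k - 2) * (k - 1) ^ (n + 2 - k) := by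
  rw [Set.ext fun α => forall_avoids_tkm_iff hm1 hmk α, ← Nat.card_coe_set_eq, Set.coe_ofPred,
    card_tkmHeadFree_of_ge hm1 hmk (n := n) (by omega)]
  obtain ⟨d, rfl⟩ := Nat.exists_eq_add_of_le hkn
  rw [show k + d - (k - 1) = d + 1 by omega, show k + d + 2 - k = d + 2 by omega]
  rcases k with _ | _ | k
  · omega
  · simp
  · rw [show k + 2 - 1 = k + 1 by rfl, show k + 2 - 2 = k by rfl, Nat.factorial_succ]
    ring

theorem stmt0 (k m n : ℕ) (hk : 2 < k) (hkn : k ≤ n) (hm1 : 1 ≤ m) (hmk : m ≤ k) :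
    Set.ncard {α : Equiv.Perm (Fin n) | ∀ τ ∈ Tkm k m, Avoids τ α}
      = Nat.factorial (k - 2) * (k - 1) ^ (n + 2 - k) :=
  stmt0_general k m n hkn hm1 hmk
end

section
/- For 2 < k ≤ n and 1 ≤ m ≤ k, the cardinality of S_{n+1}(T_k^m) equals (k-1) times the cardinality of S_n(T_k^m). -/
open Finset

lemma card_filter_comp_perm {k : ℕ} (τ : Equiv.Perm (Fin k)) (P : Fin k → Prop) [DecidablePred P] :
    (univ.filter fun i => P (τ i)).card = (univ.filter P).card := by
  rw [← Fintype.card_subtype, ← Fintype.card_subtype]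
  exact Fintype.card_congr (τ.subtypeEquiv (by simp))

lemma card_filter_lt_fin {k : ℕ} (c : Fin k) :
    (univ.filter fun i : Fin k => i < c).card = (c : ℕ) := by
  rw [← Fin.card_Iio c]; congr 1; ext i; simp

lemma card_filter_gt_fin {k : ℕ} (c : Fin k) :
    (univ.filter fun i : Fin k => c < i).card = k - 1 - (c : ℕ) := by
  rw [← Fin.card_Ioi c]; congr 1; ext i; simp

lemma exists_std {k N : ℕ} (g : Fin k → Fin N) (hg : Function.Injective g) :
    ∃ τ : Equiv.Perm (Fin k), ∀ i j, τ i < τ j ↔ g i < g j := by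
  classical
  set s : Finset (Fin N) := univ.image g with hs
  have hcard : s.card = k := by
    rw [hs, Finset.card_image_of_injective _ hg, card_univ, Fintype.card_fin]
  let e := s.orderIsoOfFin hcard
  let t : Fin k → Fin k := fun i => e.symm ⟨g i, by simp [hs]⟩
  have ht : Function.Injective t := by
    intro i j hij
    have := e.symm.injective hij
    exact hg (Subtype.ext_iff.mp this)
  refine ⟨Equiv.ofBijective t ((Finite.injective_iff_bijective).mp ht), fun i j => ?_⟩
  show t i < t j ↔ _
  rw [← e.lt_iff_lt]
  simp only [t, OrderIso.apply_symm_apply]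
  exact Iff.rfl

lemma card_filter_emb {N k : ℕ} (s : Finset (Fin N)) (hs : s.card = k) (P : Fin N → Prop)
    [DecidablePred P] :
    (univ.filter fun i => P (s.orderEmbOfFin hs i)).card = (s.filter P).card := by
  apply Finset.card_bij (fun i _ => s.orderEmbOfFin hs i)
  · intro i hi
    simp only [mem_filter, mem_univ, true_and] at hi ⊢
    exact ⟨Finset.orderEmbOfFin_mem s hs i, hi⟩
  · intro i _ j _ hij
    exact (s.orderEmbOfFin hs).injective hij
  · intro y hy
    simp only [mem_filter] at hy
    have : y ∈ Set.range (s.orderEmbOfFin hs) := by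
      rw [Finset.range_orderEmbOfFin]; exact hy.1
    obtain ⟨i, hi⟩ := this
    exact ⟨i, by simp [hi, hy.2], hi⟩

/-- `α` has a "bad" index `x`. -/
def badAt (k m : ℕ) {N : ℕ} (α : Equiv.Perm (Fin N)) (x : Fin N) : Prop :=
  m - 1 ≤ (univ.filter fun y => x < y ∧ α y < α x).card ∧
  k - m ≤ (univ.filter fun y => x < y ∧ α x < α y).card

lemma contains_of_badAt {k m : ℕ} (hm1 : 1 ≤ m) (hmk : m ≤ k) {N : ℕ}
    (α : Equiv.Perm (Fin N)) (x : Fin N) (h : badAt k m α x) :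
    ∃ τ ∈ Tkm k m, Contains τ α := by
  classical
  haveI : NeZero k := ⟨by omega⟩
  obtain ⟨hA, hB⟩ := h
  obtain ⟨A, hAsub, hAcard⟩ := Finset.exists_subset_card_eq hA
  obtain ⟨B, hBsub, hBcard⟩ := Finset.exists_subset_card_eq hB
  set s : Finset (Fin N) := insert x (A ∪ B) with hsdef
  have hxA : ∀ y ∈ A, x < y ∧ α y < α x := fun y hy => by
    have := hAsub hy; simpa using this
  have hxB : ∀ y ∈ B, x < y ∧ α x < α y := fun y hy => by
    have := hBsub hy; simpa using this
  have hdisj : Disjoint A B := by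
    rw [Finset.disjoint_left]
    intro y hyA hyB
    exact absurd ((hxA y hyA).2.trans (hxB y hyB).2) (lt_irrefl _)
  have hxnot : x ∉ A ∪ B := by
    intro hx
    rcases Finset.mem_union.mp hx with h' | h'
    · exact absurd (hxA x h').1 (lt_irrefl _)
    · exact absurd (hxB x h').1 (lt_irrefl _)
  have hscard : s.card = k := by
    rw [hsdef, Finset.card_insert_of_notMem hxnot, Finset.card_union_of_disjoint hdisj,
      hAcard, hBcard]
    omega
  set f := s.orderEmbOfFin hscard with hf
  have hf0 : f 0 = x := by
    have hk0 : 0 < k := by omega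
    have h00 : (0 : Fin k) = ⟨0, hk0⟩ := by ext; simp
    rw [hf, h00, Finset.orderEmbOfFin_zero hscard hk0]
    refine le_antisymm (Finset.min'_le _ _ (by simp [hsdef])) (Finset.le_min' _ _ _ ?_)
    intro y hy
    rw [hsdef, Finset.mem_insert] at hy
    rcases hy with rfl | hy
    · exact le_refl _
    · rcases Finset.mem_union.mp hy with h' | h'
      · exact (hxA y h').1.le
      · exact (hxB y h').1.le
  have hginj : Function.Injective (fun i => α (f i)) :=
    α.injective.comp (f.injective)
  obtain ⟨τ, hτ⟩ := exists_std _ hginj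
  have hrank : (τ 0 : ℕ) = m - 1 := by
    have e1 : (univ.filter fun i => τ i < τ 0).card = (τ 0 : ℕ) := by
      rw [card_filter_comp_perm τ (fun c => c < τ 0), card_filter_lt_fin]
    have e2 : (univ.filter fun i => τ i < τ 0).card
        = (univ.filter fun i => α (f i) < α (f 0)).card := by
      congr 1; apply Finset.filter_congr; intro i _; simp [hτ]
    have e3 : (univ.filter fun i => α (f i) < α x).card
        = (s.filter fun y => α y < α x).card := card_filter_emb s hscard (fun y => α y < α x)
    have e4 : s.filter (fun y => α y < α x) = A := by
      ext y
      simp only [Finset.mem_filter, hsdef, Finset.mem_insert, Finset.mem_union]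
      constructor
      · rintro ⟨rfl | hy | hy, hlt⟩
        · exact absurd hlt (lt_irrefl _)
        · exact hy
        · exact absurd ((hxB y hy).2.trans hlt) (lt_irrefl _)
      · intro hy
        exact ⟨Or.inr (Or.inl hy), (hxA y hy).2⟩
    rw [← e1, e2, hf0, e3, e4, hAcard]
  refine ⟨τ, ?_, f, f.strictMono, hτ⟩
  intro i hi
  have : i = 0 := Fin.ext hi
  rw [this, hrank]
  omega

lemma badAt_of_occurs {k m : ℕ} (hk0 : 0 < k) (hm1 : 1 ≤ m) (hmk : m ≤ k) {N : ℕ}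
    (α : Equiv.Perm (Fin N)) (τ : Equiv.Perm (Fin k)) (hτ : τ ∈ Tkm k m)
    (f : Fin k → Fin N) (hf : PattOccursAt τ α f) : badAt k m α (f ⟨0, hk0⟩) := by
  classical
  haveI : NeZero k := ⟨by omega⟩
  have h00 : (⟨0, hk0⟩ : Fin k) = 0 := by ext; simp
  rw [h00]
  obtain ⟨hmono, hiff⟩ := hf
  have hτ0 : (τ 0 : ℕ) = m - 1 := by
    have := hτ 0 rfl
    omega
  constructor
  · have e1 : (univ.filter fun i => τ i < τ 0).card = m - 1 := by
      rw [card_filter_comp_perm τ (fun c => c < τ 0), card_filter_lt_fin, hτ0]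
    rw [← e1]
    apply Finset.card_le_card_of_injOn f
    · intro i hi
      simp only [mem_coe, mem_filter, mem_univ, true_and] at hi ⊢
      have hi0 : i ≠ 0 := by
        intro h; rw [h] at hi; exact absurd hi (lt_irrefl _)
      exact ⟨hmono ((Fin.pos_iff_ne_zero' i).mpr hi0), (hiff i 0).mp hi⟩
    · exact fun i _ j _ hij => hmono.injective hij
  · have e1 : (univ.filter fun i => τ 0 < τ i).card = k - m := by
      rw [card_filter_comp_perm τ (fun c => τ 0 < c), card_filter_gt_fin, hτ0]
      omega
    rw [← e1]
    apply Finset.card_le_card_of_injOn f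
    · intro i hi
      simp only [mem_coe, mem_filter, mem_univ, true_and] at hi ⊢
      have hi0 : i ≠ 0 := by
        intro h; rw [h] at hi; exact absurd hi (lt_irrefl _)
      exact ⟨hmono ((Fin.pos_iff_ne_zero' i).mpr hi0), (hiff 0 i).mp hi⟩
    · exact fun i _ j _ hij => hmono.injective hij

lemma avoids_iff_good {k m : ℕ} (hk0 : 0 < k) (hm1 : 1 ≤ m) (hmk : m ≤ k) {N : ℕ}
    (α : Equiv.Perm (Fin N)) :
    (∀ τ ∈ Tkm k m, Avoids τ α) ↔ ∀ x, ¬ badAt k m α x := by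
  haveI : NeZero k := ⟨by omega⟩
  constructor
  · intro h x hbad
    obtain ⟨τ, hτ, hc⟩ := contains_of_badAt hm1 hmk α x hbad
    exact h τ hτ hc
  · rintro h τ hτ ⟨f, hf⟩
    exact h (f ⟨0, hk0⟩) (badAt_of_occurs hk0 hm1 hmk α τ hτ f hf)

def Phi (n : ℕ) (v : Fin (n + 1)) (β : Equiv.Perm (Fin n)) : Equiv.Perm (Fin (n + 1)) :=
  ((finSuccEquiv n).trans β.optionCongr).trans (finSuccEquiv' v).symm

lemma Phi_zero (n : ℕ) (v : Fin (n + 1)) (β : Equiv.Perm (Fin n)) : Phi n v β 0 = v := by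
  simp [Phi, finSuccEquiv_zero, finSuccEquiv'_symm_none]

lemma Phi_succ (n : ℕ) (v : Fin (n + 1)) (β : Equiv.Perm (Fin n)) (j : Fin n) :
    Phi n v β j.succ = v.succAbove (β j) := by
  simp [Phi, finSuccEquiv_succ, finSuccEquiv'_symm_some]

lemma Phi_bijective (n : ℕ) :
    Function.Bijective (fun p : Fin (n + 1) × Equiv.Perm (Fin n) => Phi n p.1 p.2) := by
  rw [Fintype.bijective_iff_injective_and_card]
  constructor
  · rintro ⟨v, β⟩ ⟨w, γ⟩ h
    simp only at h
    have hv : v = w := by rw [← Phi_zero n v β, ← Phi_zero n w γ, h]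
    subst hv
    have hβ : β = γ := by
      apply Equiv.ext; intro j
      have := congrArg (fun σ : Equiv.Perm (Fin (n+1)) => σ j.succ) h
      simp only [Phi_succ] at this
      exact Fin.succAbove_right_injective this
    rw [hβ]
  · simp [Fintype.card_perm, Fintype.card_prod, Nat.factorial_succ]

lemma badAt_Phi_zero (k m n : ℕ) (v : Fin (n + 1)) (β : Equiv.Perm (Fin n)) :
    badAt k m (Phi n v β) 0 ↔ (m - 1 ≤ (v : ℕ) ∧ k - m ≤ n - (v : ℕ)) := by
  classical
  set α := Phi n v β with hα
  have ha : (univ.filter fun y => (0 : Fin (n + 1)) < y ∧ α y < α 0).card = (v : ℕ) := by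
    have h1 : (univ.filter fun y => (0 : Fin (n + 1)) < y ∧ α y < α 0)
        = univ.filter fun y => α y < α 0 := by
      apply Finset.filter_congr
      intro y _
      constructor
      · exact And.right
      · intro h
        refine ⟨?_, h⟩
        rcases eq_or_ne y 0 with rfl | hy
        · exact absurd h (lt_irrefl _)
        · exact (Fin.pos_iff_ne_zero' y).mpr hy
    rw [h1, card_filter_comp_perm α (fun c => c < α 0), card_filter_lt_fin]
    rw [hα, Phi_zero]
  have hb : (univ.filter fun y => (0 : Fin (n + 1)) < y ∧ α 0 < α y).card = n - (v : ℕ) := by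
    have h1 : (univ.filter fun y => (0 : Fin (n + 1)) < y ∧ α 0 < α y)
        = univ.filter fun y => α 0 < α y := by
      apply Finset.filter_congr
      intro y _
      constructor
      · exact And.right
      · intro h
        refine ⟨?_, h⟩
        rcases eq_or_ne y 0 with rfl | hy
        · exact absurd h (lt_irrefl _)
        · exact (Fin.pos_iff_ne_zero' y).mpr hy
    rw [h1, card_filter_comp_perm α (fun c => α 0 < c), card_filter_gt_fin]
    rw [hα, Phi_zero]
    omega
  unfold badAt
  rw [ha, hb]

lemma badAt_Phi_succ (k m n : ℕ) (v : Fin (n + 1)) (β : Equiv.Perm (Fin n)) (j : Fin n) :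
    badAt k m (Phi n v β) j.succ ↔ badAt k m β j := by
  classical
  set α := Phi n v β with hα
  have key : ∀ (R : Fin n → Fin n → Prop) [DecidableRel R],
      (∀ a b, R (β a) (β b) ↔ α a.succ < α b.succ) →
      (univ.filter fun y => j.succ < y ∧ α y < α j.succ).card
        = (univ.filter fun i => j < i ∧ β i < β j).card → True := fun _ _ _ _ => trivial
  have ha : (univ.filter fun y => j.succ < y ∧ α y < α j.succ).card
      = (univ.filter fun i => j < i ∧ β i < β j).card := by
    refine (Finset.card_bij (fun i _ => Fin.succ i) ?_ ?_ ?_).symm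
    · intro i hi
      simp only [mem_filter, mem_univ, true_and] at hi ⊢
      refine ⟨Fin.succ_lt_succ_iff.mpr hi.1, ?_⟩
      rw [hα, Phi_succ, Phi_succ]
      exact Fin.succAbove_lt_succAbove_iff.mpr hi.2
    · intro i _ i' _ h
      exact Fin.succ_injective _ h
    · intro y hy
      simp only [mem_filter, mem_univ, true_and] at hy
      have hy0 : y ≠ 0 := by
        intro h
        rw [h] at hy
        exact absurd hy.1 (by simp [Fin.lt_def])
      obtain ⟨i, rfl⟩ := Fin.exists_succ_eq_of_ne_zero hy0
      refine ⟨i, ?_, rfl⟩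
      simp only [mem_filter, mem_univ, true_and]
      refine ⟨Fin.succ_lt_succ_iff.mp hy.1, ?_⟩
      have := hy.2
      rw [hα, Phi_succ, Phi_succ] at this
      exact Fin.succAbove_lt_succAbove_iff.mp this
  have hb : (univ.filter fun y => j.succ < y ∧ α j.succ < α y).card
      = (univ.filter fun i => j < i ∧ β j < β i).card := by
    refine (Finset.card_bij (fun i _ => Fin.succ i) ?_ ?_ ?_).symm
    · intro i hi
      simp only [mem_filter, mem_univ, true_and] at hi ⊢
      refine ⟨Fin.succ_lt_succ_iff.mpr hi.1, ?_⟩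
      rw [hα, Phi_succ, Phi_succ]
      exact Fin.succAbove_lt_succAbove_iff.mpr hi.2
    · intro i _ i' _ h
      exact Fin.succ_injective _ h
    · intro y hy
      simp only [mem_filter, mem_univ, true_and] at hy
      have hy0 : y ≠ 0 := by
        intro h
        rw [h] at hy
        exact absurd hy.1 (by simp [Fin.lt_def])
      obtain ⟨i, rfl⟩ := Fin.exists_succ_eq_of_ne_zero hy0
      refine ⟨i, ?_, rfl⟩
      simp only [mem_filter, mem_univ, true_and]
      refine ⟨Fin.succ_lt_succ_iff.mp hy.1, ?_⟩
      have := hy.2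
      rw [hα, Phi_succ, Phi_succ] at this
      exact Fin.succAbove_lt_succAbove_iff.mp this
  unfold badAt
  rw [ha, hb]

lemma good_Phi_iff (k m n : ℕ) (hk0 : 0 < k) (hm1 : 1 ≤ m) (hmk : m ≤ k)
    (v : Fin (n + 1)) (β : Equiv.Perm (Fin n)) :
    (∀ τ ∈ Tkm k m, Avoids τ (Phi n v β)) ↔
      (¬ (m - 1 ≤ (v : ℕ) ∧ k - m ≤ n - (v : ℕ)) ∧ ∀ τ ∈ Tkm k m, Avoids τ β) := by
  rw [avoids_iff_good hk0 hm1 hmk, avoids_iff_good hk0 hm1 hmk]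
  constructor
  · intro h
    refine ⟨fun hb => h 0 ((badAt_Phi_zero k m n v β).mpr hb), fun j hb => ?_⟩
    exact h j.succ ((badAt_Phi_succ k m n v β j).mpr hb)
  · rintro ⟨h0, hs⟩ x
    induction x using Fin.cases with
    | zero => exact fun hb => h0 ((badAt_Phi_zero k m n v β).mp hb)
    | succ j => exact fun hb => hs j ((badAt_Phi_succ k m n v β j).mp hb)

lemma card_allowed (k m n : ℕ) (hk : 2 < k) (hkn : k ≤ n) (hm1 : 1 ≤ m) (hmk : m ≤ k) :
    (univ.filter fun v : Fin (n + 1) => ¬ (m - 1 ≤ (v : ℕ) ∧ k - m ≤ n - (v : ℕ))).card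
      = k - 1 := by
  classical
  rw [Finset.filter_not, Finset.card_sdiff_of_subset (Finset.filter_subset _ _), Finset.card_univ,
    Fintype.card_fin]
  have : (univ.filter fun v : Fin (n + 1) => m - 1 ≤ (v : ℕ) ∧ k - m ≤ n - (v : ℕ)).card
      = ((Finset.Iio (n + 1)).filter fun x : ℕ => m - 1 ≤ x ∧ k - m ≤ n - x).card := by
    rw [← Fin.map_valEmbedding_univ, Finset.filter_map, Finset.card_map]
    rfl
  rw [this]
  have h2 : ((Finset.Iio (n + 1)).filter fun x : ℕ => m - 1 ≤ x ∧ k - m ≤ n - x)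
      = Finset.Icc (m - 1) (n - (k - m)) := by
    ext x
    simp only [Finset.mem_filter, Finset.mem_Iio, Finset.mem_Icc]
    omega
  rw [h2, Nat.card_Icc]
  omega

theorem stmt2 (k m n : ℕ) (hk : 2 < k) (hkn : k ≤ n) (hm1 : 1 ≤ m) (hmk : m ≤ k) :
    Set.ncard {α : Equiv.Perm (Fin (n + 1)) | ∀ τ ∈ Tkm k m, Avoids τ α}
      = (k - 1) * Set.ncard {α : Equiv.Perm (Fin n) | ∀ τ ∈ Tkm k m, Avoids τ α} := by
  classical
  have hk0 : 0 < k := by omega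
  set S0 : Set (Equiv.Perm (Fin n)) := {α | ∀ τ ∈ Tkm k m, Avoids τ α} with hS0
  set V : Set (Fin (n + 1)) := {v | ¬ (m - 1 ≤ (v : ℕ) ∧ k - m ≤ n - (v : ℕ))} with hV
  have himg : {α : Equiv.Perm (Fin (n + 1)) | ∀ τ ∈ Tkm k m, Avoids τ α}
      = (fun p : Fin (n + 1) × Equiv.Perm (Fin n) => Phi n p.1 p.2) '' (V ×ˢ S0) := by
    ext α
    constructor
    · intro hα
      obtain ⟨⟨v, β⟩, hvβ⟩ := (Phi_bijective n).2 α
      have := (good_Phi_iff k m n hk0 hm1 hmk v β).mp (by simp only at hvβ; rw [hvβ]; exact hα)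
      exact ⟨(v, β), ⟨this.1, this.2⟩, hvβ⟩
    · rintro ⟨⟨v, β⟩, ⟨hv, hβ⟩, rfl⟩
      exact (good_Phi_iff k m n hk0 hm1 hmk v β).mpr ⟨hv, hβ⟩
  rw [himg, Set.ncard_image_of_injective _ (Phi_bijective n).1]
  have hprod : (V ×ˢ S0).ncard = V.ncard * S0.ncard := by
    rw [← Nat.card_coe_set_eq, ← Nat.card_coe_set_eq, ← Nat.card_coe_set_eq]
    rw [Nat.card_congr (Equiv.Set.prod V S0), Nat.card_prod]
  rw [hprod]
  congr 1
  have : V = ↑(univ.filter fun v : Fin (n + 1) => ¬ (m - 1 ≤ (v : ℕ) ∧ k - m ≤ n - (v : ℕ))) := by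
    ext v; simp [hV]
  rw [this, Set.ncard_coe_finset, card_allowed k m n hk hkn hm1 hmk]
end

section
/- For all 1 ≤ a ≤ b ≤ k with k > 2 and n ≥ k, the number of permutations of {1,…,n} avoiding all patterns in T_k^a ∪ T_k^{a+1} ∪ ⋯ ∪ T_k^b equals (k-1)!·(k+a-b-1)^(n+1-k). -/
open Finset

namespace Stmt3Aux

lemma card_val_lt (M t : ℕ) :
    ((univ : Finset (Fin M)).filter (fun v => v.val < t)).card = min t M := by
  have hb : ∀ m ∈ Finset.range (min t M), m < M := fun m hm => by
    simp only [Finset.mem_range] at hm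
    exact lt_of_lt_of_le hm (min_le_right _ _)
  have heq : ((univ : Finset (Fin M)).filter (fun v => v.val < t))
      = (Finset.range (min t M)).attachFin hb := by
    ext v
    simp only [Finset.mem_attachFin, Finset.mem_range, Finset.mem_filter, Finset.mem_univ,
      true_and]
    rw [lt_min_iff]
    exact ⟨fun h => ⟨h, v.isLt⟩, fun h => h.1⟩
  rw [heq, Finset.card_attachFin, Finset.card_range]

lemma card_val_ge (M t : ℕ) :
    ((univ : Finset (Fin M)).filter (fun v => t ≤ v.val)).card = M - min t M := by
  have h1 := card_val_lt M t
  have h2 : ((univ : Finset (Fin M)).filter (fun v => v.val < t)).card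
      + ((univ : Finset (Fin M)).filter (fun v => ¬ v.val < t)).card = M := by
    rw [Finset.card_filter_add_card_filter_not]
    simp
  have h3 : ((univ : Finset (Fin M)).filter (fun v => ¬ v.val < t))
      = ((univ : Finset (Fin M)).filter (fun v => t ≤ v.val)) := by
    simp [not_lt]
  rw [h3] at h2
  rcases le_total t M with h | h
  · rw [min_eq_left h] at h1 ⊢
    omega
  · rw [min_eq_right h] at h1 ⊢
    omega

lemma card_filter_comp_perm {M : ℕ} (e : Equiv.Perm (Fin M)) (q : Fin M → Prop)
    [DecidablePred q] :
    (univ.filter (fun i => q (e i))).card = (univ.filter q).card := by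
  apply Finset.card_nbij (fun i => e i)
  · intro x hx
    simp only [mem_coe, Finset.mem_filter, Finset.mem_univ, true_and] at *
    exact hx
  · exact (e.injective).injOn
  · intro v hv
    simp only [mem_coe, Finset.mem_filter, Finset.mem_univ, true_and] at hv
    exact ⟨e.symm v, by simp [hv], by simp⟩

lemma rank_lt {k : ℕ} (τ : Equiv.Perm (Fin k)) (x : Fin k) :
    (univ.filter (fun j => τ j < τ x)).card = (τ x : ℕ) := by
  rw [card_filter_comp_perm τ (fun v => v < τ x)]
  have h : ((univ : Finset (Fin k)).filter (fun v => v < τ x))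
      = ((univ : Finset (Fin k)).filter (fun v => v.val < ((τ x : ℕ)))) := by
    apply Finset.filter_congr; intro v _; rw [Fin.lt_def]
  rw [h, card_val_lt]
  exact min_eq_left (le_of_lt (τ x).isLt)

lemma rank_gt {k : ℕ} (τ : Equiv.Perm (Fin k)) (x : Fin k) :
    (univ.filter (fun j => τ x < τ j)).card = k - 1 - (τ x : ℕ) := by
  rw [card_filter_comp_perm τ (fun v => τ x < v)]
  have h : ((univ : Finset (Fin k)).filter (fun v => τ x < v))
      = ((univ : Finset (Fin k)).filter (fun v => ((τ x : ℕ) + 1) ≤ v.val)) := by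
    apply Finset.filter_congr; intro v _; rw [Fin.lt_def]; omega
  rw [h, card_val_ge]
  have := (τ x).isLt
  omega

/-- number of later smaller entries -/
def Lc {n : ℕ} (α : Equiv.Perm (Fin n)) (i : Fin n) : ℕ :=
  (univ.filter (fun j => i < j ∧ α j < α i)).card

/-- number of later greater entries -/
def Gc {n : ℕ} (α : Equiv.Perm (Fin n)) (i : Fin n) : ℕ :=
  (univ.filter (fun j => i < j ∧ α i < α j)).card

lemma Lc_add_Gc {n : ℕ} (α : Equiv.Perm (Fin n)) (i : Fin n) :
    Lc α i + Gc α i + (i : ℕ) + 1 = n := by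
  have hu : (univ.filter (fun j => i < j ∧ α j < α i))
      ∪ (univ.filter (fun j => i < j ∧ α i < α j))
      = univ.filter (fun j : Fin n => i < j) := by
    rw [← Finset.filter_or]
    apply Finset.filter_congr
    intro j _
    constructor
    · rintro (⟨h, _⟩ | ⟨h, _⟩) <;> exact h
    · intro h
      rcases lt_or_gt_of_ne (fun hc : α j = α i => (ne_of_gt h) (α.injective hc)) with h' | h'
      · exact Or.inl ⟨h, h'⟩
      · exact Or.inr ⟨h, h'⟩
  have hd : Disjoint (univ.filter (fun j => i < j ∧ α j < α i))
      (univ.filter (fun j => i < j ∧ α i < α j)) := by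
    rw [Finset.disjoint_left]
    intro x hx hx'
    simp only [Finset.mem_filter] at hx hx'
    exact absurd hx'.2.2 (not_lt.mpr (le_of_lt hx.2.2))
  have hcard : Lc α i + Gc α i = (univ.filter (fun j : Fin n => i < j)).card := by
    rw [Lc, Gc, ← Finset.card_union_of_disjoint hd, hu]
  have h2 : (univ.filter (fun j : Fin n => i < j)).card = n - ((i : ℕ) + 1) := by
    have heq : (univ.filter (fun j : Fin n => i < j))
        = (univ.filter (fun j : Fin n => (i : ℕ) + 1 ≤ j.val)) := by
      apply Finset.filter_congr; intro j _; rw [Fin.lt_def]; omega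
    rw [heq, card_val_ge]
    have := i.isLt
    omega
  have := i.isLt
  omega

/-- Insert value `p` at the front, order-preservingly relabeling `e`. -/
def ins {n : ℕ} (p : Fin (n + 1)) (e : Equiv.Perm (Fin n)) : Equiv.Perm (Fin (n + 1)) :=
  (finSuccEquiv n).trans ((Equiv.optionCongr e).trans (finSuccEquiv' p).symm)

lemma ins_zero {n : ℕ} (p : Fin (n + 1)) (e : Equiv.Perm (Fin n)) : ins p e 0 = p := by
  simp [ins, Equiv.trans_apply, finSuccEquiv_zero, finSuccEquiv'_symm_none]

lemma ins_succ {n : ℕ} (p : Fin (n + 1)) (e : Equiv.Perm (Fin n)) (i : Fin n) :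
    ins p e i.succ = p.succAbove (e i) := by
  simp [ins, Equiv.trans_apply, finSuccEquiv_succ, finSuccEquiv'_symm_some]

lemma Lc_ins_zero {n : ℕ} (p : Fin (n + 1)) (e : Equiv.Perm (Fin n)) :
    Lc (ins p e) 0 = (p : ℕ) := by
  rw [Lc]
  have h : ((univ : Finset (Fin n)).filter (fun i => (e i).val < (p : ℕ))).card
      = ((univ : Finset (Fin (n + 1))).filter
          (fun j => 0 < j ∧ ins p e j < ins p e 0)).card := by
    apply Finset.card_nbij (fun i => i.succ)
    · intro x hx
      simp only [mem_coe, Finset.mem_filter, Finset.mem_univ, true_and] at *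
      refine ⟨Fin.succ_pos x, ?_⟩
      rw [ins_succ, ins_zero]
      rw [Fin.succAbove_lt_iff_castSucc_lt, Fin.lt_def]
      exact hx
    · exact (Fin.succ_injective n).injOn
    · intro j hj
      simp only [mem_coe, Finset.mem_filter, Finset.mem_univ, true_and] at hj
      obtain ⟨hj0, hjv⟩ := hj
      refine ⟨j.pred (Fin.pos_iff_ne_zero.mp hj0), ?_, Fin.succ_pred _ _⟩
      simp only [mem_coe, Finset.mem_filter, Finset.mem_univ, true_and]
      rw [ins_zero] at hjv
      rw [← Fin.succ_pred j (Fin.pos_iff_ne_zero.mp hj0), ins_succ,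
        Fin.succAbove_lt_iff_castSucc_lt, Fin.lt_def] at hjv
      exact hjv
  rw [← h, card_filter_comp_perm e (fun v => v.val < (p : ℕ)), card_val_lt]
  exact min_eq_left (Nat.lt_succ_iff.mp p.isLt)

lemma Gc_ins_zero {n : ℕ} (p : Fin (n + 1)) (e : Equiv.Perm (Fin n)) :
    Gc (ins p e) 0 = n - (p : ℕ) := by
  rw [Gc]
  have h : ((univ : Finset (Fin n)).filter (fun i => (p : ℕ) ≤ (e i).val)).card
      = ((univ : Finset (Fin (n + 1))).filter
          (fun j => 0 < j ∧ ins p e 0 < ins p e j)).card := by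
    apply Finset.card_nbij (fun i => i.succ)
    · intro x hx
      simp only [mem_coe, Finset.mem_filter, Finset.mem_univ, true_and] at *
      refine ⟨Fin.succ_pos x, ?_⟩
      rw [ins_succ, ins_zero]
      rw [Fin.lt_succAbove_iff_le_castSucc, Fin.le_def]
      exact hx
    · exact (Fin.succ_injective n).injOn
    · intro j hj
      simp only [mem_coe, Finset.mem_filter, Finset.mem_univ, true_and] at hj
      obtain ⟨hj0, hjv⟩ := hj
      refine ⟨j.pred (Fin.pos_iff_ne_zero.mp hj0), ?_, Fin.succ_pred _ _⟩
      simp only [mem_coe, Finset.mem_filter, Finset.mem_univ, true_and]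
      rw [ins_zero] at hjv
      rw [← Fin.succ_pred j (Fin.pos_iff_ne_zero.mp hj0), ins_succ,
        Fin.lt_succAbove_iff_le_castSucc, Fin.le_def] at hjv
      exact hjv
  rw [← h, card_filter_comp_perm e (fun v => (p : ℕ) ≤ v.val), card_val_ge]
  rw [min_eq_left (Nat.lt_succ_iff.mp p.isLt)]

lemma Lc_ins_succ {n : ℕ} (p : Fin (n + 1)) (e : Equiv.Perm (Fin n)) (i : Fin n) :
    Lc (ins p e) i.succ = Lc e i := by
  rw [Lc, Lc]
  symm
  apply Finset.card_nbij (fun j => j.succ)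
  · intro x hx
    simp only [mem_coe, Finset.mem_filter, Finset.mem_univ, true_and] at *
    refine ⟨Fin.succ_lt_succ_iff.mpr hx.1, ?_⟩
    rw [ins_succ, ins_succ, Fin.succAbove_lt_succAbove_iff]
    exact hx.2
  · exact (Fin.succ_injective n).injOn
  · intro j hj
    simp only [mem_coe, Finset.mem_filter, Finset.mem_univ, true_and] at hj
    obtain ⟨hj0, hjv⟩ := hj
    have hne : j ≠ 0 := Fin.pos_iff_ne_zero.mp (lt_trans (Fin.succ_pos i) hj0)
    refine ⟨j.pred hne, ?_, Fin.succ_pred _ _⟩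
    simp only [mem_coe, Finset.mem_filter, Finset.mem_univ, true_and]
    rw [← Fin.succ_pred j hne, Fin.succ_lt_succ_iff] at hj0
    rw [← Fin.succ_pred j hne, ins_succ, ins_succ, Fin.succAbove_lt_succAbove_iff] at hjv
    exact ⟨hj0, hjv⟩

lemma Gc_ins_succ {n : ℕ} (p : Fin (n + 1)) (e : Equiv.Perm (Fin n)) (i : Fin n) :
    Gc (ins p e) i.succ = Gc e i := by
  rw [Gc, Gc]
  symm
  apply Finset.card_nbij (fun j => j.succ)
  · intro x hx
    simp only [mem_coe, Finset.mem_filter, Finset.mem_univ, true_and] at *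
    refine ⟨Fin.succ_lt_succ_iff.mpr hx.1, ?_⟩
    rw [ins_succ, ins_succ, Fin.succAbove_lt_succAbove_iff]
    exact hx.2
  · exact (Fin.succ_injective n).injOn
  · intro j hj
    simp only [mem_coe, Finset.mem_filter, Finset.mem_univ, true_and] at hj
    obtain ⟨hj0, hjv⟩ := hj
    have hne : j ≠ 0 := Fin.pos_iff_ne_zero.mp (lt_trans (Fin.succ_pos i) hj0)
    refine ⟨j.pred hne, ?_, Fin.succ_pred _ _⟩
    simp only [mem_coe, Finset.mem_filter, Finset.mem_univ, true_and]
    rw [← Fin.succ_pred j hne, Fin.succ_lt_succ_iff] at hj0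
    rw [← Fin.succ_pred j hne, ins_succ, ins_succ, Fin.succAbove_lt_succAbove_iff] at hjv
    exact ⟨hj0, hjv⟩

lemma ins_inj {n : ℕ} :
    Function.Injective (fun pe : Fin (n + 1) × Equiv.Perm (Fin n) => ins pe.1 pe.2) := by
  rintro ⟨p, e⟩ ⟨p', e'⟩ h
  simp only at h
  have hp : p = p' := by
    have := congrArg (fun σ : Equiv.Perm (Fin (n + 1)) => σ 0) h
    simpa [ins_zero] using this
  subst hp
  have he : e = e' := by
    apply Equiv.ext
    intro i
    have := congrArg (fun σ : Equiv.Perm (Fin (n + 1)) => σ i.succ) h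
    simp only [ins_succ] at this
    exact Fin.succAbove_right_injective this
  rw [he]

lemma ins_surj {n : ℕ} (σ : Equiv.Perm (Fin (n + 1))) :
    ∃ p e, ins p e = σ := by
  set p := σ 0 with hp
  have hne : ∀ i : Fin n, σ i.succ ≠ p := fun i hc =>
    (Fin.succ_ne_zero i) (σ.injective hc)
  have hex : ∀ i : Fin n, ∃ y, p.succAbove y = σ i.succ :=
    fun i => Fin.exists_succAbove_eq (hne i)
  set e0 : Fin n → Fin n := fun i => (hex i).choose with he0
  have hspec : ∀ i, p.succAbove (e0 i) = σ i.succ := fun i => (hex i).choose_spec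
  have hinj : Function.Injective e0 := by
    intro i j h
    have : σ i.succ = σ j.succ := by rw [← hspec i, ← hspec j, h]
    exact Fin.succ_injective n (σ.injective this)
  obtain ⟨e, he⟩ : ∃ e : Equiv.Perm (Fin n), ∀ i, e i = e0 i :=
    ⟨Equiv.ofBijective e0 (Finite.injective_iff_bijective.mp hinj), fun i => rfl⟩
  refine ⟨p, e, ?_⟩
  apply Equiv.ext
  intro j
  induction j using Fin.cases with
  | zero => rw [ins_zero]
  | succ i => rw [ins_succ, he, hspec]

/-- The local condition equivalent to the avoidance. -/
def Cond (k a b : ℕ) {n : ℕ} (α : Equiv.Perm (Fin n)) : Prop :=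
  ∀ i : Fin n, (i : ℕ) + k ≤ n → (Lc α i + 2 ≤ a ∨ Gc α i + b + 1 ≤ k)

lemma cond_ins_iff {k a b n : ℕ} (hk1 : k ≤ n + 1) (p : Fin (n + 1)) (e : Equiv.Perm (Fin n)) :
    Cond k a b (ins p e) ↔
      (((p : ℕ) + 2 ≤ a ∨ (n - (p : ℕ)) + b + 1 ≤ k) ∧ Cond k a b e) := by
  constructor
  · intro h
    constructor
    · have h0 := h 0 (by simpa using hk1)
      rwa [Lc_ins_zero, Gc_ins_zero] at h0
    · intro i hi
      have hs := h i.succ (by simp [Fin.val_succ]; omega)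
      rwa [Lc_ins_succ, Gc_ins_succ] at hs
  · rintro ⟨h0, h⟩ j hj
    induction j using Fin.cases with
    | zero => rwa [Lc_ins_zero, Gc_ins_zero]
    | succ i =>
      rw [Lc_ins_succ, Gc_ins_succ]
      apply h i
      simp only [Fin.val_succ] at hj
      omega

lemma ncard_A {k a b n : ℕ} (hk : 2 < k) (ha : 1 ≤ a) (hab : a ≤ b) (hbk : b ≤ k)
    (hkn : k ≤ n + 1) :
    {p : Fin (n + 1) | (p : ℕ) + 2 ≤ a ∨ (n - (p : ℕ)) + b + 1 ≤ k}.ncard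
      = a - 1 + (k - b) := by
  have hset : {p : Fin (n + 1) | (p : ℕ) + 2 ≤ a ∨ (n - (p : ℕ)) + b + 1 ≤ k}
      = ↑((univ : Finset (Fin (n + 1))).filter
          (fun p => p.val < a - 1 ∨ n + b + 1 - k ≤ p.val)) := by
    ext p
    have hpn : (p : ℕ) ≤ n := Nat.lt_succ_iff.mp p.isLt
    simp only [Set.mem_setOf_eq, coe_filter, Finset.mem_univ, true_and]
    omega
  rw [hset, Set.ncard_coe_finset]
  rw [Finset.filter_or]
  rw [Finset.card_union_of_disjoint]
  · rw [card_val_lt, card_val_ge]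
    rw [min_eq_left (by omega), min_eq_left (by omega)]
    omega
  · rw [Finset.disjoint_left]
    intro p hp hp'
    simp only [Finset.mem_filter, Finset.mem_univ, true_and] at hp hp'
    omega

lemma count_cond (k a b : ℕ) (hk : 2 < k) (ha : 1 ≤ a) (hab : a ≤ b) (hbk : b ≤ k) :
    ∀ d : ℕ, {α : Equiv.Perm (Fin (k - 1 + d)) | Cond k a b α}.ncard
      = Nat.factorial (k - 1) * (a - 1 + (k - b)) ^ d := by
  intro d
  induction d with
  | zero =>
    have hset : {α : Equiv.Perm (Fin (k - 1 + 0)) | Cond k a b α} = Set.univ := by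
      ext α
      simp only [Set.mem_setOf_eq, Set.mem_univ, iff_true]
      intro i hi
      exfalso
      omega
    rw [hset, Set.ncard_univ, Nat.card_eq_fintype_card, Fintype.card_perm, Fintype.card_fin]
    simp
  | succ d ih =>
    set n := k - 1 + d with hn
    have hkn : k ≤ n + 1 := by omega
    have hset : {α : Equiv.Perm (Fin (n + 1)) | Cond k a b α}
        = (fun pe : Fin (n + 1) × Equiv.Perm (Fin n) => ins pe.1 pe.2) ''
          (({p : Fin (n + 1) | (p : ℕ) + 2 ≤ a ∨ (n - (p : ℕ)) + b + 1 ≤ k})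
            ×ˢ {e : Equiv.Perm (Fin n) | Cond k a b e}) := by
      ext σ
      simp only [Set.mem_setOf_eq, Set.mem_image, Set.mem_prod, Prod.exists]
      constructor
      · intro h
        obtain ⟨p, e, rfl⟩ := ins_surj σ
        have := (cond_ins_iff hkn p e).mp h
        exact ⟨p, e, ⟨this.1, this.2⟩, rfl⟩
      · rintro ⟨p, e, ⟨h1, h2⟩, rfl⟩
        exact (cond_ins_iff hkn p e).mpr ⟨h1, h2⟩
    have hstep : {α : Equiv.Perm (Fin (k - 1 + (d + 1))) | Cond k a b α}.ncard
        = {α : Equiv.Perm (Fin (n + 1)) | Cond k a b α}.ncard := rfl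
    rw [hstep, hset, Set.ncard_image_of_injective _ ins_inj]
    have hprod : (({p : Fin (n + 1) | (p : ℕ) + 2 ≤ a ∨ (n - (p : ℕ)) + b + 1 ≤ k})
        ×ˢ {e : Equiv.Perm (Fin n) | Cond k a b e}).ncard
        = {p : Fin (n + 1) | (p : ℕ) + 2 ≤ a ∨ (n - (p : ℕ)) + b + 1 ≤ k}.ncard
          * {e : Equiv.Perm (Fin n) | Cond k a b e}.ncard := by
      rw [← Nat.card_coe_set_eq, ← Nat.card_coe_set_eq, ← Nat.card_coe_set_eq,
        Nat.card_congr (Equiv.Set.prod _ _), Nat.card_prod]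
    rw [hprod, ncard_A hk ha hab hbk hkn, ih, pow_succ]
    ring

lemma strictMono_le {k n : ℕ} (f : Fin k → Fin n) (hf : StrictMono f) (h0 : 0 < k) :
    ∀ v (hv : v < k), (f ⟨0, h0⟩ : ℕ) + v ≤ (f ⟨v, hv⟩ : ℕ) := by
  intro v
  induction v with
  | zero => intro hv; exact le_refl _
  | succ w ih =>
    intro hv
    have hw : w < k := by omega
    have hlt : f ⟨w, hw⟩ < f ⟨w + 1, hv⟩ := hf (by simp [Fin.lt_def])
    have h1 := ih hw
    have h2 := Fin.lt_def.mp hlt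
    omega

lemma avoid_iff_cond {k a b n : ℕ} (hk : 2 < k) (ha : 1 ≤ a) (hab : a ≤ b) (hbk : b ≤ k)
    (α : Equiv.Perm (Fin n)) :
    (∀ m : ℕ, a ≤ m → m ≤ b → ∀ τ ∈ Tkm k m, Avoids τ α) ↔ Cond k a b α := by
  have h0 : 0 < k := by omega
  constructor
  · -- avoids → cond
    intro h
    by_contra hc
    simp only [Cond, not_forall, not_or, not_le] at hc
    obtain ⟨i, hik, hn1, hn2⟩ := hc
    have hLG := Lc_add_Gc α i
    set L := Lc α i with hLdef
    set G := Gc α i with hGdef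
    set m := max a (k - G) with hm
    have ham : a ≤ m := le_max_left _ _
    have hkGm : k - G ≤ m := le_max_right _ _
    have hmb : m ≤ b := max_le hab (by omega)
    have hmL : m - 1 ≤ L := by
      have : m ≤ L + 1 := max_le (by omega) (by omega)
      omega
    have hmG : k - m ≤ G := by omega
    -- pick subsets
    obtain ⟨S', hS'sub, hS'card⟩ := Finset.exists_subset_card_eq
      (show m - 1 ≤ (univ.filter (fun j => i < j ∧ α j < α i)).card from hmL)
    obtain ⟨T', hT'sub, hT'card⟩ := Finset.exists_subset_card_eq
      (show k - m ≤ (univ.filter (fun j => i < j ∧ α i < α j)).card from hmG)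
    have hS'mem : ∀ x ∈ S', i < x ∧ α x < α i := by
      intro x hx
      have := hS'sub hx
      simp only [Finset.mem_filter, Finset.mem_univ, true_and] at this
      exact this
    have hT'mem : ∀ x ∈ T', i < x ∧ α i < α x := by
      intro x hx
      have := hT'sub hx
      simp only [Finset.mem_filter, Finset.mem_univ, true_and] at this
      exact this
    have hdisjST : Disjoint S' T' := by
      rw [Finset.disjoint_left]
      intro x hx hx'
      exact absurd (hT'mem x hx').2 (not_lt.mpr (le_of_lt (hS'mem x hx).2))
    have hiST : i ∉ S' ∪ T' := by
      intro hmem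
      rcases Finset.mem_union.mp hmem with hx | hx
      · exact lt_irrefl i (hS'mem i hx).1
      · exact lt_irrefl i (hT'mem i hx).1
    set F := insert i (S' ∪ T') with hF
    have hFcard : F.card = k := by
      rw [hF, Finset.card_insert_of_notMem hiST, Finset.card_union_of_disjoint hdisjST,
        hS'card, hT'card]
      omega
    set f := F.orderEmbOfFin hFcard with hfdef
    have hfmem : ∀ j, f j ∈ F := fun j => Finset.orderEmbOfFin_mem F hFcard j
    have hf0 : f ⟨0, h0⟩ = i := by
      rw [hfdef, Finset.orderEmbOfFin_zero hFcard h0]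
      apply le_antisymm
      · exact Finset.min'_le _ _ (Finset.mem_insert_self _ _)
      · apply Finset.le_min'
        intro y hy
        rcases Finset.mem_insert.mp hy with rfl | hy'
        · exact le_refl _
        · rcases Finset.mem_union.mp hy' with hx | hx
          · exact le_of_lt (hS'mem y hx).1
          · exact le_of_lt (hT'mem y hx).1
    have hV : (F.image (fun x => α x)).card = k := by
      rw [Finset.card_image_of_injective _ α.injective, hFcard]
    set ψ := (F.image (fun x => α x)).orderIsoOfFin hV with hψ
    set t0 : Fin k → Fin k :=
      fun j => ψ.symm ⟨α (f j), Finset.mem_image_of_mem _ (hfmem j)⟩ with ht0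
    have ht0inj : Function.Injective t0 := by
      intro j1 j2 hj
      have h1 := ψ.symm.injective hj
      have h2 := Subtype.ext_iff.mp h1
      simp only at h2
      exact (F.orderEmbOfFin hFcard).injective (α.injective h2)
    set τ : Equiv.Perm (Fin k) :=
      Equiv.ofBijective t0 (Finite.injective_iff_bijective.mp ht0inj) with hτ
    have hτapp : ∀ j, τ j = t0 j := fun j => rfl
    have hiso : ∀ j1 j2 : Fin k, τ j1 < τ j2 ↔ α (f j1) < α (f j2) := by
      intro j1 j2
      rw [hτapp, hτapp, ht0]
      simp only
      rw [ψ.symm.lt_iff_lt, Subtype.mk_lt_mk]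
    have hrank : (τ ⟨0, h0⟩ : ℕ) = m - 1 := by
      have h1 := rank_lt τ ⟨0, h0⟩
      rw [← h1]
      have h2 : (univ.filter (fun j => τ j < τ ⟨0, h0⟩)).card
          = (F.filter (fun x => α x < α i)).card := by
        apply Finset.card_nbij (fun j => f j)
        · intro x hx
          simp only [mem_coe, Finset.mem_filter, Finset.mem_univ, true_and] at *
          rw [hiso, hf0] at hx
          exact ⟨hfmem x, hx⟩
        · exact ((F.orderEmbOfFin hFcard).injective).injOn
        · intro y hy
          simp only [mem_coe, Finset.mem_filter] at hy
          obtain ⟨hyF, hylt⟩ := hy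
          have hyr : y ∈ Set.range f := by
            rw [hfdef, Finset.range_orderEmbOfFin]
            exact hyF
          obtain ⟨j, hj⟩ := hyr
          refine ⟨j, ?_, hj⟩
          simp only [mem_coe, Finset.mem_filter, Finset.mem_univ, true_and]
          rw [hiso, hf0, hj]
          exact hylt
      rw [h2]
      have h3 : F.filter (fun x => α x < α i) = S' := by
        ext x
        simp only [Finset.mem_filter, hF, Finset.mem_insert, Finset.mem_union]
        constructor
        · rintro ⟨rfl | (hx | hx), hlt⟩
          · exact absurd hlt (lt_irrefl _)
          · exact hx
          · exact absurd hlt (not_lt.mpr (le_of_lt (hT'mem x hx).2))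
        · intro hx
          exact ⟨Or.inr (Or.inl hx), (hS'mem x hx).2⟩
      rw [h3, hS'card]
    have hτT : τ ∈ Tkm k m := by
      intro j hj
      have hje : j = ⟨0, h0⟩ := Fin.ext hj
      rw [hje, hrank]
      omega
    apply h m ham hmb τ hτT
    exact ⟨f, (F.orderEmbOfFin hFcard).strictMono, hiso⟩
  · -- cond → avoids
    intro h m ham hmb τ hτ hcontains
    obtain ⟨f, hfmono, hiso⟩ := hcontains
    set z : Fin k := ⟨0, h0⟩ with hz
    have hm : (τ z : ℕ) + 1 = m := hτ z rfl
    set i := f z with hi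
    have hik : (i : ℕ) + k ≤ n := by
      have hK : k - 1 < k := by omega
      have hlast := strictMono_le f hfmono h0 (k - 1) hK
      have hlt := (f ⟨k - 1, hK⟩).isLt
      have hfz : (f ⟨0, h0⟩ : ℕ) = (i : ℕ) := rfl
      omega
    have hL : m - 1 ≤ Lc α i := by
      have h1 := rank_lt τ z
      rw [Lc]
      have h2 : (univ.filter (fun j => τ j < τ z)).card
          ≤ (univ.filter (fun j => i < j ∧ α j < α i)).card := by
        apply Finset.card_le_card_of_injOn f
        · intro j hj
          simp only [Finset.mem_coe, Finset.mem_filter, Finset.mem_univ, true_and] at *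
          have hjz : z < j := by
            rw [Fin.lt_def]
            simp only [hz]
            rcases Nat.eq_zero_or_pos (j : ℕ) with h' | h'
            · exfalso
              have : j = z := Fin.ext h'
              rw [this] at hj
              exact lt_irrefl _ hj
            · exact h'
          exact ⟨hfmono hjz, (hiso j z).mp hj⟩
        · exact hfmono.injective.injOn
      omega
    have hG : k - m ≤ Gc α i := by
      have h1 := rank_gt τ z
      rw [Gc]
      have h2 : (univ.filter (fun j => τ z < τ j)).card
          ≤ (univ.filter (fun j => i < j ∧ α i < α j)).card := by
        apply Finset.card_le_card_of_injOn f
        · intro j hj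
          simp only [Finset.mem_coe, Finset.mem_filter, Finset.mem_univ, true_and] at *
          have hjz : z < j := by
            rw [Fin.lt_def]
            simp only [hz]
            rcases Nat.eq_zero_or_pos (j : ℕ) with h' | h'
            · exfalso
              have : j = z := Fin.ext h'
              rw [this] at hj
              exact lt_irrefl _ hj
            · exact h'
          exact ⟨hfmono hjz, (hiso z j).mp hj⟩
        · exact hfmono.injective.injOn
      have := (τ z).isLt
      omega
    rcases h i hik with hco | hco <;> omega

end Stmt3Aux

theorem stmt3 (k a b n : ℕ) (hk : 2 < k) (ha : 1 ≤ a) (hab : a ≤ b) (hbk : b ≤ k)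
    (hkn : k ≤ n) :
    Set.ncard {α : Equiv.Perm (Fin n) |
        ∀ m : ℕ, a ≤ m → m ≤ b → ∀ τ ∈ Tkm k m, Avoids τ α}
      = Nat.factorial (k - 1) * (k + a - b - 1) ^ (n + 1 - k)
 := by
  obtain ⟨d, rfl⟩ : ∃ d, n = k - 1 + d := ⟨n + 1 - k, by omega⟩
  have hset : {α : Equiv.Perm (Fin (k - 1 + d)) |
      ∀ m : ℕ, a ≤ m → m ≤ b → ∀ τ ∈ Tkm k m, Avoids τ α}
      = {α : Equiv.Perm (Fin (k - 1 + d)) | Stmt3Aux.Cond k a b α} :=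
    Set.ext fun α => Stmt3Aux.avoid_iff_cond hk ha hab hbk α
  rw [hset, Stmt3Aux.count_cond k a b hk ha hab hbk d]
  have h1 : k - 1 + d + 1 - k = d := by omega
  have h2 : k + a - b - 1 = a - 1 + (k - b) := by omega
  rw [h1, h2]
end

section
/- For n ≥ 2k+1 and any 1 ≤ i_1 < i_2 < ⋯ < i_d ≤ k, the number of permutations in S_n avoiding all patterns in T_k^{i_1} ∪ ⋯ ∪ T_k^{i_d} equals (k + i_1 - i_d - 1) times the number of such permutations in S_{n-1}. -/
open Finset

section Aux

lemma perm_card_lt {k : ℕ} (σ : Equiv.Perm (Fin k)) (c : Fin k) :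
    (Finset.univ.filter (fun j => σ j < c)).card = (c : ℕ) := by
  have h : (Finset.univ.filter (fun j => σ j < c)) = (Finset.Iio c).map σ.symm.toEmbedding := by
    ext j
    simp [Equiv.symm_apply_eq, eq_comm]
  rw [h, Finset.card_map, Fin.card_Iio]

lemma perm_card_gt {k : ℕ} (σ : Equiv.Perm (Fin k)) (c : Fin k) :
    (Finset.univ.filter (fun j => c < σ j)).card = k - 1 - (c : ℕ) := by
  have h : (Finset.univ.filter (fun j => c < σ j)) = (Finset.Ioi c).map σ.symm.toEmbedding := by
    ext j
    simp [Equiv.symm_apply_eq, eq_comm]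
  rw [h, Finset.card_map, Fin.card_Ioi]

lemma occ_le {k n : ℕ} {τ : Equiv.Perm (Fin k)} {α : Equiv.Perm (Fin n)} {f : Fin k → Fin n}
    (h : PattOccursAt τ α f) (i₀ : Fin k) : (τ i₀ : ℕ) ≤ (α (f i₀) : ℕ) := by
  have hinj : Function.Injective (fun j => α (f j)) :=
    fun x y hxy => h.1.injective (α.injective hxy)
  have hcard : (Finset.univ.filter (fun j => τ j < τ i₀)).card ≤ (Finset.Iio (α (f i₀))).card := by
    apply Finset.card_le_card_of_injOn (fun j => α (f j))
    · intro j hj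
      simp only [Finset.mem_coe, Finset.mem_filter, Finset.mem_univ, true_and] at hj
      exact Finset.mem_Iio.mpr ((h.2 j i₀).mp hj)
    · exact hinj.injOn
  rwa [perm_card_lt, Fin.card_Iio] at hcard

lemma occ_ge {k n : ℕ} {τ : Equiv.Perm (Fin k)} {α : Equiv.Perm (Fin n)} {f : Fin k → Fin n}
    (h : PattOccursAt τ α f) (i₀ : Fin k) :
    k - 1 - (τ i₀ : ℕ) ≤ n - 1 - (α (f i₀) : ℕ) := by
  have hinj : Function.Injective (fun j => α (f j)) :=
    fun x y hxy => h.1.injective (α.injective hxy)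
  have hcard : (Finset.univ.filter (fun j => τ i₀ < τ j)).card ≤ (Finset.Ioi (α (f i₀))).card := by
    apply Finset.card_le_card_of_injOn (fun j => α (f j))
    · intro j hj
      simp only [Finset.mem_coe, Finset.mem_filter, Finset.mem_univ, true_and] at hj
      exact Finset.mem_Ioi.mpr ((h.2 i₀ j).mp hj)
    · exact hinj.injOn
  rwa [perm_card_gt, Fin.card_Ioi] at hcard

lemma card_image_univ {k n : ℕ} (g : Fin k → Fin n) (hg : Function.Injective g) :
    (Finset.univ.image g).card = k := by
  rw [Finset.card_image_of_injective _ hg, Finset.card_univ, Fintype.card_fin]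

/-- The pattern (order type) of an injective sequence of `k` values. -/
noncomputable def patternOf {k n : ℕ} (g : Fin k → Fin n) (hg : Function.Injective g) :
    Equiv.Perm (Fin k) :=
  (Equiv.ofBijective
    (fun i => (⟨g i, Finset.mem_image_of_mem g (Finset.mem_univ i)⟩ :
      {x // x ∈ Finset.univ.image g}))
    (by
      constructor
      · intro x y hxy
        exact hg (congrArg Subtype.val hxy)
      · rintro ⟨x, hx⟩
        simp only [Finset.mem_image, Finset.mem_univ, true_and] at hx
        obtain ⟨i, rfl⟩ := hx
        exact ⟨i, rfl⟩)).trans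
    ((Finset.univ.image g).orderIsoOfFin (card_image_univ g hg)).symm.toEquiv

lemma patternOf_lt_iff {k n : ℕ} (g : Fin k → Fin n) (hg : Function.Injective g) (x y : Fin k) :
    patternOf g hg x < patternOf g hg y ↔ g x < g y := by
  show (((Finset.univ.image g).orderIsoOfFin (card_image_univ g hg)).symm
        ⟨g x, Finset.mem_image_of_mem g (Finset.mem_univ x)⟩ : Fin k)
      < ((Finset.univ.image g).orderIsoOfFin (card_image_univ g hg)).symm
        ⟨g y, Finset.mem_image_of_mem g (Finset.mem_univ y)⟩ ↔ g x < g y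
  rw [OrderIso.lt_iff_lt]
  exact Subtype.mk_lt_mk

end Aux

section Ins

variable {m k : ℕ}

/-- Insert value `v` at the front of permutation `β`. -/
def ins (v : Fin (m + 1)) (β : Equiv.Perm (Fin m)) : Equiv.Perm (Fin (m + 1)) :=
  (finSuccEquiv m).trans ((β.optionCongr).trans (finSuccEquiv' v).symm)

@[simp] lemma ins_zero (v : Fin (m + 1)) (β : Equiv.Perm (Fin m)) : ins v β 0 = v := by
  simp [ins]

@[simp] lemma ins_succ (v : Fin (m + 1)) (β : Equiv.Perm (Fin m)) (j : Fin m) :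
    ins v β j.succ = v.succAbove (β j) := by
  simp [ins]

lemma ins_injective : Function.Injective
    (fun p : Fin (m + 1) × Equiv.Perm (Fin m) => ins p.1 p.2) := by
  rintro ⟨v, β⟩ ⟨v', β'⟩ h
  simp only at h
  have hv : v = v' := by rw [← ins_zero v β, h, ins_zero]
  subst hv
  have hβ : β = β' := by
    apply Equiv.ext
    intro j
    have h' : ins v β j.succ = ins v β' j.succ := by rw [h]
    rw [ins_succ, ins_succ] at h'
    exact Fin.succAbove_right_injective h'
  rw [hβ]

lemma contains_ins_of_contains {τ : Equiv.Perm (Fin k)} {β : Equiv.Perm (Fin m)}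
    (v : Fin (m + 1)) (h : Contains τ β) : Contains τ (ins v β) := by
  obtain ⟨g, hg1, hg2⟩ := h
  refine ⟨fun x => (g x).succ, fun x y hxy => Fin.succ_lt_succ_iff.mpr (hg1 hxy), ?_⟩
  intro x y
  rw [hg2 x y]
  simp [Fin.succAbove_lt_succAbove_iff]

lemma contains_of_ins_contains {τ : Equiv.Perm (Fin k)} {v : Fin (m + 1)}
    {β : Equiv.Perm (Fin m)} (f : Fin k → Fin (m + 1)) (hocc : PattOccursAt τ (ins v β) f)
    (h0 : ∀ x, f x ≠ 0) : Contains τ β := by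
  refine ⟨fun x => (f x).pred (h0 x), ?_, ?_⟩
  · intro x y hxy
    rw [Fin.pred_lt_pred_iff]
    exact hocc.1 hxy
  · intro x y
    rw [hocc.2 x y,
      show f x = ((f x).pred (h0 x)).succ from (Fin.succ_pred _ _).symm,
      show f y = ((f y).pred (h0 y)).succ from (Fin.succ_pred _ _).symm,
      ins_succ, ins_succ, Fin.succAbove_lt_succAbove_iff]

end Ins

lemma contains_of_mid {k m : ℕ} (hk : 0 < k) (α : Equiv.Perm (Fin (m + 1)))
    (w : ℕ) (hw1 : 1 ≤ w) (hwk : w ≤ k)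
    (hL : w - 1 ≤ (α 0 : ℕ)) (hG : k - w ≤ m - (α 0 : ℕ)) :
    ∃ τ : Equiv.Perm (Fin k), ((τ ⟨0, hk⟩ : ℕ) + 1 = w) ∧ Contains τ α := by
  set v := α 0 with hv
  have hB : (Finset.univ.filter (fun x : Fin (m + 1) => α x < v)).card = (v : ℕ) :=
    perm_card_lt α v
  have hC : (Finset.univ.filter (fun x : Fin (m + 1) => v < α x)).card = m - (v : ℕ) := by
    have := perm_card_gt α v
    simpa using this
  obtain ⟨B', hB'sub, hB'card⟩ := Finset.exists_subset_card_eq (s := Finset.univ.filter (fun x : Fin (m + 1) => α x < v)) (n := w - 1) (by rw [hB]; exact hL)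
  obtain ⟨C', hC'sub, hC'card⟩ := Finset.exists_subset_card_eq (s := Finset.univ.filter (fun x : Fin (m + 1) => v < α x)) (n := k - w) (by rw [hC]; exact hG)
  have hB'lt : ∀ x ∈ B', α x < v := by
    intro x hx
    have := hB'sub hx
    simp only [Finset.mem_filter, Finset.mem_univ, true_and] at this
    exact this
  have hC'gt : ∀ x ∈ C', v < α x := by
    intro x hx
    have := hC'sub hx
    simp only [Finset.mem_filter, Finset.mem_univ, true_and] at this
    exact this
  set F : Finset (Fin (m + 1)) := insert 0 (B' ∪ C') with hF
  have h0B : (0 : Fin (m + 1)) ∉ B' ∪ C' := by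
    intro h
    rcases Finset.mem_union.mp h with h | h
    · exact absurd (hB'lt _ h) (by rw [← hv]; exact lt_irrefl v)
    · exact absurd (hC'gt _ h) (by rw [← hv]; exact lt_irrefl v)
  have hdisj : Disjoint B' C' := by
    rw [Finset.disjoint_left]
    intro x hx1 hx2
    exact absurd ((hB'lt _ hx1).trans (hC'gt _ hx2)) (lt_irrefl _)
  have hFcard : F.card = k := by
    rw [hF, Finset.card_insert_of_notMem h0B, Finset.card_union_of_disjoint hdisj,
      hB'card, hC'card]
    omega
  set f : Fin k → Fin (m + 1) := fun i => F.orderEmbOfFin hFcard i with hfdef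
  have hfmono : StrictMono f := (F.orderEmbOfFin hFcard).strictMono
  have hfrange : ∀ x ∈ F, ∃ j, f j = x := by
    intro x hx
    exact (Set.ext_iff.mp (Finset.range_orderEmbOfFin F hFcard) x).mpr (Finset.mem_coe.mpr hx)
  have hfmem : ∀ j, f j ∈ F := fun j => Finset.orderEmbOfFin_mem F hFcard j
  have hf0 : f ⟨0, hk⟩ = 0 := by
    obtain ⟨j, hj⟩ := hfrange 0 (Finset.mem_insert_self _ _)
    have hle : f ⟨0, hk⟩ ≤ f j :=
      hfmono.monotone (by rw [Fin.le_def]; exact Nat.zero_le _)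
    rw [hj] at hle
    exact le_antisymm hle (Fin.zero_le _)
  have hg : Function.Injective (fun x => α (f x)) :=
    fun x y hxy => hfmono.injective (α.injective hxy)
  refine ⟨patternOf _ hg, ?_, ⟨f, hfmono, fun x y => patternOf_lt_iff _ hg x y⟩⟩
  · have hτ0 : ((patternOf _ hg) ⟨0, hk⟩ : ℕ)
        = (Finset.univ.filter
            (fun j => (patternOf _ hg) j < (patternOf _ hg) ⟨0, hk⟩)).card :=
      (perm_card_lt _ _).symm
    have hset : Finset.univ.filter
          (fun j => (patternOf _ hg) j < (patternOf _ hg) ⟨0, hk⟩)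
        = Finset.univ.filter (fun j : Fin k => α (f j) < v) := by
      ext j
      simp only [Finset.mem_filter, Finset.mem_univ, true_and]
      rw [patternOf_lt_iff _ hg, hf0, ← hv]
    have hcard2 : (Finset.univ.filter (fun j : Fin k => α (f j) < v)).card = B'.card := by
      apply Finset.card_bij (fun j _ => f j)
      · intro j hj
        simp only [Finset.mem_filter, Finset.mem_univ, true_and] at hj
        have := hfmem j
        rw [hF] at this
        rcases Finset.mem_insert.mp this with h | h
        · rw [h, ← hv] at hj; exact absurd hj (lt_irrefl _)
        · rcases Finset.mem_union.mp h with h | h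
          · exact h
          · exact absurd ((hC'gt _ h).trans hj) (lt_irrefl _)
      · intro x _ y _ hxy
        exact hfmono.injective hxy
      · intro x hx
        obtain ⟨j, hj⟩ := hfrange x (Finset.mem_insert_of_mem (Finset.mem_union_left _ hx))
        refine ⟨j, ?_, hj⟩
        simp only [Finset.mem_filter, Finset.mem_univ, true_and]
        rw [hj]
        exact hB'lt _ hx
    rw [hτ0, hset, hcard2, hB'card]
    omega

theorem stmt4 (k d n : ℕ) (hd : 0 < d) (i : Fin d → ℕ) (hmono : StrictMono i)
    (hfirst : 1 ≤ i ⟨0, hd⟩) (hlast : i ⟨d - 1, by omega⟩ ≤ k) (hn : 2 * k + 1 ≤ n) :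
    Set.ncard {α : Equiv.Perm (Fin n) | ∀ j : Fin d, ∀ τ ∈ Tkm k (i j), Avoids τ α}
      = (k + i ⟨0, hd⟩ - i ⟨d - 1, by omega⟩ - 1) *
        Set.ncard {α : Equiv.Perm (Fin (n - 1)) | ∀ j : Fin d, ∀ τ ∈ Tkm k (i j), Avoids τ α} := by
  have hdd : d - 1 < d := by omega
  have hI1d : i ⟨0, hd⟩ ≤ i ⟨d - 1, hdd⟩ :=
    hmono.monotone (by rw [Fin.le_def]; exact Nat.zero_le _)
  have hIj : ∀ j : Fin d, i ⟨0, hd⟩ ≤ i j ∧ i j ≤ i ⟨d - 1, hdd⟩ := by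
    intro j
    constructor
    · exact hmono.monotone (by rw [Fin.le_def]; exact Nat.zero_le _)
    · refine hmono.monotone ?_
      rw [Fin.le_def]
      show (j : ℕ) ≤ d - 1
      have := j.isLt
      omega
  have hlast' : i ⟨d - 1, hdd⟩ ≤ k := hlast
  have hk1 : 0 < k := by
    have h1 := hI1d
    have h2 := hfirst
    have h3 := hlast'
    omega
  obtain ⟨m, rfl⟩ : ∃ m, n = m + 1 := ⟨n - 1, by omega⟩
  have hm : 2 * k ≤ m := by omega
  set I1 := i ⟨0, hd⟩ with hI1
  set iD := i ⟨d - 1, hdd⟩ with hiD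
  clear hlast
  clear_value I1 iD
  set a := I1 - 1 with ha
  set b := k - iD with hb
  clear_value a b
  set V : Set (Fin (m + 1)) := {v | (v : ℕ) < a ∨ m + 1 - b ≤ (v : ℕ)} with hV
  set S' : Set (Equiv.Perm (Fin m)) :=
    {α | ∀ j : Fin d, ∀ τ ∈ Tkm k (i j), Avoids τ α} with hS'
  have key : {α : Equiv.Perm (Fin (m + 1)) | ∀ j : Fin d, ∀ τ ∈ Tkm k (i j), Avoids τ α}
      = (fun p : Fin (m + 1) × Equiv.Perm (Fin m) => ins p.1 p.2) '' (V ×ˢ S') := by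
    ext α
    simp only [Set.mem_setOf_eq, Set.mem_image, Set.mem_prod, Prod.exists]
    constructor
    · intro hα
      set v := α 0 with hv
      set e : Option (Fin m) ≃ Option (Fin m) :=
        ((finSuccEquiv m).symm.trans (α : Fin (m+1) ≃ Fin (m+1))).trans (finSuccEquiv' v) with he
      have hen : e none = none := by
        have h5 : e none = finSuccEquiv' v v := by
          simp only [he, Equiv.trans_apply, finSuccEquiv_symm_none, ← hv]
        rw [h5, finSuccEquiv'_at]
      set β := e.removeNone with hβ
      have hβe : ∀ j : Fin m, v.succAbove (β j) = α j.succ := by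
        intro j
        have h1 : ∃ u, e (some j) = some u := by
          rcases hes : e (some j) with _ | u
          · exact absurd (e.injective (hes.trans hen.symm)) (by simp)
          · exact ⟨u, rfl⟩
        have h2 : some (β j) = e (some j) := Equiv.removeNone_some e h1
        have h3 : e (some j) = finSuccEquiv' v (α j.succ) := by
          simp only [he, Equiv.trans_apply, finSuccEquiv_symm_some]
        have h4 := congrArg (finSuccEquiv' v).symm (h2.trans h3)
        rw [Equiv.symm_apply_apply, finSuccEquiv'_symm_some] at h4
        exact h4
      have hins : ins v β = α := by
        apply Equiv.ext
        intro x
        induction x using Fin.cases with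
        | zero => rw [ins_zero, hv]
        | succ j => rw [ins_succ]; exact hβe j
      refine ⟨v, β, ⟨?_, ?_⟩, hins⟩
      · by_contra hvV
        simp only [hV, Set.mem_setOf_eq, not_or, not_lt, not_le] at hvV
        obtain ⟨h1, h2⟩ := hvV
        have hvm : (v : ℕ) ≤ m := by omega
        by_cases hcase : k - I1 ≤ m - (v : ℕ)
        · obtain ⟨τ, hτ0, hτc⟩ := contains_of_mid hk1 α I1 hfirst (le_trans hI1d hlast')
            (by omega) (by rw [← hv]; exact hcase)
          refine hα ⟨0, hd⟩ τ ?_ hτc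
          intro x hx
          have hx0 : x = ⟨0, hk1⟩ := Fin.ext hx
          rw [hx0, ← hI1]
          exact hτ0
        · obtain ⟨τ, hτ0, hτc⟩ := contains_of_mid hk1 α iD (by omega) hlast'
            (by rw [← hv]; omega) (by rw [← hv]; omega)
          refine hα ⟨d - 1, hdd⟩ τ ?_ hτc
          intro x hx
          have hx0 : x = ⟨0, hk1⟩ := Fin.ext hx
          rw [hx0, ← hiD]
          exact hτ0
      · intro j τ hτ hcont
        exact hα j τ hτ (by rw [← hins]; exact contains_ins_of_contains v hcont)
    · rintro ⟨v, β, ⟨hvV, hβ⟩, rfl⟩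
      intro j τ hτ hcon
      obtain ⟨f, hocc⟩ := hcon
      by_cases h0 : f ⟨0, hk1⟩ = 0
      · have hτ0 : (τ ⟨0, hk1⟩ : ℕ) + 1 = i j := hτ _ rfl
        have hle := occ_le hocc ⟨0, hk1⟩
        have hge := occ_ge hocc ⟨0, hk1⟩
        rw [h0, ins_zero] at hle hge
        have hvm : (v : ℕ) < m + 1 := v.isLt
        have hj1 := (hIj j).1
        have hj2 := (hIj j).2
        simp only [hV, Set.mem_setOf_eq] at hvV
        rcases hvV with h | h <;> omega
      · have hne : ∀ x, f x ≠ 0 := by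
          intro x hx
          have hle0 : (⟨0, hk1⟩ : Fin k) ≤ x := by rw [Fin.le_def]; exact Nat.zero_le _
          rcases eq_or_lt_of_le hle0 with h | h
          · exact h0 (by rw [h, hx])
          · have := hocc.1 h
            rw [hx] at this
            exact absurd this (Fin.not_lt_zero _)
        exact hβ j τ hτ (contains_of_ins_contains f hocc hne)
  have hab : a + b ≤ k - 1 := by omega
  have haV : a < m + 1 := by omega
  have hVcard : V.ncard = a + b := by
    by_cases hb0 : b = 0
    · have hVfin : V = ↑(Finset.Iio (⟨a, haV⟩ : Fin (m + 1))) := by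
        ext v
        simp only [hV, Set.mem_setOf_eq, Finset.coe_Iio, Set.mem_Iio, Fin.lt_def, Fin.val_mk]
        have := v.isLt
        omega
      rw [hVfin, Set.ncard_coe_finset, Fin.card_Iio, Fin.val_mk]
      omega
    · have hbV : m + 1 - b < m + 1 := by omega
      have hVfin : V = ↑(Finset.Iio (⟨a, haV⟩ : Fin (m + 1))
          ∪ Finset.Ici (⟨m + 1 - b, hbV⟩ : Fin (m + 1))) := by
        ext v
        simp only [hV, Set.mem_setOf_eq, Finset.coe_union, Set.mem_union, Finset.coe_Iio,
          Set.mem_Iio, Finset.coe_Ici, Set.mem_Ici, Fin.lt_def, Fin.le_def, Fin.val_mk]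
      rw [hVfin, Set.ncard_coe_finset, Finset.card_union_of_disjoint, Fin.card_Iio, Fin.card_Ici]
      · simp only [Fin.val_mk]
        omega
      · rw [Finset.disjoint_left]
        intro x hx1 hx2
        rw [Finset.mem_Iio, Fin.lt_def] at hx1
        rw [Finset.mem_Ici, Fin.le_def] at hx2
        simp only [Fin.val_mk] at hx1 hx2
        omega
  have hcoeff : k + I1 - iD - 1 = a + b := by omega
  calc Set.ncard {α : Equiv.Perm (Fin (m + 1)) | ∀ j : Fin d, ∀ τ ∈ Tkm k (i j), Avoids τ α}
      = (V ×ˢ S').ncard := by rw [key]; exact Set.ncard_image_of_injective _ ins_injective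
    _ = V.ncard * S'.ncard := by
        rw [← Nat.card_coe_set_eq, ← Nat.card_coe_set_eq, ← Nat.card_coe_set_eq,
          Nat.card_congr (Equiv.Set.prod V S'), Nat.card_prod]
    _ = (k + I1 - iD - 1) * S'.ncard := by rw [hVcard, hcoeff]
end

section
/- For all k ≤ n with k ≥ 3 and any τ ∈ T_k^1, the number of permutations of {1,…,n} that avoid every pattern in T_k^1 \ {τ} and contain τ exactly once equals (n+1-k)·(k-1)^(n-k). -/
open Equiv Finset Fin

namespace Stmt6

variable {K n m r : ℕ}

/-- Remove the first point: collapse a permutation of `Fin (n+1)` to one of `Fin n`,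
dropping position 0 and value `σ 0`. -/
def rest (σ : Perm (Fin (n+1))) : Perm (Fin n) :=
  (finSuccAboveEquiv (0 : Fin (n+1))).trans
    ((σ.subtypeEquiv (fun a => by
        constructor
        · intro h h2; exact h (σ.injective h2)
        · intro h h2; exact h (by rw [h2]))).trans
      (finSuccAboveEquiv (σ 0)).symm)

lemma rest_spec (σ : Perm (Fin (n+1))) (i : Fin n) :
    (σ 0).succAbove (rest σ i) = σ i.succ := by
  have h1 : (finSuccAboveEquiv (σ 0)) ((finSuccAboveEquiv (σ 0)).symm
      ⟨σ ((0 : Fin (n+1)).succAbove i), by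
        simp only [ne_eq, EmbeddingLike.apply_eq_iff_eq]
        exact succAbove_ne 0 i⟩) = ⟨σ ((0:Fin (n+1)).succAbove i), _⟩ :=
    Equiv.apply_symm_apply _ _
  have h2 := congrArg Subtype.val h1
  simp only [finSuccAboveEquiv_apply] at h2
  have : rest σ i = (finSuccAboveEquiv (σ 0)).symm
      ⟨σ ((0 : Fin (n+1)).succAbove i), by
        simp only [ne_eq, EmbeddingLike.apply_eq_iff_eq]; exact succAbove_ne 0 i⟩ := rfl
  rw [this, h2, zero_succAbove]

lemma peel_inj : Function.Injective
    (fun σ : Perm (Fin (n+1)) => ((σ 0, rest σ) : Fin (n+1) × Perm (Fin n))) := by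
  intro σ σ' h
  obtain ⟨h0, hr⟩ := Prod.mk.injEq .. ▸ h
  ext j
  refine Fin.cases ?_ (fun i => ?_) j
  · exact congrArg Fin.val h0
  · rw [← rest_spec σ i, ← rest_spec σ' i, hr, h0]

lemma peel_surj : Function.Surjective
    (fun σ : Perm (Fin (n+1)) => ((σ 0, rest σ) : Fin (n+1) × Perm (Fin n))) := by
  have : Fintype.card (Perm (Fin (n+1))) = Fintype.card (Fin (n+1) × Perm (Fin n)) := by
    simp [Fintype.card_perm, Nat.factorial_succ]
  exact ((Fintype.bijective_iff_injective_and_card _).2 ⟨peel_inj, this⟩).2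


variable {K n m r : ℕ}

/-- An occurrence of *some* pattern of `T_{K+1}^1`: a strictly increasing index
sequence whose first entry carries the smallest value. -/
def OccAny {m : ℕ} (α : Perm (Fin m)) (f : Fin (K+1) → Fin m) : Prop :=
  StrictMono f ∧ ∀ i : Fin (K+1), i ≠ 0 → α (f 0) < α (f i)

def AvoidAll (K : ℕ) {m : ℕ} (α : Perm (Fin m)) : Prop :=
  ∀ f : Fin (K+1) → Fin m, ¬ OccAny α f

def MyCond (τ : Perm (Fin (K+1))) {m : ℕ} (α : Perm (Fin m)) : Prop :=
  (∃! f : Fin (K+1) → Fin m, OccAny α f) ∧ ∀ f, OccAny α f → PattOccursAt τ α f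

/-- positions of the top `r` values of `β` -/
def TopSet (r : ℕ) {m : ℕ} (β : Perm (Fin m)) : Finset (Fin m) :=
  univ.filter fun x => m - r ≤ ((β x : ℕ))

/-- the `y`-th smallest of the top `r` values -/
def valEmb {r m : ℕ} (h : r ≤ m) (y : Fin r) : Fin m := ⟨m - r + y.1, by omega⟩

lemma card_filter_le (a m : ℕ) :
    (univ.filter fun x : Fin m => a ≤ (x : ℕ)).card = m - a := by
  classical
  rcases le_or_gt m a with h | h
  · rw [filter_false_of_mem, card_empty]; · omega
    intro x _; simp only [not_le]; omega
  · have : (univ.filter fun x : Fin m => a ≤ (x : ℕ)) =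
        (univ : Finset (Fin (m - a))).image (fun y => (⟨a + y.1, by omega⟩ : Fin m)) := by
      ext x
      simp only [mem_filter, mem_univ, true_and, mem_image]
      constructor
      · intro hx; exact ⟨⟨x.1 - a, by omega⟩, by apply Fin.ext; simp; omega⟩
      · rintro ⟨y, hy⟩; rw [← hy]; simp
    rw [this, card_image_of_injective, card_univ, Fintype.card_fin]
    intro y z hyz
    have := congrArg Fin.val hyz
    simp only at this
    exact Fin.ext (by omega)

lemma card_topSet (h : r ≤ m) (β : Perm (Fin m)) : (TopSet r β).card = r := by
  classical
  have : TopSet r β = (univ.filter fun v : Fin m => m - r ≤ (v : ℕ)).image β.symm := by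
    ext x
    simp only [TopSet, mem_filter, mem_univ, true_and, mem_image]
    constructor
    · intro hx; exact ⟨β x, hx, β.symm_apply_apply x⟩
    · rintro ⟨v, hv, rfl⟩; simpa using hv
  rw [this, card_image_of_injective _ β.symm.injective, card_filter_le]
  omega

/-- enumeration (in increasing position order) of the positions of the top `r` values -/
noncomputable def topEnum (h : r ≤ m) (β : Perm (Fin m)) : Fin r → Fin m :=
  (TopSet r β).orderEmbOfFin (card_topSet h β)

lemma topEnum_strictMono (h : r ≤ m) (β : Perm (Fin m)) : StrictMono (topEnum h β) :=
  ((TopSet r β).orderEmbOfFin (card_topSet h β)).strictMono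

lemma topEnum_mem (h : r ≤ m) (β : Perm (Fin m)) (i : Fin r) :
    m - r ≤ (β (topEnum h β i) : ℕ) := by
  have := Finset.orderEmbOfFin_mem (TopSet r β) (card_topSet h β) i
  simp only [TopSet, mem_filter, mem_univ, true_and] at this
  exact this

lemma topEnum_unique (h : r ≤ m) (β : Perm (Fin m)) {f : Fin r → Fin m}
    (hmem : ∀ i, m - r ≤ (β (f i) : ℕ)) (hmono : StrictMono f) : f = topEnum h β :=
  Finset.orderEmbOfFin_unique _ (fun i => by
    simp only [TopSet, mem_filter, mem_univ, true_and]; exact hmem i) hmono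

/-- the top `r` values of `β` appear, in position order, in the relative order `ρ` -/
def TopPatt (h : r ≤ m) (ρ : Perm (Fin r)) (β : Perm (Fin m)) : Prop :=
  ∀ t : Fin r, β (topEnum h β t) = valEmb h (ρ t)


lemma val_succAbove (p : Fin (m+1)) (i : Fin m) :
    ((p.succAbove i : Fin (m+1)) : ℕ) = if (i:ℕ) < (p:ℕ) then (i:ℕ) else (i:ℕ)+1 := by
  rcases lt_or_ge (castSucc i) p with h | h
  · rw [succAbove_of_castSucc_lt _ _ h, if_pos (by simpa [Fin.lt_def] using h)]
    simp
  · rw [succAbove_of_le_castSucc _ _ h, if_neg (by simp [Fin.le_def] at h; omega)]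
    simp

lemma lt_rest_iff (σ : Perm (Fin (n+1))) (x y : Fin n) :
    rest σ x < rest σ y ↔ σ x.succ < σ y.succ := by
  rw [← rest_spec σ x, ← rest_spec σ y]
  exact (succAbove_lt_succAbove_iff).symm

lemma occAny_succ_iff (σ : Perm (Fin (n+1))) (g : Fin (K+1) → Fin n) :
    OccAny σ (fun i => (g i).succ) ↔ OccAny (rest σ) g := by
  unfold OccAny
  constructor
  · rintro ⟨h1, h2⟩
    refine ⟨fun a b hab => by have := h1 hab; simpa [succ_lt_succ_iff] using this,
      fun i hi => ?_⟩
    rw [lt_rest_iff]; exact h2 i hi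
  · rintro ⟨h1, h2⟩
    refine ⟨fun a b hab => succ_lt_succ_iff.mpr (h1 hab), fun i hi => ?_⟩
    rw [← lt_rest_iff]; exact h2 i hi

lemma pattOccursAt_succ_iff (τ : Perm (Fin (K+1))) (σ : Perm (Fin (n+1)))
    (g : Fin (K+1) → Fin n) :
    PattOccursAt τ σ (fun i => (g i).succ) ↔ PattOccursAt τ (rest σ) g := by
  unfold PattOccursAt
  constructor
  · rintro ⟨h1, h2⟩
    refine ⟨fun a b hab => by have := h1 hab; simpa [succ_lt_succ_iff] using this,
      fun i j => ?_⟩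
    rw [lt_rest_iff]; exact h2 i j
  · rintro ⟨h1, h2⟩
    refine ⟨fun a b hab => succ_lt_succ_iff.mpr (h1 hab), fun i j => ?_⟩
    rw [← lt_rest_iff]; exact h2 i j

lemma occAny_ne_zero {σ : Perm (Fin (n+1))} {f : Fin (K+1) → Fin (n+1)}
    (hf : OccAny σ f) (h0 : f 0 ≠ 0) : ∀ i, f i ≠ 0 := by
  intro i
  rcases eq_or_ne i 0 with rfl | hi
  · exact h0
  · have : f 0 < f i := hf.1 (Fin.pos_iff_ne_zero.mpr hi)
    exact Fin.ne_zero_of_lt this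

lemma strictMono_cases {g : Fin K → Fin n} (hg : StrictMono g) :
    StrictMono (Fin.cases 0 (fun i => (g i).succ) : Fin (K+1) → Fin (n+1)) := by
  intro a b hab
  induction b using Fin.cases with
  | zero => exact absurd hab (Fin.not_lt_zero _)
  | succ j =>
    induction a using Fin.cases with
    | zero => simpa using Fin.succ_pos _
    | succ i =>
      simp only [Fin.cases_succ]
      exact succ_lt_succ_iff.mpr (hg (by rwa [succ_lt_succ_iff] at hab))

lemma occAny_zero_iff (σ : Perm (Fin (n+1))) (g : Fin K → Fin n) :
    OccAny σ (Fin.cases 0 fun i => (g i).succ) ↔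
      StrictMono g ∧ ∀ i, ((σ 0 : ℕ)) ≤ (rest σ (g i) : ℕ) := by
  constructor
  · rintro ⟨h1, h2⟩
    refine ⟨fun a b hab => ?_, fun i => ?_⟩
    · have := h1 (succ_lt_succ_iff.mpr hab)
      simpa [succ_lt_succ_iff] using this
    · have := h2 i.succ (Fin.succ_ne_zero i)
      simp only [Fin.cases_zero, Fin.cases_succ] at this
      rw [← rest_spec σ (g i)] at this
      have := lt_succAbove_iff_le_castSucc _ _ |>.mp this
      simpa [Fin.le_def] using this
  · rintro ⟨h1, h2⟩
    refine ⟨strictMono_cases h1, fun i hi => ?_⟩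
    induction i using Fin.cases with
    | zero => exact absurd rfl hi
    | succ j =>
      simp only [Fin.cases_zero, Fin.cases_succ]
      rw [← rest_spec σ (g j)]
      exact lt_succAbove_iff_le_castSucc _ _ |>.mpr (by simpa [Fin.le_def] using h2 j)

/-- any occurrence starting at position 0 has the canonical `Fin.cases` form -/
lemma occ_zero_form {σ : Perm (Fin (n+1))} {f : Fin (K+1) → Fin (n+1)}
    (hf : OccAny σ f) (h0 : f 0 = 0) :
    ∃ g : Fin K → Fin n, f = Fin.cases 0 fun i => (g i).succ := by
  have hne : ∀ i : Fin K, f i.succ ≠ 0 := by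
    intro i
    have : f 0 < f i.succ := hf.1 (Fin.succ_pos i)
    rw [h0] at this
    exact Fin.ne_zero_of_lt this
  refine ⟨fun i => (f i.succ).pred (hne i), funext fun j => ?_⟩
  induction j using Fin.cases with
  | zero => simpa using h0
  | succ i => simp [Fin.succ_pred]

lemma card_bigSet (a : ℕ) (β : Perm (Fin m)) :
    (univ.filter fun x => a ≤ ((β x : ℕ))).card = m - a := by
  classical
  have : (univ.filter fun x => a ≤ ((β x : ℕ))) =
      (univ.filter fun v : Fin m => a ≤ (v : ℕ)).image β.symm := by
    ext x
    simp only [mem_filter, mem_univ, true_and, mem_image]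
    constructor
    · intro hx; exact ⟨β x, hx, β.symm_apply_apply x⟩
    · rintro ⟨v, hv, rfl⟩; simpa using hv
  rw [this, card_image_of_injective _ β.symm.injective, card_filter_le]

/-- the positions (in `rest σ`) eligible to continue an occurrence starting at 0 -/
def SSet (σ : Perm (Fin (n+1))) : Finset (Fin n) :=
  univ.filter fun x => (σ 0 : ℕ) ≤ (rest σ x : ℕ)

lemma card_SSet (σ : Perm (Fin (n+1))) : (SSet σ).card = n - (σ 0 : ℕ) :=
  card_bigSet _ _

lemma no_occ_zero {σ : Perm (Fin (n+1))} (h : n - (σ 0 : ℕ) < K) :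
    ∀ f : Fin (K+1) → Fin (n+1), f 0 = 0 → ¬ OccAny σ f := by
  intro f h0 hf
  obtain ⟨g, rfl⟩ := occ_zero_form hf h0
  rw [occAny_zero_iff] at hf
  obtain ⟨hg, hmem⟩ := hf
  have hsub : ∀ i, g i ∈ SSet σ := fun i => by
    simp only [SSet, mem_filter, mem_univ, true_and]; exact hmem i
  have hK : K ≤ (SSet σ).card := by
    have := Finset.card_le_card_of_injOn (s := (univ : Finset (Fin K))) (t := SSet σ)
      g (fun i _ => hsub i) hg.injective.injOn
    simpa using this
  rw [card_SSet] at hK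
  omega

lemma exists_occ_zero {σ : Perm (Fin (n+1))} (h : K ≤ n - (σ 0 : ℕ)) :
    ∃ f : Fin (K+1) → Fin (n+1), f 0 = 0 ∧ OccAny σ f := by
  obtain ⟨t, hts, htc⟩ := Finset.exists_subset_card_eq (show K ≤ (SSet σ).card by
    rw [card_SSet]; exact h)
  refine ⟨Fin.cases 0 (fun i => ((t.orderEmbOfFin htc i) : Fin n).succ), by simp, ?_⟩
  rw [occAny_zero_iff]
  refine ⟨(t.orderEmbOfFin htc).strictMono, fun i => ?_⟩
  have := hts (Finset.orderEmbOfFin_mem t htc i)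
  simp only [SSet, mem_filter, mem_univ, true_and] at this
  exact this

lemma occ_zero_g_unique {σ : Perm (Fin (n+1))} (h : n - (σ 0 : ℕ) = K)
    {g g' : Fin K → Fin n}
    (hg : StrictMono g) (hg' : StrictMono g')
    (hm : ∀ i, (σ 0 : ℕ) ≤ (rest σ (g i) : ℕ)) (hm' : ∀ i, (σ 0 : ℕ) ≤ (rest σ (g' i) : ℕ)) :
    g = g' := by
  have hc : (SSet σ).card = K := by rw [card_SSet, h]
  have e1 : g = (SSet σ).orderEmbOfFin hc :=
    Finset.orderEmbOfFin_unique hc (fun i => by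
      simp only [SSet, mem_filter, mem_univ, true_and]; exact hm i) hg
  have e2 : g' = (SSet σ).orderEmbOfFin hc :=
    Finset.orderEmbOfFin_unique hc (fun i => by
      simp only [SSet, mem_filter, mem_univ, true_and]; exact hm' i) hg'
  rw [e1, e2]

lemma unique_occ_zero {σ : Perm (Fin (n+1))} (h : n - (σ 0 : ℕ) = K)
    {f f' : Fin (K+1) → Fin (n+1)} (h0 : f 0 = 0) (h0' : f' 0 = 0)
    (hf : OccAny σ f) (hf' : OccAny σ f') : f = f' := by
  obtain ⟨g, rfl⟩ := occ_zero_form hf h0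
  obtain ⟨g', rfl⟩ := occ_zero_form hf' h0'
  rw [occAny_zero_iff] at hf hf'
  rw [occ_zero_g_unique h hf.1 hf'.1 hf.2 hf'.2]

lemma two_occ_zero {σ : Perm (Fin (n+1))} (h : K < n - (σ 0 : ℕ)) (hK : 0 < K) :
    ∃ f f' : Fin (K+1) → Fin (n+1), f ≠ f' ∧ OccAny σ f ∧ OccAny σ f' := by
  obtain ⟨u, hus, huc⟩ := Finset.exists_subset_card_eq (show K + 1 ≤ (SSet σ).card by
    rw [card_SSet]; omega)
  obtain ⟨x, hx, y, hy, hxy⟩ := Finset.one_lt_card.mp (by omega : 1 < u.card)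
  have hcx : (u.erase x).card = K := by rw [Finset.card_erase_of_mem hx, huc]; omega
  have hcy : (u.erase y).card = K := by rw [Finset.card_erase_of_mem hy, huc]; omega
  set g1 : Fin K → Fin n := ⇑((u.erase x).orderEmbOfFin hcx) with hg1
  set g2 : Fin K → Fin n := ⇑((u.erase y).orderEmbOfFin hcy) with hg2
  have mem1 : ∀ i, g1 i ∈ SSet σ := fun i =>
    hus (Finset.mem_of_mem_erase (Finset.orderEmbOfFin_mem _ hcx i))
  have mem2 : ∀ i, g2 i ∈ SSet σ := fun i =>
    hus (Finset.mem_of_mem_erase (Finset.orderEmbOfFin_mem _ hcy i))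
  refine ⟨Fin.cases 0 (fun i => (g1 i).succ), Fin.cases 0 (fun i => (g2 i).succ), ?_, ?_, ?_⟩
  · intro he
    have hgeq : g1 = g2 := by
      funext i
      have := congrFun he i.succ
      simp only [Fin.cases_succ] at this
      exact Fin.succ_injective _ this
    have hset : u.erase x = u.erase y := by
      have r1 := Finset.range_orderEmbOfFin _ hcx
      have r2 := Finset.range_orderEmbOfFin _ hcy
      rw [← hg1] at r1
      rw [← hg2] at r2
      apply Finset.coe_injective
      rw [← r1, ← r2, hgeq]
    have hxmem : x ∈ u.erase y := Finset.mem_erase_of_ne_of_mem hxy hx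
    rw [← hset] at hxmem
    exact (Finset.notMem_erase x u) hxmem
  · rw [occAny_zero_iff]
    exact ⟨((u.erase x).orderEmbOfFin hcx).strictMono, fun i => by
      have := mem1 i; simp only [SSet, mem_filter, mem_univ, true_and] at this; exact this⟩
  · rw [occAny_zero_iff]
    exact ⟨((u.erase y).orderEmbOfFin hcy).strictMono, fun i => by
      have := mem2 i; simp only [SSet, mem_filter, mem_univ, true_and] at this; exact this⟩

lemma avoidAll_iff (σ : Perm (Fin (n+1))) :
    AvoidAll K σ ↔ (n - (σ 0 : ℕ) < K) ∧ AvoidAll K (rest σ) := by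
  constructor
  · intro h
    constructor
    · by_contra hc
      push_neg at hc
      obtain ⟨f, _, hf⟩ := exists_occ_zero hc
      exact h f hf
    · intro g hg
      exact h _ ((occAny_succ_iff σ g).mpr hg)
  · rintro ⟨h1, h2⟩ f hf
    rcases eq_or_ne (f 0) 0 with h0 | h0
    · exact no_occ_zero h1 f h0 hf
    · have hne := occAny_ne_zero hf h0
      have hfe : f = fun i => ((f i).pred (hne i)).succ := funext fun i => by
        simp [Fin.succ_pred]
      rw [hfe] at hf
      exact h2 _ ((occAny_succ_iff σ _).mp hf)

lemma valEmb_strictMono (h : r ≤ m) : StrictMono (valEmb h) := by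
  intro y z hyz
  simp only [valEmb, Fin.lt_def] at *
  omega

lemma valEmb_lt_iff (h : r ≤ m) {y z : Fin r} : valEmb h y < valEmb h z ↔ y < z := by
  simp only [valEmb, Fin.lt_def] at *
  constructor <;> (intro; omega)

lemma eq_valEmb {h : r ≤ m} {u : Fin r → Fin m} (hu : StrictMono u)
    (hm : ∀ y, m - r ≤ (u y : ℕ)) : u = valEmb h := by
  classical
  apply (StrictMono.range_inj hu (valEmb_strictMono h)).mp
  have hT : (univ.filter fun v : Fin m => m - r ≤ (v : ℕ)).card = r := by
    rw [card_filter_le]; omega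
  have key : ∀ w : Fin r → Fin m, StrictMono w → (∀ y, m - r ≤ (w y : ℕ)) →
      (univ : Finset (Fin r)).image w = univ.filter fun v : Fin m => m - r ≤ (v : ℕ) := by
    intro w hw hwm
    apply Finset.eq_of_subset_of_card_le
    · intro v hv
      simp only [mem_image, mem_univ, true_and] at hv
      obtain ⟨y, rfl⟩ := hv
      simp only [mem_filter, mem_univ, true_and]
      exact hwm y
    · rw [hT, Finset.card_image_of_injective _ hw.injective, card_univ, Fintype.card_fin]
  have h1 := key u hu hm
  have h2 := key (valEmb h) (valEmb_strictMono h) (fun y => by simp [valEmb])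
  rw [← Set.image_univ, ← Set.image_univ, ← Finset.coe_univ, ← Finset.coe_image,
    ← Finset.coe_image, h1, h2]

lemma topPatt_iff_matrix (h : r ≤ m) (ρ : Perm (Fin r)) (β : Perm (Fin m)) :
    TopPatt h ρ β ↔ ∀ i j, (ρ i < ρ j ↔ β (topEnum h β i) < β (topEnum h β j)) := by
  constructor
  · intro ht i j
    rw [ht i, ht j, valEmb_lt_iff]
  · intro hm t
    set u : Fin r → Fin m := fun y => β (topEnum h β (ρ.symm y)) with hu_def
    have hu : StrictMono u := by
      intro y z hyz
      refine (hm _ _).mp ?_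
      rwa [Equiv.apply_symm_apply, Equiv.apply_symm_apply]
    have hmem : ∀ y, m - r ≤ (u y : ℕ) := fun y => topEnum_mem h β _
    have he := eq_valEmb (h := h) hu hmem
    have := congrFun he (ρ t)
    simpa [hu_def, Equiv.symm_apply_apply] using this

/-- In the critical case, the pattern of the unique occurrence through position 0
is `τ` iff the top `K` values of `rest σ` occur in relative order `rest τ`. -/
lemma patt_zero_iff {σ : Perm (Fin (n+1))} {τ : Perm (Fin (K+1))}
    (hτ0 : τ 0 = 0) (hp : (σ 0 : ℕ) = n - K) (hK : K ≤ n) :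
    PattOccursAt τ σ (Fin.cases 0 fun i => (topEnum hK (rest σ) i).succ) ↔
      TopPatt hK (rest τ) (rest σ) := by
  set β := rest σ with hβ
  set E := topEnum hK β with hE
  -- facts
  have hEmem : ∀ i, n - K ≤ (β (E i) : ℕ) := fun i => topEnum_mem hK β i
  have ha : ∀ i : Fin K, σ 0 < σ ((E i).succ) := by
    intro i
    rw [← rest_spec σ (E i)]
    refine (lt_succAbove_iff_le_castSucc _ _).mpr ?_
    rw [Fin.le_def]
    simpa [hp] using hEmem i
  have hb : ∀ j : Fin (K+1), j ≠ 0 → τ 0 < τ j := by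
    intro j hj
    rw [hτ0]
    exact Fin.pos_iff_ne_zero.mpr (fun hh => hj (τ.injective (by rw [hh, hτ0])))
  have hsm : StrictMono (Fin.cases 0 (fun i => (E i).succ) : Fin (K+1) → Fin (n+1)) :=
    strictMono_cases (topEnum_strictMono hK β)
  have hτsucc : ∀ i : Fin K, τ i.succ = (rest τ i).succ := by
    intro i
    rw [← rest_spec τ i, hτ0, zero_succAbove]
  have hred : PattOccursAt τ σ (Fin.cases 0 fun i => (topEnum hK (rest σ) i).succ) ↔
      ∀ i j : Fin K, (rest τ i < rest τ j ↔ β (E i) < β (E j)) := by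
    constructor
    · rintro ⟨_, h2⟩ i j
      have := h2 i.succ j.succ
      simp only [Fin.cases_succ] at this
      rw [hτsucc i, hτsucc j, succ_lt_succ_iff] at this
      rw [this, ← rest_spec σ (E i), ← rest_spec σ (E j), succAbove_lt_succAbove_iff]
    · intro hm
      refine ⟨hsm, fun i j => ?_⟩
      induction i using Fin.cases with
      | zero =>
        induction j using Fin.cases with
        | zero => simp
        | succ j' =>
          simp only [Fin.cases_zero, Fin.cases_succ]
          constructor
          · intro _; exact ha j'
          · intro _; exact hb _ (Fin.succ_ne_zero j')
      | succ i' =>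
        induction j using Fin.cases with
        | zero =>
          simp only [Fin.cases_zero, Fin.cases_succ]
          constructor
          · intro hlt; exact absurd (hb _ (Fin.succ_ne_zero i')) (asymm hlt)
          · intro hlt; exact absurd (ha i') (asymm hlt)
        | succ j' =>
          simp only [Fin.cases_succ]
          rw [hτsucc i', hτsucc j', succ_lt_succ_iff, hm i' j',
            ← rest_spec σ (E i'), ← rest_spec σ (E j'), succAbove_lt_succAbove_iff]
  rw [hred]
  exact (topPatt_iff_matrix hK (rest τ) β).symm

/-- transfer of `TopPatt` when the first value is not among the top `r` -/
lemma topPatt_low {σ : Perm (Fin (n+1))} (h : r ≤ n) (h' : r ≤ n + 1)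
    (hp : (σ 0 : ℕ) < n + 1 - r) (ρ : Perm (Fin r)) :
    TopPatt h' ρ σ ↔ TopPatt h ρ (rest σ) := by
  set β := rest σ with hβ
  set E := topEnum h β with hE
  have hval : ∀ i : Fin r, (n + 1) - r ≤ (σ ((E i).succ) : ℕ) := by
    intro i
    rw [← rest_spec σ (E i), ← hβ, val_succAbove]
    have := topEnum_mem h β i
    rw [← hE] at this
    split <;> omega
  have hEnum : (fun i => (E i).succ) = topEnum h' σ :=
    topEnum_unique h' σ hval ((Fin.strictMono_succ).comp (topEnum_strictMono h β))
  have hemb : ∀ y : Fin r, valEmb h' y = (σ 0).succAbove (valEmb h y) := by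
    intro y
    apply Fin.ext
    rw [val_succAbove]
    split <;> simp only [valEmb] at * <;> omega
  constructor
  · intro ht t
    have := ht t
    rw [← hEnum] at this
    rw [← rest_spec σ (E t), hemb] at this
    exact succAbove_right_injective this
  · intro ht t
    rw [← hEnum, ← rest_spec σ (E t), ht t, hemb]

/-- transfer of `TopPatt` when the first value is among the top `r = R+1` -/
lemma topPatt_high {R : ℕ} {σ : Perm (Fin (n+1))} (h : R ≤ n) (h' : R + 1 ≤ n + 1)
    (hp : n - R ≤ (σ 0 : ℕ)) (ρ : Perm (Fin (R+1))) :
    TopPatt h' ρ σ ↔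
      ((σ 0 : ℕ) = n - R + ((ρ 0 : ℕ))) ∧ TopPatt h (rest ρ) (rest σ) := by
  set β := rest σ with hβ
  set E := topEnum h β with hE
  have hval : ∀ j : Fin (R+1),
      (n+1) - (R+1) ≤ ((σ (Fin.cases 0 (fun i => (E i).succ) j) : Fin (n+1)) : ℕ) := by
    intro j
    induction j using Fin.cases with
    | zero => simpa using hp
    | succ i =>
      simp only [Fin.cases_succ]
      rw [← rest_spec σ (E i), ← hβ, val_succAbove]
      have := topEnum_mem h β i
      rw [← hE] at this
      split <;> omega
  have hEnum : (Fin.cases 0 (fun i => (E i).succ) : Fin (R+1) → Fin (n+1)) = topEnum h' σ :=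
    topEnum_unique h' σ hval (strictMono_cases (topEnum_strictMono h β))
  have hρsucc : ∀ i : Fin R, ρ i.succ = (ρ 0).succAbove (rest ρ i) :=
    fun i => (rest_spec ρ i).symm
  constructor
  · intro ht
    have h0 := ht 0
    rw [← hEnum] at h0
    simp only [Fin.cases_zero] at h0
    have h0v : (σ 0 : ℕ) = n - R + ((ρ 0 : ℕ)) := by
      have := congrArg Fin.val h0
      simpa [valEmb] using this
    refine ⟨h0v, fun t => ?_⟩
    have hts := ht t.succ
    rw [← hEnum] at hts
    simp only [Fin.cases_succ] at hts
    rw [← rest_spec σ (E t)] at hts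
    have hemb : valEmb h' (ρ t.succ) = (σ 0).succAbove (valEmb h (rest ρ t)) := by
      apply Fin.ext
      rw [val_succAbove, hρsucc t]
      split <;> simp only [valEmb, val_succAbove] at * <;> split <;> omega
    rw [hemb] at hts
    exact succAbove_right_injective hts
  · rintro ⟨h0v, ht⟩ t
    rw [← hEnum]
    induction t using Fin.cases with
    | zero =>
      simp only [Fin.cases_zero]
      apply Fin.ext
      simp [valEmb, h0v]
    | succ i =>
      simp only [Fin.cases_succ]
      rw [← rest_spec σ (E i), ht i]
      apply Fin.ext
      rw [val_succAbove, hρsucc i]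
      split <;> simp only [valEmb, val_succAbove] at * <;> split <;> omega

lemma not_occAny_small {β : Perm (Fin m)} (h : m < K + 1) (f : Fin (K+1) → Fin m) :
    ¬ OccAny β f := fun hf => by
  have := Fintype.card_le_of_injective f hf.1.injective
  simp only [Fintype.card_fin] at this
  omega

lemma avoidAll_small (h : m < K + 1) (β : Perm (Fin m)) : AvoidAll K β :=
  fun f => not_occAny_small h f

lemma not_myCond_small (h : m < K + 1) (τ : Perm (Fin (K+1))) (β : Perm (Fin m)) :
    ¬ MyCond τ β := by
  rintro ⟨⟨f, hf, -⟩, -⟩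
  exact not_occAny_small h f hf

lemma myCond_low {σ : Perm (Fin (n+1))} (τ : Perm (Fin (K+1))) (h : n - (σ 0 : ℕ) < K) :
    MyCond τ σ ↔ MyCond τ (rest σ) := by
  constructor
  · rintro ⟨⟨f, hf, huniq⟩, hp⟩
    have h0 : f 0 ≠ 0 := fun h0 => no_occ_zero h f h0 hf
    have hne := occAny_ne_zero hf h0
    have hfg : f = fun i => (((f i).pred (hne i))).succ := funext fun i => by
      simp [Fin.succ_pred]
    set g : Fin (K+1) → Fin n := fun i => (f i).pred (hne i) with hg
    have hgo : OccAny (rest σ) g := (occAny_succ_iff σ g).mp (hfg ▸ hf)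
    refine ⟨⟨g, hgo, ?_⟩, ?_⟩
    · intro g' hg'
      have he := huniq _ ((occAny_succ_iff σ g').mpr hg')
      funext i
      have h2 := congrFun he i
      have h3 := congrFun hfg i
      apply Fin.succ_injective
      rw [h2, h3]
    · intro g' hg'
      exact (pattOccursAt_succ_iff τ σ g').mp (hp _ ((occAny_succ_iff σ g').mpr hg'))
  · rintro ⟨⟨g, hg, huniq⟩, hp⟩
    have hfo : OccAny σ (fun i => (g i).succ) := (occAny_succ_iff σ g).mpr hg
    refine ⟨⟨fun i => (g i).succ, hfo, ?_⟩, ?_⟩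
    · intro f hf
      have h0 : f 0 ≠ 0 := fun h0 => no_occ_zero h f h0 hf
      have hne := occAny_ne_zero hf h0
      have hfg : f = fun i => (((f i).pred (hne i))).succ := funext fun i => by
        simp [Fin.succ_pred]
      have := huniq _ ((occAny_succ_iff σ _).mp (hfg ▸ hf))
      rw [hfg]
      funext i
      rw [congrFun this i]
    · intro f hf
      have h0 : f 0 ≠ 0 := fun h0 => no_occ_zero h f h0 hf
      have hne := occAny_ne_zero hf h0
      have hfg : f = fun i => (((f i).pred (hne i))).succ := funext fun i => by
        simp [Fin.succ_pred]
      rw [hfg]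
      exact (pattOccursAt_succ_iff τ σ _).mpr (hp _ ((occAny_succ_iff σ _).mp (hfg ▸ hf)))

lemma myCond_mid {σ : Perm (Fin (n+1))} {τ : Perm (Fin (K+1))}
    (hτ0 : τ 0 = 0) (h : n - (σ 0 : ℕ) = K) (hK : K ≤ n) :
    MyCond τ σ ↔ AvoidAll K (rest σ) ∧ TopPatt hK (rest τ) (rest σ) := by
  have hple : (σ 0 : ℕ) ≤ n := Fin.is_le _
  have hp : (σ 0 : ℕ) = n - K := by omega
  set f₀ : Fin (K+1) → Fin (n+1) :=
    Fin.cases 0 (fun i => (topEnum hK (rest σ) i).succ) with hf₀def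
  have hf₀0 : f₀ 0 = 0 := rfl
  have hf₀ : OccAny σ f₀ := by
    rw [hf₀def, occAny_zero_iff]
    refine ⟨topEnum_strictMono hK (rest σ), fun i => ?_⟩
    have := topEnum_mem hK (rest σ) i
    omega
  constructor
  · rintro ⟨⟨f, hf, huniq⟩, hpat⟩
    have he : f₀ = f := huniq f₀ hf₀
    constructor
    · intro g hg
      have h1 := huniq _ ((occAny_succ_iff σ g).mpr hg)
      have h2 := congrFun h1 0
      rw [← he] at h2
      exact Fin.succ_ne_zero (g 0) h2
    · exact (patt_zero_iff hτ0 hp hK).mp (hpat f₀ hf₀)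
  · rintro ⟨hav, htp⟩
    have hpat₀ : PattOccursAt τ σ f₀ := (patt_zero_iff hτ0 hp hK).mpr htp
    have huniq : ∀ f, OccAny σ f → f = f₀ := by
      intro f hf
      rcases eq_or_ne (f 0) 0 with h0 | h0
      · exact unique_occ_zero h h0 hf₀0 hf hf₀
      · exfalso
        have hne := occAny_ne_zero hf h0
        have hfg : f = fun i => (((f i).pred (hne i))).succ := funext fun i => by
          simp [Fin.succ_pred]
        exact hav _ ((occAny_succ_iff σ _).mp (hfg ▸ hf))
    exact ⟨⟨f₀, hf₀, huniq⟩, fun f hf => (huniq f hf) ▸ hpat₀⟩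

lemma not_myCond_high {σ : Perm (Fin (n+1))} {τ : Perm (Fin (K+1))}
    (h : K < n - (σ 0 : ℕ)) (hK : 0 < K) : ¬ MyCond τ σ := by
  rintro ⟨⟨f, _, huniq⟩, -⟩
  obtain ⟨f1, f2, hne, h1, h2⟩ := two_occ_zero h hK
  exact hne ((huniq f1 h1).trans (huniq f2 h2).symm)

lemma topPatt_full (hm : m ≤ m) (ρ β : Perm (Fin m)) : TopPatt hm ρ β ↔ β = ρ := by
  have henum : (fun i : Fin m => i) = topEnum hm β :=
    topEnum_unique hm β (fun i => by omega) strictMono_id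
  have hval : ∀ y : Fin m, valEmb hm y = y := fun y => by
    apply Fin.ext; simp [valEmb]
  constructor
  · intro ht
    apply Equiv.ext
    intro t
    have := ht t
    rw [← henum, hval] at this
    exact this
  · rintro rfl t
    rw [← henum, hval]

lemma count_transfer (P : Perm (Fin (n+1)) → Prop) (Q : Fin (n+1) → Perm (Fin n) → Prop)
    (hPQ : ∀ σ, P σ ↔ Q (σ 0) (rest σ)) :
    Nat.card {σ : Perm (Fin (n+1)) // P σ} =
      ∑ p : Fin (n+1), Nat.card {β : Perm (Fin n) // Q p β} := by
  classical
  have e1 : {σ : Perm (Fin (n+1)) // P σ} ≃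
      {x : Fin (n+1) × Perm (Fin n) // Q x.1 x.2} :=
    (Equiv.ofBijective (fun σ : Perm (Fin (n+1)) => ((σ 0, rest σ) : _))
      ⟨peel_inj, peel_surj⟩).subtypeEquiv (fun σ => hPQ σ)
  have e2 := Equiv.subtypeProdEquivSigmaSubtype (fun (p : Fin (n+1)) (β : Perm (Fin n)) => Q p β)
  rw [Nat.card_congr (e1.trans e2), Nat.card_eq_fintype_card, Fintype.card_sigma]
  congr 1
  funext p
  rw [Nat.card_eq_fintype_card]

lemma card_fin_filter {M : ℕ} (P : ℕ → Prop) [DecidablePred P] :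
    (univ.filter fun p : Fin M => P (p : ℕ)).card = ((range M).filter P).card := by
  refine Finset.card_bij (fun p _ => (p : ℕ)) ?_ ?_ ?_
  · intro p hp
    simp only [mem_filter, mem_univ, true_and] at hp
    simp only [mem_filter, mem_range]
    exact ⟨p.isLt, hp⟩
  · intro p _ q _ h
    exact Fin.ext h
  · intro x hx
    simp only [mem_filter, mem_range] at hx
    exact ⟨⟨x, hx.1⟩, by simp only [mem_filter, mem_univ, true_and]; exact hx.2, rfl⟩

lemma nat_card_subtype_false {α : Type*} {P : α → Prop} (h : ∀ a, ¬ P a) :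
    Nat.card {a // P a} = 0 := by
  have : IsEmpty {a // P a} := ⟨fun x => h x.1 x.2⟩
  exact Nat.card_of_isEmpty

/-- The key counting lemma: avoiders of all patterns of `T_{K+1}^1` whose top `r`
values appear in a prescribed relative order. -/
lemma countA (hK : 0 < K) : ∀ m r, ∀ (hrm : r ≤ m) (_ : r ≤ K) (ρ : Perm (Fin r)),
    Nat.card {β : Perm (Fin m) // AvoidAll K β ∧ TopPatt hrm ρ β} =
      (min K m).descFactorial (min K m - r) * K ^ (m - K) := by
  intro m
  induction m with
  | zero =>
    intro r hrm hrK ρ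
    interval_cases r
    have hall : ∀ β : Perm (Fin 0), AvoidAll K β ∧ TopPatt hrm ρ β :=
      fun β => ⟨avoidAll_small (by omega) β, fun t => t.elim0⟩
    rw [Nat.card_congr (Equiv.subtypeUnivEquiv hall)]
    simp [Nat.card_eq_fintype_card, Nat.sub_eq_zero_of_le hK.le]
  | succ m ih =>
    intro r hrm hrK ρ
    classical
    rcases eq_or_lt_of_le hrm with hfull | hlt
    · -- r = m + 1 : the pattern is the whole permutation
      subst hfull
      have hiff : ∀ β : Perm (Fin (m+1)), (AvoidAll K β ∧ TopPatt hrm ρ β) ↔ β = ρ := by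
        intro β
        constructor
        · rintro ⟨-, ht⟩; exact (topPatt_full hrm ρ β).mp ht
        · rintro rfl
          exact ⟨avoidAll_small (by omega) _, (topPatt_full hrm _ _).mpr rfl⟩
      rw [Nat.card_congr (Equiv.subtypeEquivRight hiff), Nat.card_eq_fintype_card,
        Fintype.card_subtype_eq]
      have h1 : min K (m+1) = m + 1 := by omega
      have h2 : m + 1 - K = 0 := by omega
      rw [h1, h2]
      simp
    · have hrm' : r ≤ m := by omega
      cases r with
      | zero =>
        -- no top-pattern constraint
        have hPQ : ∀ σ : Perm (Fin (m+1)), (AvoidAll K σ ∧ TopPatt hrm ρ σ) ↔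
            ((m - ((σ 0 : ℕ)) < K ∧ AvoidAll K (rest σ)) ∧ True) := by
          intro σ
          rw [avoidAll_iff]
          constructor
          · rintro ⟨h1, -⟩; exact ⟨h1, trivial⟩
          · rintro ⟨h1, -⟩; exact ⟨h1, fun t => t.elim0⟩
        rw [count_transfer _ (fun p β => (m - ((p : ℕ)) < K ∧ AvoidAll K β) ∧ True) hPQ]
        have hfib : ∀ p : Fin (m+1), Nat.card {β : Perm (Fin m) //
            (m - ((p : ℕ)) < K ∧ AvoidAll K β) ∧ True} =
            if m - ((p : ℕ)) < K then
              (min K m).descFactorial (min K m) * K ^ (m - K) else 0 := by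
          intro p
          split
          · next hc =>
            have := ih 0 (Nat.zero_le m) (Nat.zero_le K) 1
            simp only [Nat.sub_zero] at this
            rw [← this]
            apply Nat.card_congr (Equiv.subtypeEquivRight _)
            intro β
            constructor
            · rintro ⟨⟨-, h2⟩, -⟩; exact ⟨h2, fun t => t.elim0⟩
            · rintro ⟨h2, -⟩; exact ⟨⟨hc, h2⟩, trivial⟩
          · next hc =>
            exact nat_card_subtype_false (fun β hβ => hc hβ.1.1)
        rw [Finset.sum_congr rfl (fun p _ => hfib p)]
        rw [Finset.sum_ite, Finset.sum_const, Finset.sum_const]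
        simp only [smul_eq_mul, mul_zero, add_zero]
        have hcard : (univ.filter fun p : Fin (m+1) => m - ((p : ℕ)) < K).card
            = min K (m+1) := by
          rw [card_fin_filter (fun x => m - x < K)]
          have : (range (m+1)).filter (fun x => m - x < K)
              = Ico (m + 1 - min K (m+1)) (m+1) := by
            ext x
            simp only [mem_filter, mem_range, mem_Ico]
            omega
          rw [this, Nat.card_Ico]
          omega
        rw [hcard]
        -- arithmetic
        rcases le_or_gt K m with hKm | hKm
        · have h1 : min K m = K := by omega
          have h2 : min K (m+1) = K := by omega
          rw [h1, h2]
          have h3 : m + 1 - K = (m - K) + 1 := by omega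
          rw [h3, pow_succ]
          simp only [Nat.sub_zero]
          ring
        · have h1 : min K m = m := by omega
          have h2 : min K (m+1) = m + 1 := by omega
          have h3 : m + 1 - K = 0 := by omega
          have h4 : m - K = 0 := by omega
          rw [h1, h2, h3, h4]
          simp only [Nat.sub_zero, pow_zero]
          rw [Nat.succ_descFactorial_succ]
          ring
      | succ R =>
        have hR : R ≤ m := by omega
        set v₀ : ℕ := m - R + ((ρ 0 : ℕ)) with hv₀
        have hρ0 : (ρ 0 : ℕ) ≤ R := by omega
        have hv₀le : v₀ ≤ m := by omega
        have hPQ : ∀ σ : Perm (Fin (m+1)), (AvoidAll K σ ∧ TopPatt hrm ρ σ) ↔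
            ((m - ((σ 0 : ℕ)) < K ∧ AvoidAll K (rest σ)) ∧
              (if m - ((σ 0 : ℕ)) < R + 1 then
                ((σ 0 : ℕ) = v₀ ∧ TopPatt hR (rest ρ) (rest σ))
              else TopPatt hrm' ρ (rest σ))) := by
          intro σ
          rw [avoidAll_iff]
          have hple : (σ 0 : ℕ) ≤ m := Fin.is_le _
          split
          · next hc =>
            rw [topPatt_high hR hrm (by omega) ρ]
          · next hc =>
            rw [topPatt_low hrm' hrm (by omega) ρ]
        rw [count_transfer _ (fun p β =>
          (m - ((p : ℕ)) < K ∧ AvoidAll K β) ∧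
            (if m - ((p : ℕ)) < R + 1 then
              ((p : ℕ) = v₀ ∧ TopPatt hR (rest ρ) β)
            else TopPatt hrm' ρ β)) hPQ]
        set A := (min K m).descFactorial (min K m - R) * K ^ (m - K) with hA
        set B := (min K m).descFactorial (min K m - (R+1)) * K ^ (m - K) with hB
        have hfib : ∀ p : Fin (m+1), Nat.card {β : Perm (Fin m) //
            (m - ((p : ℕ)) < K ∧ AvoidAll K β) ∧
              (if m - ((p : ℕ)) < R + 1 then
                ((p : ℕ) = v₀ ∧ TopPatt hR (rest ρ) β)
              else TopPatt hrm' ρ β)} =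
            if m - ((p : ℕ)) < R + 1 then (if (p : ℕ) = v₀ then A else 0)
            else (if m - ((p : ℕ)) < K then B else 0) := by
          intro p
          have hple : (p : ℕ) ≤ m := Fin.is_le _
          split
          · next hc1 =>
            split
            · next hc2 =>
              rw [hA, ← ih R hR (by omega) (rest ρ)]
              apply Nat.card_congr (Equiv.subtypeEquivRight _)
              intro β
              constructor
              · rintro ⟨⟨-, h2⟩, -, h3⟩; exact ⟨h2, h3⟩
              · rintro ⟨h2, h3⟩; exact ⟨⟨by omega, h2⟩, hc2, h3⟩
            · next hc2 =>
              apply nat_card_subtype_false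
              rintro β ⟨-, hιf⟩
              exact hc2 hιf.1
          · next hc1 =>
            split
            · next hc2 =>
              rw [hB, ← ih (R+1) hrm' hrK ρ]
              apply Nat.card_congr (Equiv.subtypeEquivRight _)
              intro β
              constructor
              · rintro ⟨⟨-, h2⟩, h3⟩; exact ⟨h2, h3⟩
              · rintro ⟨h2, h3⟩; exact ⟨⟨hc2, h2⟩, h3⟩
            · next hc2 =>
              apply nat_card_subtype_false
              rintro β ⟨⟨h1, -⟩, -⟩
              exact hc2 h1
        rw [Finset.sum_congr rfl (fun p _ => hfib p)]
        rw [Finset.sum_ite]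
        have e1 : ∑ p ∈ univ.filter (fun p : Fin (m+1) => m - ((p : ℕ)) < R + 1),
            (if (p : ℕ) = v₀ then A else 0) = A := by
          rw [← Finset.sum_filter, Finset.filter_filter]
          have : univ.filter (fun p : Fin (m+1) => m - ((p : ℕ)) < R + 1 ∧ (p : ℕ) = v₀)
              = {(⟨v₀, by omega⟩ : Fin (m+1))} := by
            ext p
            simp only [mem_filter, mem_univ, true_and, mem_singleton]
            constructor
            · rintro ⟨-, h2⟩; exact Fin.ext h2
            · rintro rfl; exact ⟨by simp only [Fin.val_mk]; omega, rfl⟩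
          rw [this, Finset.sum_singleton]
        have e2 : ∑ p ∈ univ.filter (fun p : Fin (m+1) => ¬ (m - ((p : ℕ)) < R + 1)),
            (if m - ((p : ℕ)) < K then B else 0) = (min K (m+1) - (R+1)) * B := by
          rw [← Finset.sum_filter, Finset.filter_filter]
          have : univ.filter (fun p : Fin (m+1) =>
              ¬ (m - ((p : ℕ)) < R + 1) ∧ m - ((p : ℕ)) < K)
              = univ.filter (fun p : Fin (m+1) =>
                (fun x => ¬ (m - x < R + 1) ∧ m - x < K) ((p : ℕ))) := rfl
          rw [this, Finset.sum_const, smul_eq_mul]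
          congr 1
          rw [card_fin_filter (fun x => ¬ (m - x < R + 1) ∧ m - x < K)]
          have : (range (m+1)).filter (fun x => ¬ (m - x < R + 1) ∧ m - x < K)
              = Ico (m + 1 - min K (m+1)) (m - R) := by
            ext x
            simp only [mem_filter, mem_range, mem_Ico]
            omega
          rw [this, Nat.card_Ico]
          omega
        rw [e1, e2]
        -- final arithmetic
        rw [hA, hB]
        rcases le_or_gt K m with hKm | hKm
        · have h1 : min K m = K := by omega
          have h2 : min K (m+1) = K := by omega
          have h3 : m + 1 - K = (m - K) + 1 := by omega
          rw [h1, h2, h3, pow_succ]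
          have h4 : K - R = (K - (R+1)) + 1 := by omega
          have h5 : K.descFactorial (K - R) = (R + 1) * K.descFactorial (K - (R+1)) := by
            rw [h4, Nat.descFactorial_succ]
            have : K - (K - (R+1)) = R + 1 := by omega
            rw [this]
          rw [h5]
          set D := K.descFactorial (K - (R+1)) with hD
          set P := K ^ (m - K) with hP
          have h9 : (R + 1) + (K - (R+1)) = K := by omega
          have expand : (R + 1) * D * P + (K - (R+1)) * (D * P)
              = ((R + 1) + (K - (R+1))) * (D * P) := by ring
          rw [expand, h9]
          ring
        · have h1 : min K m = m := by omega
          have h2 : min K (m+1) = m + 1 := by omega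
          have h3 : m + 1 - K = 0 := by omega
          have h4 : m - K = 0 := by omega
          rw [h1, h2, h3, h4]
          simp only [pow_zero, mul_one]
          rcases eq_or_lt_of_le hR with hRm | hRm
          · -- R = m
            rw [hRm]
            simp [Nat.sub_self]
          · have h6 : m - R = (m - (R+1)) + 1 := by omega
            have h7 : m + 1 - (R + 1) = (m - (R+1)) + 1 := by omega
            rw [h6, h7, Nat.succ_descFactorial_succ, Nat.descFactorial_succ]
            have h8 : m - (m - (R+1)) = R + 1 := by omega
            rw [h8]
            set D := m.descFactorial (m - (R+1)) with hD
            have h9 : (R + 1) + ((m - (R+1)) + 1) = m + 1 := by omega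
            have expand : (R + 1) * D + ((m - (R+1)) + 1) * D
                = ((R + 1) + ((m - (R+1)) + 1)) * D := by ring
            rw [expand, h9]

lemma occAny_of_patt {α : Perm (Fin m)} {f : Fin (K+1) → Fin m} {π : Perm (Fin (K+1))}
    (hπ0 : π 0 = 0) (h : PattOccursAt π α f) : OccAny α f := by
  refine ⟨h.1, fun i hi => ?_⟩
  refine (h.2 0 i).mp ?_
  rw [hπ0]
  exact Fin.pos_iff_ne_zero.mpr (fun hc => hi (π.injective (hc.trans hπ0.symm)))

lemma exists_pattern {α : Perm (Fin m)} {f : Fin (K+1) → Fin m} (hf : OccAny α f) :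
    ∃ ρ : Perm (Fin (K+1)), ρ 0 = 0 ∧ PattOccursAt ρ α f := by
  classical
  have hinj : Function.Injective (fun i : Fin (K+1) => α (f i)) := fun i j h =>
    hf.1.injective (α.injective h)
  set s : Finset (Fin m) := Finset.univ.image (fun i : Fin (K+1) => α (f i)) with hs
  have hcard : s.card = K + 1 := by
    rw [hs, card_image_of_injective _ hinj, card_univ, Fintype.card_fin]
  have hmem : ∀ i, α (f i) ∈ s := fun i => mem_image_of_mem _ (mem_univ i)
  set e := s.orderIsoOfFin hcard with he
  set ρf : Fin (K+1) → Fin (K+1) := fun i => e.symm ⟨α (f i), hmem i⟩ with hρf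
  have hρinj : Function.Injective ρf := by
    intro i j hij
    have := e.symm.injective hij
    exact hinj (Subtype.ext_iff.mp this)
  have hbij : Function.Bijective ρf := Finite.injective_iff_bijective.mp hρinj
  set ρ := Equiv.ofBijective ρf hbij with hρ
  have hlt : ∀ i j, ρ i < ρ j ↔ α (f i) < α (f j) := by
    intro i j
    show ρf i < ρf j ↔ _
    show e.symm ⟨α (f i), hmem i⟩ < e.symm ⟨α (f j), hmem j⟩ ↔ _
    exact (OrderIso.lt_iff_lt e.symm).trans Subtype.mk_lt_mk
  refine ⟨ρ, ?_, hf.1, hlt⟩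
  have hle : ∀ i, ρ 0 ≤ ρ i := by
    intro i
    rcases eq_or_ne i 0 with rfl | hi
    · exact le_refl _
    · exact ((hlt 0 i).mpr (hf.2 i hi)).le
  obtain ⟨i, hi⟩ := ρ.surjective 0
  have := hle i
  rw [hi] at this
  exact le_antisymm this (Fin.zero_le _)

lemma patt_unique {α : Perm (Fin m)} {f : Fin (K+1) → Fin m} {ρ τ : Perm (Fin (K+1))}
    (h1 : PattOccursAt ρ α f) (h2 : PattOccursAt τ α f) : ρ = τ := by
  have hiff : ∀ i j, ρ i < ρ j ↔ τ i < τ j := fun i j => (h1.2 i j).trans (h2.2 i j).symm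
  have hmono : StrictMono (fun t => ρ (τ.symm t)) := by
    intro a b hab
    refine (hiff _ _).mpr ?_
    rwa [Equiv.apply_symm_apply, Equiv.apply_symm_apply]
  have hid : (fun t => ρ (τ.symm t)) = id := by
    apply (StrictMono.range_inj hmono strictMono_id).mp
    rw [Set.range_id]
    exact Set.range_eq_univ.mpr fun y => ⟨τ (ρ.symm y), by simp⟩
  apply Equiv.ext
  intro t
  have := congrFun hid (τ t)
  simpa using this

lemma tkm_iff (π : Perm (Fin (K+1))) : π ∈ Tkm (K+1) 1 ↔ π 0 = 0 := by
  constructor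
  · intro h
    have := h 0 rfl
    exact Fin.ext (by simp only [Fin.val_zero]; omega)
  · intro h i hi
    have hi0 : i = 0 := Fin.ext hi
    rw [hi0, h]
    simp

lemma cond_iff (τ : Perm (Fin (K+1))) (hτ0 : τ 0 = 0) (α : Perm (Fin m)) :
    ((∀ π ∈ Tkm (K+1) 1, π ≠ τ → Avoids π α) ∧ ContainsExactlyOnce τ α) ↔ MyCond τ α := by
  constructor
  · rintro ⟨hav, f, hf, huf⟩
    have hoccf : OccAny α f := occAny_of_patt hτ0 hf
    have key : ∀ g, OccAny α g → g = f := by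
      intro g hg
      obtain ⟨ρ, hρ0, hρg⟩ := exists_pattern hg
      rcases eq_or_ne ρ τ with rfl | hne
      · exact huf g hρg
      · exact absurd ⟨g, hρg⟩ (hav ρ ((tkm_iff ρ).mpr hρ0) hne)
    exact ⟨⟨f, hoccf, key⟩, fun g hg => (key g hg) ▸ hf⟩
  · rintro ⟨⟨f, hf, huniq⟩, hpat⟩
    have hfτ : PattOccursAt τ α f := hpat f hf
    refine ⟨?_, f, hfτ, ?_⟩
    · intro π hπ hne hcon
      obtain ⟨g, hg⟩ := hcon
      have hgo : OccAny α g := occAny_of_patt ((tkm_iff π).mp hπ) hg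
      have hgf : g = f := huniq g hgo
      subst hgf
      exact hne (patt_unique hg (hpat g hgo))
    · intro g hg
      exact huniq g (occAny_of_patt hτ0 hg)

lemma countMain (hK : 0 < K) (τ : Perm (Fin (K+1))) (hτ0 : τ 0 = 0) :
    ∀ n, Nat.card {α : Perm (Fin n) // MyCond τ α} = (n - K) * K ^ (n - K - 1) := by
  intro n
  induction n with
  | zero =>
    rw [nat_card_subtype_false (not_myCond_small (by omega) τ)]
    simp
  | succ n ih =>
    classical
    rcases lt_or_ge n K with hnK | hnK
    · rw [nat_card_subtype_false (not_myCond_small (by omega) τ)]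
      have : n + 1 - K = 0 := by omega
      rw [this]
      simp
    · -- n ≥ K
      have hPQ : ∀ σ : Perm (Fin (n+1)), MyCond τ σ ↔
          (if n - ((σ 0 : ℕ)) < K then MyCond τ (rest σ)
           else if n - ((σ 0 : ℕ)) = K then
             (AvoidAll K (rest σ) ∧ TopPatt hnK (rest τ) (rest σ))
           else False) := by
        intro σ
        split
        · next hc => exact myCond_low τ hc
        · next hc =>
          split
          · next hc2 => exact myCond_mid hτ0 hc2 hnK
          · next hc2 =>
            simp only [iff_false]
            exact not_myCond_high (by omega) hK
      rw [count_transfer _ (fun p β =>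
          (if n - ((p : ℕ)) < K then MyCond τ β
           else if n - ((p : ℕ)) = K then (AvoidAll K β ∧ TopPatt hnK (rest τ) β)
           else False)) hPQ]
      have hT := countA hK n K hnK (le_refl K) (rest τ)
      have hmin : min K n = K := by omega
      rw [hmin, Nat.sub_self, Nat.descFactorial_zero, one_mul] at hT
      have hfib : ∀ p : Fin (n+1), Nat.card {β : Perm (Fin n) //
          (if n - ((p : ℕ)) < K then MyCond τ β
           else if n - ((p : ℕ)) = K then (AvoidAll K β ∧ TopPatt hnK (rest τ) β)
           else False)} =
          if n - ((p : ℕ)) < K then (n - K) * K ^ (n - K - 1)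
          else if n - ((p : ℕ)) = K then K ^ (n - K) else 0 := by
        intro p
        split
        · next hc => exact ih
        · next hc =>
          split
          · next hc2 => exact hT
          · next hc2 => exact nat_card_subtype_false (fun β hβ => hβ)
      rw [Finset.sum_congr rfl (fun p _ => hfib p)]
      rw [Finset.sum_ite]
      have e1 : ∑ _p ∈ univ.filter (fun p : Fin (n+1) => n - ((p : ℕ)) < K),
          (n - K) * K ^ (n - K - 1) = K * ((n - K) * K ^ (n - K - 1)) := by
        rw [Finset.sum_const, smul_eq_mul]
        congr 1
        rw [card_fin_filter (fun x => n - x < K)]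
        have : (range (n+1)).filter (fun x => n - x < K) = Ico (n + 1 - K) (n+1) := by
          ext x
          simp only [mem_filter, mem_range, mem_Ico]
          omega
        rw [this, Nat.card_Ico]
        omega
      have e2 : ∑ p ∈ univ.filter (fun p : Fin (n+1) => ¬ (n - ((p : ℕ)) < K)),
          (if n - ((p : ℕ)) = K then K ^ (n - K) else 0) = K ^ (n - K) := by
        rw [← Finset.sum_filter, Finset.filter_filter]
        have : univ.filter (fun p : Fin (n+1) => ¬ (n - ((p : ℕ)) < K) ∧ n - ((p : ℕ)) = K)
            = {(⟨n - K, by omega⟩ : Fin (n+1))} := by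
          ext p
          have hple : (p : ℕ) ≤ n := Fin.is_le _
          simp only [mem_filter, mem_univ, true_and, mem_singleton]
          constructor
          · rintro ⟨-, h2⟩; exact Fin.ext (by simp only [Fin.val_mk]; omega)
          · rintro rfl; simp only [Fin.val_mk]; omega
        rw [this, Finset.sum_singleton]
      rw [e1, e2]
      -- arithmetic
      rcases eq_or_lt_of_le hnK with hEq | hLt
      · rw [← hEq]
        simp [Nat.sub_self]
      · obtain ⟨s, hs⟩ : ∃ s, n - K = s + 1 := ⟨n - K - 1, by omega⟩
        have h1 : n - K - 1 = s := by omega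
        have h2 : n + 1 - K = s + 2 := by omega
        have h3 : n + 1 - K - 1 = s + 1 := by omega
        rw [h3, h2, h1, hs]
        ring

end Stmt6

theorem stmt6 (k n : ℕ) (hk : 3 ≤ k) (hkn : k ≤ n)
    (τ : Equiv.Perm (Fin k)) (hτ : τ ∈ Tkm k 1) :
    Set.ncard {α : Equiv.Perm (Fin n) |
        (∀ σ ∈ Tkm k 1, σ ≠ τ → Avoids σ α) ∧ ContainsExactlyOnce τ α}
      = (n + 1 - k) * (k - 1) ^ (n - k) := by
  obtain ⟨K, rfl⟩ : ∃ K, k = K + 1 := ⟨k - 1, by omega⟩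
  have hK : 0 < K := by omega
  have hτ0 : τ 0 = 0 := by
    have := hτ 0 rfl
    exact Fin.ext (by simp only [Fin.val_zero]; omega)
  have hset : {α : Equiv.Perm (Fin n) |
      (∀ σ ∈ Tkm (K+1) 1, σ ≠ τ → Avoids σ α) ∧ ContainsExactlyOnce τ α}
      = {α : Equiv.Perm (Fin n) | Stmt6.MyCond τ α} :=
    Set.ext fun α => Stmt6.cond_iff τ hτ0 α
  rw [hset, ← Nat.card_coe_set_eq]
  have := Stmt6.countMain hK τ hτ0 n
  rw [show (Nat.card {α : Equiv.Perm (Fin n) | Stmt6.MyCond τ α} : ℕ)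
      = Nat.card {α : Equiv.Perm (Fin n) // Stmt6.MyCond τ α} from rfl, this]
  have b1 : n + 1 - (K + 1) = n - K := by omega
  have b2 : K + 1 - 1 = K := by omega
  have b3 : n - (K + 1) = n - K - 1 := by omega
  rw [b1, b2, b3]
end

section
/- The number of permutations of {1,…,n} (n ≥ 3) that avoid the pattern 123 and contain the pattern 132 exactly once equals (n-2)·2^(n-3). -/
/-! Write a permutation as `cons p β`: first entry `p`, followed by entries in the relative order
of `β`. Its occurrences of `123` and `132` are those of `β` together with those at position `0`,
which use two later entries above `p`. Hence a permutation avoiding both patterns starts with one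
of its two largest values, and there are `2 ^ (n - 1)` of them. A permutation avoiding `123` with a
single `132` starts with one of its three largest values: with one of the largest two, `β` is again
such a permutation; with the third largest, the unique `132` starts at position `0`, so `β` avoids
both patterns and must start with its maximum. So the number `s n` of the latter satisfies
`s (n + 1) = 2 s n + 2 ^ (n - 2)` and `s 2 = 0`. -/

open Equiv Function

theorem existsUnique_iff_of_injective {α β : Type*} {f : α → β} (hf : Injective f)
    {p : α → Prop} {q : β → Prop} (h : ∀ y, q y ↔ ∃ x, f x = y ∧ p x) :
    (∃! y, q y) ↔ ∃! x, p x := by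
  constructor
  · rintro ⟨_, hy, huniq⟩
    obtain ⟨x, rfl, hx⟩ := (h _).1 hy
    exact ⟨x, hx, fun x' hx' ↦ hf (huniq _ ((h _).2 ⟨x', rfl, hx'⟩))⟩
  · rintro ⟨x, hx, huniq⟩
    refine ⟨f x, (h _).2 ⟨x, rfl, hx⟩, fun y hy ↦ ?_⟩
    obtain ⟨x', rfl, hx'⟩ := (h y).1 hy
    rw [huniq x' hx']

namespace PatternAvoidance

variable {n N : ℕ}

def IsOcc123 (α : Perm (Fin n)) (t : Fin n × Fin n × Fin n) : Prop :=
  t.1 < t.2.1 ∧ t.2.1 < t.2.2 ∧ α t.1 < α t.2.1 ∧ α t.2.1 < α t.2.2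

def IsOcc132 (α : Perm (Fin n)) (t : Fin n × Fin n × Fin n) : Prop :=
  t.1 < t.2.1 ∧ t.2.1 < t.2.2 ∧ α t.1 < α t.2.2 ∧ α t.2.2 < α t.2.1

def Avoids123And132 (α : Perm (Fin n)) : Prop :=
  ¬∃ t, IsOcc123 α t ∨ IsOcc132 α t

def Avoids123Unique132 (α : Perm (Fin n)) : Prop :=
  (¬∃ t, IsOcc123 α t) ∧ ∃! t, IsOcc132 α t

theorem isOcc123_or_isOcc132_iff (α : Perm (Fin n)) (t : Fin n × Fin n × Fin n) :
    IsOcc123 α t ∨ IsOcc132 α t ↔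
      t.1 < t.2.1 ∧ t.2.1 < t.2.2 ∧ α t.1 < α t.2.1 ∧ α t.1 < α t.2.2 := by
  have hne : α t.2.1 ≠ α t.2.2 ↔ t.2.1 ≠ t.2.2 := α.injective.ne_iff
  unfold IsOcc123 IsOcc132
  constructor
  · rintro (⟨h₁, h₂, h₃, h₄⟩ | ⟨h₁, h₂, h₃, h₄⟩)
    exacts [⟨h₁, h₂, h₃, h₃.trans h₄⟩, ⟨h₁, h₂, h₃.trans h₄, h₃⟩]
  · rintro ⟨h₁, h₂, h₃, h₄⟩
    rcases lt_or_gt_of_ne (hne.2 h₂.ne) with h | h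
    exacts [Or.inl ⟨h₁, h₂, h₃, h⟩, Or.inr ⟨h₁, h₂, h₄, h⟩]

def succTriple (t : Fin N × Fin N × Fin N) : Fin (N + 1) × Fin (N + 1) × Fin (N + 1) :=
  (t.1.succ, t.2.1.succ, t.2.2.succ)

theorem succTriple_injective : Injective (succTriple (N := N)) := by
  rintro ⟨a, b, c⟩ ⟨a', b', c'⟩ h
  simpa [succTriple] using h

theorem succTriple_or_zero {t : Fin (N + 1) × Fin (N + 1) × Fin (N + 1)}
    (h₁ : t.1 < t.2.1) (h₂ : t.2.1 < t.2.2) :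
    (∃ t', succTriple t' = t) ∨ ∃ j k : Fin N, j < k ∧ t = (0, j.succ, k.succ) := by
  obtain ⟨a, b, c⟩ := t
  obtain ⟨b, rfl⟩ := Fin.exists_succ_eq_of_ne_zero (Fin.ne_zero_of_lt h₁)
  obtain ⟨c, rfl⟩ := Fin.exists_succ_eq_of_ne_zero (Fin.ne_zero_of_lt h₂)
  rcases Fin.eq_zero_or_eq_succ a with rfl | ⟨a, rfl⟩
  · exact Or.inr ⟨b, c, Fin.succ_lt_succ_iff.1 h₂, rfl⟩
  · exact Or.inl ⟨(a, b, c), rfl⟩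

/-- The permutation with first entry `p` whose remaining entries are in the relative order
of `β`. -/
def cons (p : Fin (N + 1)) (β : Perm (Fin N)) : Perm (Fin (N + 1)) :=
  ((finSuccEquiv N).trans β.optionCongr).trans (finSuccEquiv' p).symm

@[simp] theorem cons_zero (p : Fin (N + 1)) (β : Perm (Fin N)) : cons p β 0 = p := by
  simp [cons]

@[simp] theorem cons_succ (p : Fin (N + 1)) (β : Perm (Fin N)) (i : Fin N) :
    cons p β i.succ = p.succAbove (β i) := by
  simp [cons, finSuccEquiv'_symm_some]

theorem cons_injective : Injective fun x : Fin (N + 1) × Perm (Fin N) ↦ cons x.1 x.2 := by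
  rintro ⟨p, β⟩ ⟨q, γ⟩ h
  have hpq : p = q := by simpa using congr($h 0)
  subst hpq
  refine Prod.ext rfl <| Equiv.ext fun i ↦ p.succAbove_right_injective ?_
  simpa using congr($h i.succ)

noncomputable def consEquiv (N : ℕ) : Fin (N + 1) × Perm (Fin N) ≃ Perm (Fin (N + 1)) :=
  Equiv.ofBijective _ <| (Fintype.bijective_iff_injective_and_card _).2
    ⟨cons_injective, by simp [Fintype.card_perm, Nat.factorial_succ]⟩

theorem card_eq_sum_card_cons (P : Perm (Fin (N + 1)) → Prop) :
    Nat.card {α // P α} = ∑ p, Nat.card {β // P (cons p β)} := by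
  rw [← Nat.card_sigma]
  exact Nat.card_congr <| ((consEquiv N).subtypeEquiv fun _ ↦ Iff.rfl).symm.trans
    (subtypeProdEquivSigmaSubtype fun p β ↦ P (cons p β))

section cons

variable (p : Fin (N + 1)) (β : Perm (Fin N))

theorem cons_succ_lt_cons_succ_iff (i j : Fin N) :
    cons p β i.succ < cons p β j.succ ↔ β i < β j := by
  simp [Fin.succAbove_lt_succAbove_iff]

theorem cons_zero_lt_cons_succ_iff (i : Fin N) :
    cons p β 0 < cons p β i.succ ↔ (p : ℕ) ≤ β i := by
  simp [Fin.lt_succAbove_iff_le_castSucc, Fin.le_def]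

theorem isOcc123_cons_succTriple (t : Fin N × Fin N × Fin N) :
    IsOcc123 (cons p β) (succTriple t) ↔ IsOcc123 β t := by
  simp only [IsOcc123, succTriple, Fin.succ_lt_succ_iff, cons_succ_lt_cons_succ_iff]

theorem isOcc132_cons_succTriple (t : Fin N × Fin N × Fin N) :
    IsOcc132 (cons p β) (succTriple t) ↔ IsOcc132 β t := by
  simp only [IsOcc132, succTriple, Fin.succ_lt_succ_iff, cons_succ_lt_cons_succ_iff]

theorem isOcc123_cons_zero_iff (j k : Fin N) :
    IsOcc123 (cons p β) (0, j.succ, k.succ) ↔ j < k ∧ (p : ℕ) ≤ β j ∧ β j < β k := by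
  simp only [IsOcc123, Fin.succ_pos, true_and, Fin.succ_lt_succ_iff, cons_succ_lt_cons_succ_iff,
    cons_zero_lt_cons_succ_iff]

theorem isOcc132_cons_zero_iff (j k : Fin N) :
    IsOcc132 (cons p β) (0, j.succ, k.succ) ↔ j < k ∧ (p : ℕ) ≤ β k ∧ β k < β j := by
  simp only [IsOcc132, Fin.succ_pos, true_and, Fin.succ_lt_succ_iff, cons_succ_lt_cons_succ_iff,
    cons_zero_lt_cons_succ_iff]

theorem eq_of_le_apply (hp : N ≤ (p : ℕ) + 1) {j k : Fin N} (hj : (p : ℕ) ≤ β j)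
    (hk : (p : ℕ) ≤ β k) : j = k :=
  β.injective <| Fin.ext <| by omega

theorem exists_occ_cons_of_le_apply {j k : Fin N} (hjk : j ≠ k) (hj : (p : ℕ) ≤ β j)
    (hk : (p : ℕ) ≤ β k) : ∃ t, IsOcc123 (cons p β) t ∨ IsOcc132 (cons p β) t := by
  wlog h : j < k generalizing j k
  · exact this hjk.symm hk hj (lt_of_le_of_ne (not_lt.1 h) hjk.symm)
  exact ⟨(0, j.succ, k.succ), (isOcc123_or_isOcc132_iff _ _).2 ⟨Fin.succ_pos j,
    Fin.succ_lt_succ_iff.2 h, (cons_zero_lt_cons_succ_iff p β j).2 hj,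
    (cons_zero_lt_cons_succ_iff p β k).2 hk⟩⟩

/-- If at most one value of `β` lies above `p`, no occurrence of `123` or `132` in `cons p β`
uses position `0`. -/
theorem isOcc123_cons_iff_of_le (hp : N ≤ (p : ℕ) + 1)
    (t : Fin (N + 1) × Fin (N + 1) × Fin (N + 1)) :
    IsOcc123 (cons p β) t ↔ ∃ t', succTriple t' = t ∧ IsOcc123 β t' := by
  refine ⟨fun h ↦ ?_, fun ⟨t', ht', h⟩ ↦ ht' ▸ (isOcc123_cons_succTriple p β t').2 h⟩
  rcases succTriple_or_zero h.1 h.2.1 with ⟨t', rfl⟩ | ⟨j, k, hjk, rfl⟩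
  · exact ⟨t', rfl, (isOcc123_cons_succTriple p β t').1 h⟩
  · obtain ⟨-, hj, hβ⟩ := (isOcc123_cons_zero_iff p β j k).1 h
    exact absurd (eq_of_le_apply p β hp hj (hj.trans (Fin.lt_def.1 hβ).le)) hjk.ne

theorem isOcc132_cons_iff_of_le (hp : N ≤ (p : ℕ) + 1)
    (t : Fin (N + 1) × Fin (N + 1) × Fin (N + 1)) :
    IsOcc132 (cons p β) t ↔ ∃ t', succTriple t' = t ∧ IsOcc132 β t' := by
  refine ⟨fun h ↦ ?_, fun ⟨t', ht', h⟩ ↦ ht' ▸ (isOcc132_cons_succTriple p β t').2 h⟩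
  rcases succTriple_or_zero h.1 h.2.1 with ⟨t', rfl⟩ | ⟨j, k, hjk, rfl⟩
  · exact ⟨t', rfl, (isOcc132_cons_succTriple p β t').1 h⟩
  · obtain ⟨-, hk, hβ⟩ := (isOcc132_cons_zero_iff p β j k).1 h
    exact absurd (eq_of_le_apply p β hp (hk.trans (Fin.lt_def.1 hβ).le) hk) hjk.ne

theorem avoids123Unique132_cons_iff_of_le (hp : N ≤ (p : ℕ) + 1) :
    Avoids123Unique132 (cons p β) ↔ Avoids123Unique132 β := by
  unfold Avoids123Unique132
  rw [existsUnique_iff_of_injective succTriple_injective (isOcc132_cons_iff_of_le p β hp)]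
  simp only [isOcc123_cons_iff_of_le p β hp]
  rw [exists_comm]
  simp only [exists_eq_left']

theorem avoids123And132_cons_iff :
    Avoids123And132 (cons p β) ↔ N ≤ (p : ℕ) + 1 ∧ Avoids123And132 β := by
  unfold Avoids123And132
  constructor
  · intro h
    refine ⟨?_, fun ⟨t, ht⟩ ↦ h ⟨succTriple t, ?_⟩⟩
    · by_contra! hp
      refine h (exists_occ_cons_of_le_apply p β (j := β.symm ⟨N - 1, by omega⟩)
        (k := β.symm ⟨N - 2, by omega⟩) ?_ ?_ ?_) <;> simp <;> omega
    · rwa [isOcc123_cons_succTriple, isOcc132_cons_succTriple]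
  · rintro ⟨hp, hβ⟩
    rintro ⟨t, h | h⟩
    · obtain ⟨t', -, h'⟩ := (isOcc123_cons_iff_of_le p β hp t).1 h
      exact hβ ⟨t', .inl h'⟩
    · obtain ⟨t', -, h'⟩ := (isOcc132_cons_iff_of_le p β hp t).1 h
      exact hβ ⟨t', .inr h'⟩

theorem lt_of_not_isOcc123_cons (h : ¬∃ t, IsOcc123 (cons p β) t) {j k : Fin N}
    (hj : (p : ℕ) ≤ β j) (hjk : β j < β k) : k < j := by
  rcases lt_trichotomy j k with hlt | rfl | hgt
  · exact absurd ⟨_, (isOcc123_cons_zero_iff p β j k).2 ⟨hlt, hj, hjk⟩⟩ h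
  · exact absurd hjk (lt_irrefl _)
  · exact hgt

/-- With three values of `β` above `p`, avoiding `123` forces two occurrences of `132`
at position `0`. -/
theorem not_avoids123Unique132_cons (hp : (p : ℕ) + 3 ≤ N) :
    ¬Avoids123Unique132 (cons p β) := by
  rintro ⟨h123, huniq⟩
  set a := β.symm ⟨N - 1, by omega⟩
  set b := β.symm ⟨N - 2, by omega⟩
  set c := β.symm ⟨N - 3, by omega⟩
  have hab : a < b := lt_of_not_isOcc123_cons p β h123 (by simp [b]; omega)
    (by simp [a, b, Fin.lt_def]; omega)
  have hbc : b < c := lt_of_not_isOcc123_cons p β h123 (by simp [c]; omega)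
    (by simp [b, c, Fin.lt_def]; omega)
  have hb := (isOcc132_cons_zero_iff p β a b).2 ⟨hab, by simp [b]; omega,
    by simp [a, b, Fin.lt_def]; omega⟩
  have hc := (isOcc132_cons_zero_iff p β a c).2 ⟨hab.trans hbc, by simp [c]; omega,
    by simp [a, c, Fin.lt_def]; omega⟩
  have := huniq.unique hb hc
  simp only [Prod.mk.injEq, Fin.succ_inj] at this
  exact hbc.ne this.2.2

end cons

theorem exists_cons_eq (α : Perm (Fin (N + 1))) : ∃ β, cons (α 0) β = α := by
  obtain ⟨⟨p, β⟩, rfl⟩ := (consEquiv N).surjective α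
  exact ⟨β, by simp [consEquiv]⟩

theorem Avoids123And132.le_apply_zero {α : Perm (Fin (N + 1))} (h : Avoids123And132 α) :
    N ≤ (α 0 : ℕ) + 1 := by
  obtain ⟨β, hβ⟩ := exists_cons_eq α
  rw [← hβ, avoids123And132_cons_iff] at h
  exact h.1

section twoAbove

variable {K : ℕ} (p : Fin (K + 2)) (β : Perm (Fin (K + 1)))

theorem Avoids123Unique132.avoids123And132_of_cons (hp : (p : ℕ) + 1 = K)
    (h : Avoids123Unique132 (cons p β)) : Avoids123And132 β ∧ β 0 = Fin.last K := by
  obtain ⟨h123, huniq⟩ := h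
  set a := β.symm (Fin.last K)
  set b := β.symm ⟨K - 1, by omega⟩
  have hab : a < b := lt_of_not_isOcc123_cons p β h123 (by simp [b]; omega)
    (by simp [a, b, Fin.lt_def]; omega)
  have hocc := (isOcc132_cons_zero_iff p β a b).2 ⟨hab, by simp [b]; omega,
    by simp [a, b, Fin.lt_def]; omega⟩
  have hβ : Avoids123And132 β := by
    rintro ⟨t, ht | ht⟩
    · exact h123 ⟨_, (isOcc123_cons_succTriple p β t).2 ht⟩
    · have := huniq.unique ((isOcc132_cons_succTriple p β t).2 ht) hocc
      exact Fin.succ_ne_zero _ congr(Prod.fst $this)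
  refine ⟨hβ, Fin.ext ?_⟩
  have h0 := hβ.le_apply_zero
  have hb0 : β 0 ≠ ⟨K - 1, by omega⟩ := fun h ↦
    Fin.not_lt_zero a (by rwa [show b = 0 by simp [b, ← h]] at hab)
  have := Fin.val_ne_of_ne hb0
  simp only at this
  rw [Fin.val_last]
  omega

theorem avoids123Unique132_cons_of_avoids123And132 (hp : (p : ℕ) + 1 = K)
    (hβ : Avoids123And132 β) (h0 : β 0 = Fin.last K) : Avoids123Unique132 (cons p β) := by
  set b := β.symm ⟨K - 1, by omega⟩
  have hb : (β b : ℕ) = K - 1 := by simp [b]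
  have hb0 : 0 < b := Fin.pos_iff_ne_zero.2 fun h ↦ by
    rw [h, h0, Fin.val_last] at hb
    omega
  refine ⟨?_, ⟨(0, (0 : Fin (K + 1)).succ, b.succ), ?_, ?_⟩⟩
  · rintro ⟨t, ht⟩
    rcases succTriple_or_zero ht.1 ht.2.1 with ⟨t', rfl⟩ | ⟨j, k, hjk, rfl⟩
    · exact hβ ⟨t', .inl ((isOcc123_cons_succTriple p β t').1 ht)⟩
    · obtain ⟨-, hj, hβjk⟩ := (isOcc123_cons_zero_iff p β j k).1 ht
      have hk : β k = β 0 := by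
        rw [h0, Fin.ext_iff, Fin.val_last]
        have := Fin.lt_def.1 hβjk
        omega
      exact (Fin.not_lt_zero j) (β.injective hk ▸ hjk)
  · exact (isOcc132_cons_zero_iff p β 0 b).2 ⟨hb0, by omega,
      by simp [h0, Fin.lt_def, hb]; omega⟩
  · intro t ht
    rcases succTriple_or_zero ht.1 ht.2.1 with ⟨t', rfl⟩ | ⟨j, k, -, rfl⟩
    · exact absurd ⟨t', .inr ((isOcc132_cons_succTriple p β t').1 ht)⟩ hβ
    · obtain ⟨-, hk, hβjk⟩ := (isOcc132_cons_zero_iff p β j k).1 ht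
      have := Fin.lt_def.1 hβjk
      have hj : β j = β 0 := by
        rw [h0, Fin.ext_iff, Fin.val_last]
        omega
      have hk : β k = β b := Fin.ext (by omega)
      rw [β.injective hj, β.injective hk]

theorem avoids123Unique132_cons_iff_of_add_one_eq (hp : (p : ℕ) + 1 = K) :
    Avoids123Unique132 (cons p β) ↔ Avoids123And132 β ∧ β 0 = Fin.last K :=
  ⟨(·.avoids123And132_of_cons p β hp),
    fun h ↦ avoids123Unique132_cons_of_avoids123And132 p β hp h.1 h.2⟩

end twoAbove

theorem card_avoids123And132_add_two (K : ℕ) :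
    Nat.card {α : Perm (Fin (K + 2)) // Avoids123And132 α} =
      2 * Nat.card {β : Perm (Fin (K + 1)) // Avoids123And132 β} := by
  rw [card_eq_sum_card_cons, Fin.sum_univ_castSucc, Fin.sum_univ_castSucc]
  have hlow (i : Fin K) :
      Nat.card {β // Avoids123And132 (cons i.castSucc.castSucc β)} = 0 :=
    Nat.card_eq_zero.2 <| .inl <| isEmpty_subtype _ |>.2 fun β h ↦ by
      have := ((avoids123And132_cons_iff _ β).1 h).1
      simp at this
      omega
  rw [Finset.sum_eq_zero fun i _ ↦ hlow i]
  simp [avoids123And132_cons_iff]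
  ring

theorem card_avoids123And132 (K : ℕ) :
    Nat.card {α : Perm (Fin (K + 1)) // Avoids123And132 α} = 2 ^ K := by
  induction K with
  | zero =>
    have hall (α : Perm (Fin 1)) : Avoids123And132 α := fun ⟨t, ht⟩ ↦
      ((isOcc123_or_isOcc132_iff α t).1 ht).1.ne (Subsingleton.elim _ _)
    simp [Nat.card_congr (Equiv.subtypeUnivEquiv hall)]
  | succ K ih => rw [card_avoids123And132_add_two, ih, pow_succ, mul_comm]

theorem card_avoids123And132_apply_zero_eq_last (K : ℕ) :
    Nat.card {β : Perm (Fin (K + 1)) // Avoids123And132 β ∧ β 0 = Fin.last K} =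
      Nat.card {γ : Perm (Fin K) // Avoids123And132 γ} := by
  rw [card_eq_sum_card_cons, Finset.sum_eq_single (Fin.last K)]
  · simp [avoids123And132_cons_iff]
  · intro p _ hp
    simp [hp]
  · simp

theorem card_avoids123Unique132_two :
    Nat.card {α : Perm (Fin 2) // Avoids123Unique132 α} = 0 := by
  refine Nat.card_eq_zero.2 <| .inl <| (isEmpty_subtype _).2 ?_
  rintro α ⟨-, t, ⟨h₁, h₂, -⟩, -⟩
  rw [Fin.lt_def] at h₁ h₂
  omega

theorem card_avoids123Unique132_add_three (K : ℕ) :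
    Nat.card {α : Perm (Fin (K + 3)) // Avoids123Unique132 α} =
      2 * Nat.card {β : Perm (Fin (K + 2)) // Avoids123Unique132 β} + 2 ^ K := by
  rw [card_eq_sum_card_cons, Fin.sum_univ_castSucc, Fin.sum_univ_castSucc, Fin.sum_univ_castSucc]
  have hlow (i : Fin K) :
      Nat.card {β // Avoids123Unique132 (cons i.castSucc.castSucc.castSucc β)} = 0 :=
    Nat.card_eq_zero.2 <| .inl <| isEmpty_subtype _ |>.2 fun β ↦
      not_avoids123Unique132_cons _ β (by simp)
  have hmid : Nat.card {β // Avoids123Unique132 (cons (Fin.last K).castSucc.castSucc β)} =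
      2 ^ K := by
    rw [Nat.card_congr (Equiv.subtypeEquivRight fun β ↦
      avoids123Unique132_cons_iff_of_add_one_eq _ β (by simp)),
      card_avoids123And132_apply_zero_eq_last, card_avoids123And132]
  have htop (p : Fin (K + 3)) (hp : K + 1 ≤ (p : ℕ)) :
      Nat.card {β // Avoids123Unique132 (cons p β)} =
        Nat.card {β : Perm (Fin (K + 2)) // Avoids123Unique132 β} :=
    Nat.card_congr (Equiv.subtypeEquivRight fun β ↦
      avoids123Unique132_cons_iff_of_le p β (by omega))
  rw [Finset.sum_eq_zero fun i _ ↦ hlow i, hmid, htop _ (by simp), htop _ (by simp)]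
  ring

theorem card_avoids123Unique132 (M : ℕ) :
    Nat.card {α : Perm (Fin (M + 3)) // Avoids123Unique132 α} = (M + 1) * 2 ^ M := by
  induction M with
  | zero => simp [card_avoids123Unique132_add_three, card_avoids123Unique132_two]
  | succ M ih =>
    rw [card_avoids123Unique132_add_three, ih]
    ring

end PatternAvoidance

theorem stmt7 (n : ℕ) (hn : 3 ≤ n) :
    Set.ncard {α : Equiv.Perm (Fin n) |
        (¬ ∃ i j l : Fin n, i < j ∧ j < l ∧ α i < α j ∧ α j < α l) ∧
        (∃! t : Fin n × Fin n × Fin n,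
          t.1 < t.2.1 ∧ t.2.1 < t.2.2 ∧ α t.1 < α t.2.2 ∧ α t.2.2 < α t.2.1)}
      = (n - 2) * 2 ^ (n - 3) := by
  obtain ⟨M, rfl⟩ := Nat.exists_eq_add_of_le' hn
  rw [← Nat.card_coe_set_eq, show M + 3 - 2 = M + 1 by omega, Nat.add_sub_cancel,
    ← PatternAvoidance.card_avoids123Unique132]
  simp only [PatternAvoidance.Avoids123Unique132, PatternAvoidance.IsOcc123,
    PatternAvoidance.IsOcc132, Prod.exists]
  rfl
end

section
/- The number of permutations of {1,…,n} (n ≥ 3) that avoid the pattern 132 and contain the pattern 123 exactly once equals (n-2)·2^(n-3). -/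
open Finset

/-- number of later positions with larger value -/
def Dst {n : ℕ} (α : Equiv.Perm (Fin n)) (i : Fin n) : ℕ :=
  (Finset.univ.filter (fun j => i < j ∧ α i < α j)).card

def Pprop {n : ℕ} (α : Equiv.Perm (Fin n)) : Prop :=
  ∃ i : Fin n, ∃ h : (i : ℕ) + 1 < n, Dst α i = 2 ∧ (∀ a, a ≠ i → Dst α a ≤ 1) ∧
    Dst α ⟨(i : ℕ) + 1, h⟩ = 1

section Bij
variable {n : ℕ}

def gfun (p : Fin (n+1)) (e : Equiv.Perm (Fin n)) : Fin (n+1) → Fin (n+1) :=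
  Fin.cons p (fun j => p.succAbove (e j))

lemma gfun_inj (p : Fin (n+1)) (e : Equiv.Perm (Fin n)) : Function.Injective (gfun p e) := by
  intro x y hxy
  simp only [gfun] at hxy
  induction x using Fin.cases with
  | zero =>
    induction y using Fin.cases with
    | zero => rfl
    | succ j =>
      rw [Fin.cons_zero, Fin.cons_succ] at hxy
      exact absurd hxy.symm (Fin.succAbove_ne p _)
  | succ i =>
    induction y using Fin.cases with
    | zero =>
      rw [Fin.cons_zero, Fin.cons_succ] at hxy
      exact absurd hxy (Fin.succAbove_ne p _)
    | succ j =>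
      rw [Fin.cons_succ, Fin.cons_succ] at hxy
      exact congrArg Fin.succ (e.injective (Fin.succAbove_right_injective hxy))

noncomputable def G (p : Fin (n+1)) (e : Equiv.Perm (Fin n)) : Equiv.Perm (Fin (n+1)) :=
  Equiv.ofBijective _ (Finite.injective_iff_bijective.mp (gfun_inj p e))

@[simp] lemma G_zero (p : Fin (n+1)) (e : Equiv.Perm (Fin n)) : G p e 0 = p := rfl
@[simp] lemma G_succ (p : Fin (n+1)) (e : Equiv.Perm (Fin n)) (j : Fin n) :
    G p e j.succ = p.succAbove (e j) := by
  simp [G, Equiv.ofBijective, gfun]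

noncomputable def Gp : Fin (n+1) × Equiv.Perm (Fin n) → Equiv.Perm (Fin (n+1)) :=
  fun x => G x.1 x.2

lemma Gp_inj : Function.Injective (Gp (n := n)) := by
  rintro ⟨p, e⟩ ⟨q, f⟩ h
  have h0 : p = q := by
    have := congrArg (fun σ : Equiv.Perm (Fin (n+1)) => σ 0) h
    simpa [Gp] using this
  subst h0
  have : e = f := Equiv.ext fun j => by
    have := congrArg (fun σ : Equiv.Perm (Fin (n+1)) => σ j.succ) h
    simp only [Gp, G_succ] at this
    exact Fin.succAbove_right_injective this
  simp [this]

lemma Gp_surj : Function.Surjective (Gp (n := n)) := by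
  have : Function.Bijective (Gp (n := n)) := by
    rw [Fintype.bijective_iff_injective_and_card]
    refine ⟨Gp_inj, ?_⟩
    simp [Fintype.card_perm, Nat.factorial_succ]
  exact this.2

lemma lt_succAbove_iff' (p : Fin (n+1)) (v : Fin n) : p < p.succAbove v ↔ (p : ℕ) ≤ (v : ℕ) := by
  rcases lt_or_ge (v.castSucc) p with h | h
  · rw [Fin.succAbove_of_castSucc_lt _ _ h]
    simp only [Fin.lt_iff_val_lt_val, Fin.coe_castSucc] at h ⊢
    omega
  · rw [Fin.succAbove_of_le_castSucc _ _ h]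
    simp only [Fin.le_iff_val_le_val, Fin.coe_castSucc] at h
    simp only [Fin.lt_iff_val_lt_val, Fin.val_succ]
    omega

lemma Dst_G_zero (p : Fin (n+1)) (e : Equiv.Perm (Fin n)) : Dst (G p e) 0 = n - p := by
  unfold Dst
  rw [show (Finset.univ.filter (fun j => (0 : Fin (n+1)) < j ∧ (G p e) 0 < (G p e) j))
      = Finset.image Fin.succ (Finset.univ.filter (fun i : Fin n => p < p.succAbove (e i))) from ?_]
  · rw [Finset.card_image_of_injective _ (Fin.succ_injective n)]
    have : (Finset.univ.filter (fun i : Fin n => p < p.succAbove (e i)))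
        = Finset.image e.symm (Finset.univ.filter (fun v : Fin n => p < p.succAbove v)) := by
      ext i
      simp only [Finset.mem_filter, Finset.mem_univ, true_and, Finset.mem_image]
      constructor
      · intro h; exact ⟨e i, h, by simp⟩
      · rintro ⟨v, hv, rfl⟩; simpa using hv
    rw [this, Finset.card_image_of_injective _ e.symm.injective]
    have : (Finset.univ.filter (fun v : Fin n => p < p.succAbove v))
        = Finset.univ.filter (fun v : Fin n => (p : ℕ) ≤ (v : ℕ)) := by
      ext v; simp [lt_succAbove_iff']
    rw [this]
    rcases Nat.lt_or_ge (p : ℕ) n with hp | hp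
    · have : (Finset.univ.filter (fun v : Fin n => (p : ℕ) ≤ (v : ℕ))) = Finset.Ici ⟨p, hp⟩ := by
        ext v; simp [Fin.le_iff_val_le_val]
      rw [this, Fin.card_Ici]
    · have : (Finset.univ.filter (fun v : Fin n => (p : ℕ) ≤ (v : ℕ))) = ∅ := by
        ext v; simp only [Finset.mem_filter, Finset.mem_univ, true_and, Finset.notMem_empty,
          iff_false]
        omega
      rw [this]; simp; omega
  · ext j
    induction j using Fin.cases with
    | zero => simp only [Finset.mem_filter, Finset.mem_univ, true_and]; simp [Fin.succ_ne_zero, (Fin.succ_ne_zero _).symm]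
    | succ i => simp only [Finset.mem_filter, Finset.mem_univ, true_and]; simp [Fin.succ_injective n |>.eq_iff, Fin.succ_pos]
lemma Dst_G_succ (p : Fin (n+1)) (e : Equiv.Perm (Fin n)) (j : Fin n) :
    Dst (G p e) j.succ = Dst e j := by
  unfold Dst
  rw [show (Finset.univ.filter (fun l => j.succ < l ∧ (G p e) j.succ < (G p e) l))
      = Finset.image Fin.succ (Finset.univ.filter (fun i : Fin n => j < i ∧ e j < e i)) from ?_]
  · rw [Finset.card_image_of_injective _ (Fin.succ_injective n)]
  · ext l
    induction l using Fin.cases with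
    | zero =>
      simp only [Finset.mem_filter, Finset.mem_univ, true_and, Finset.mem_image]
      constructor
      · rintro ⟨h1, -⟩; exact absurd h1 (by simp [Fin.lt_iff_val_lt_val])
      · rintro ⟨i, -, hi⟩; exact absurd hi (Fin.succ_ne_zero i)
    | succ i =>
      simp only [Finset.mem_filter, Finset.mem_univ, true_and, Finset.mem_image, G_succ,
        Fin.succ_lt_succ_iff, Fin.succAbove_lt_succAbove_iff]
      constructor
      · intro h; exact ⟨i, h, rfl⟩
      · rintro ⟨i', hi', h'⟩
        obtain rfl : i' = i := Fin.succ_injective n h'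
        exact hi'

end Bij

section Sets

def SA (n : ℕ) : Set (Equiv.Perm (Fin n)) := {α | ∀ i, Dst α i ≤ 1}
def SC (n : ℕ) : Set (Equiv.Perm (Fin n)) :=
  {α | (∀ i, Dst α i ≤ 1) ∧ ∀ i : Fin n, (i : ℕ) = 0 → Dst α i = 1}
def SB (n : ℕ) : Set (Equiv.Perm (Fin n)) := {α | Pprop α}

variable {n : ℕ}

lemma mem_decomp (α : Equiv.Perm (Fin (n+1))) :
    ∃ p e, α = G p e := by
  obtain ⟨⟨p, e⟩, rfl⟩ := Gp_surj α
  exact ⟨p, e, rfl⟩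

lemma RA : SA (n+1) = Gp '' (({p : Fin (n+1) | n - (p : ℕ) ≤ 1} ×ˢ SA n)) := by
  ext α
  obtain ⟨p, e, rfl⟩ := mem_decomp α
  simp only [Set.mem_image, Set.mem_prod, Set.mem_setOf_eq]
  constructor
  · intro h
    refine ⟨(p, e), ⟨?_, fun j => ?_⟩, rfl⟩
    · have := h 0; rwa [Dst_G_zero] at this
    · have := h j.succ; rwa [Dst_G_succ] at this
  · rintro ⟨⟨q, f⟩, ⟨h1, h2⟩, hg⟩
    obtain ⟨rfl, rfl⟩ : q = p ∧ f = e := by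
      have : (q, f) = (p, e) := Gp_inj hg
      exact ⟨congrArg Prod.fst this, congrArg Prod.snd this⟩
    dsimp only at h1 h2
    intro i
    induction i using Fin.cases with
    | zero => rw [Dst_G_zero]; exact h1
    | succ j => rw [Dst_G_succ]; exact h2 j

lemma RC : SC (n+1) = Gp '' (({p : Fin (n+1) | n - (p : ℕ) = 1} ×ˢ SA n)) := by
  ext α
  obtain ⟨p, e, rfl⟩ := mem_decomp α
  simp only [Set.mem_image, Set.mem_prod, Set.mem_setOf_eq, SC, SA]
  constructor
  · rintro ⟨h, h0⟩
    refine ⟨(p, e), ⟨?_, fun j => ?_⟩, rfl⟩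
    · have := h0 0 rfl; rwa [Dst_G_zero] at this
    · have := h j.succ; rwa [Dst_G_succ] at this
  · rintro ⟨⟨q, f⟩, ⟨h1, h2⟩, hg⟩
    obtain ⟨rfl, rfl⟩ : q = p ∧ f = e := by
      have : (q, f) = (p, e) := Gp_inj hg
      exact ⟨congrArg Prod.fst this, congrArg Prod.snd this⟩
    dsimp only at h1 h2
    constructor
    · intro i
      induction i using Fin.cases with
      | zero => rw [Dst_G_zero]; omega
      | succ j => rw [Dst_G_succ]; exact h2 j
    · intro i hi
      obtain rfl : i = 0 := Fin.ext hi
      rw [Dst_G_zero]; exact h1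
lemma RB : SB (n+1) = Gp '' (({p : Fin (n+1) | n - (p : ℕ) ≤ 1} ×ˢ SB n)
    ∪ ({p : Fin (n+1) | n - (p : ℕ) = 2} ×ˢ SC n)) := by
  ext α
  obtain ⟨p, e, rfl⟩ := mem_decomp α
  simp only [Set.mem_image, Set.mem_union, Set.mem_prod, Set.mem_setOf_eq]
  constructor
  · rintro ⟨i, h, hD2, hle, hD1⟩
    refine ⟨(p, e), ?_, rfl⟩
    rcases Fin.eq_zero_or_eq_succ i with rfl | ⟨j, rfl⟩
    · right
      have hp : n - (p : ℕ) = 2 := by rwa [Dst_G_zero] at hD2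
      have hn : 0 < n := by omega
      refine ⟨hp, fun l => ?_, fun l hl => ?_⟩
      · have := hle l.succ (Fin.succ_ne_zero l)
        rwa [Dst_G_succ] at this
      · obtain rfl : l = ⟨0, hn⟩ := Fin.ext hl
        have heq : (⟨((0 : Fin (n+1)) : ℕ) + 1, h⟩ : Fin (n+1)) = Fin.succ (⟨0, hn⟩ : Fin n) :=
          Fin.ext (by simp)
        rwa [heq, Dst_G_succ] at hD1
    · left
      have h' : (j : ℕ) + 1 < n := by
        have := h; simp only [Fin.val_succ] at this; omega
      refine ⟨?_, j, h', ?_, fun a ha => ?_, ?_⟩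
      · have := hle 0 (Fin.succ_ne_zero j).symm
        rwa [Dst_G_zero] at this
      · rwa [Dst_G_succ] at hD2
      · have := hle a.succ (fun hh => ha (Fin.succ_injective n hh))
        rwa [Dst_G_succ] at this
      · have heq : (⟨((j.succ : Fin (n+1)) : ℕ) + 1, h⟩ : Fin (n+1))
            = Fin.succ (⟨(j : ℕ) + 1, h'⟩ : Fin n) := Fin.ext (by simp)
        rwa [heq, Dst_G_succ] at hD1
  · rintro ⟨⟨q, f⟩, hmem, hg⟩
    obtain ⟨rfl, rfl⟩ : q = p ∧ f = e := by
      have : (q, f) = (p, e) := Gp_inj hg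
      exact ⟨congrArg Prod.fst this, congrArg Prod.snd this⟩
    rcases hmem with ⟨hp, i, h', hD2, hle, hD1⟩ | ⟨hp, hA, h0⟩
    · dsimp only at hp
      have hs : ((i.succ : Fin (n+1)) : ℕ) + 1 < n + 1 := by simp only [Fin.val_succ]; omega
      refine ⟨i.succ, hs, ?_, fun a ha => ?_, ?_⟩
      · rwa [Dst_G_succ]
      · rcases Fin.eq_zero_or_eq_succ a with rfl | ⟨l, rfl⟩
        · rw [Dst_G_zero]; exact hp
        · have hl : l ≠ i := fun hh => ha (by rw [hh])
          rw [Dst_G_succ]; exact hle l hl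
      · have heq : (⟨((i.succ : Fin (n+1)) : ℕ) + 1, hs⟩ : Fin (n+1))
            = Fin.succ (⟨(i : ℕ) + 1, h'⟩ : Fin n) := Fin.ext (by simp)
        rw [heq, Dst_G_succ]; exact hD1
    · dsimp only at hp
      have hn : 0 < n := by omega
      have hs : ((0 : Fin (n+1)) : ℕ) + 1 < n + 1 := by simp; omega
      refine ⟨0, hs, ?_, fun a ha => ?_, ?_⟩
      · rw [Dst_G_zero]; exact hp
      · rcases Fin.eq_zero_or_eq_succ a with rfl | ⟨l, rfl⟩
        · exact absurd rfl ha
        · rw [Dst_G_succ]; exact hA l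
      · have heq : (⟨((0 : Fin (n+1)) : ℕ) + 1, hs⟩ : Fin (n+1))
            = Fin.succ (⟨0, hn⟩ : Fin n) := Fin.ext (by simp)
        rw [heq, Dst_G_succ]; exact h0 ⟨0, hn⟩ rfl

lemma ncard_prod' {A B : Type*} (s : Set A) (t : Set B) :
    (s ×ˢ t).ncard = s.ncard * t.ncard := by
  rw [← Nat.card_coe_set_eq, ← Nat.card_coe_set_eq, ← Nat.card_coe_set_eq,
    ← Nat.card_prod]
  exact Nat.card_congr (Equiv.Set.prod s t)

lemma card_p_le_one (hn : 1 ≤ n) : ({p : Fin (n+1) | n - (p : ℕ) ≤ 1}).ncard = 2 := by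
  have : ({p : Fin (n+1) | n - (p : ℕ) ≤ 1})
      = {(⟨n-1, by omega⟩ : Fin (n+1)), ⟨n, by omega⟩} := by
    ext p
    simp only [Set.mem_setOf_eq, Set.mem_insert_iff, Set.mem_singleton_iff, Fin.ext_iff]
    omega
  rw [this, Set.ncard_pair (by simp [Fin.ext_iff]; omega)]

lemma card_p_eq_one (hn : 1 ≤ n) : ({p : Fin (n+1) | n - (p : ℕ) = 1}).ncard = 1 := by
  have : ({p : Fin (n+1) | n - (p : ℕ) = 1}) = {(⟨n-1, by omega⟩ : Fin (n+1))} := by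
    ext p
    simp only [Set.mem_setOf_eq, Set.mem_singleton_iff, Fin.ext_iff]
    omega
  rw [this, Set.ncard_singleton]

lemma card_p_eq_two (hn : 2 ≤ n) : ({p : Fin (n+1) | n - (p : ℕ) = 2}).ncard = 1 := by
  have : ({p : Fin (n+1) | n - (p : ℕ) = 2}) = {(⟨n-2, by omega⟩ : Fin (n+1))} := by
    ext p
    simp only [Set.mem_setOf_eq, Set.mem_singleton_iff, Fin.ext_iff]
    omega
  rw [this, Set.ncard_singleton]

lemma card_SA : ∀ n, (SA (n+1)).ncard = 2 ^ n := by
  intro n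
  induction n with
  | zero =>
    have : SA 1 = Set.univ := by
      ext α
      simp only [SA, Set.mem_setOf_eq, Set.mem_univ, iff_true]
      intro i
      have : Dst α i = 0 := by
        unfold Dst
        rw [Finset.card_eq_zero]
        ext j
        simp only [Finset.mem_filter, Finset.mem_univ, true_and, Finset.notMem_empty, iff_false]
        rintro ⟨h1, -⟩
        exact absurd (Subsingleton.elim i j) h1.ne
      omega
    rw [this, Set.ncard_univ, Nat.card_eq_fintype_card, Fintype.card_perm]
    rfl
  | succ m ih =>
    rw [RA, Set.ncard_image_of_injective _ Gp_inj, ncard_prod', ih,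
      card_p_le_one (by omega)]
    ring

lemma card_SC : ∀ n, (SC (n+2)).ncard = 2 ^ n := by
  intro n
  rw [RC, Set.ncard_image_of_injective _ Gp_inj, ncard_prod', card_SA,
    card_p_eq_one (by omega), one_mul]

lemma SB_two : SB 2 = ∅ := by
  ext α
  simp only [SB, Pprop, Set.mem_setOf_eq, Set.mem_empty_iff_false, iff_false]
  rintro ⟨i, h, hD2, -, -⟩
  have hi : (i : ℕ) = 0 := by omega
  have : Dst α i ≤ 1 := by
    unfold Dst
    calc (Finset.univ.filter (fun j => i < j ∧ α i < α j)).card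
        ≤ ({(⟨1, by omega⟩ : Fin 2)} : Finset (Fin 2)).card := by
          apply Finset.card_le_card
          intro j hj
          simp only [Finset.mem_filter] at hj
          simp only [Finset.mem_singleton, Fin.ext_iff]
          have := hj.2.1
          rw [Fin.lt_iff_val_lt_val, hi] at this
          omega
      _ = 1 := by simp
  omega

lemma card_SB : ∀ n, (SB (n+3)).ncard = (n+1) * 2 ^ n := by
  intro n
  induction n with
  | zero =>
    have : (3 : ℕ) = 2 + 1 := rfl
    rw [this, RB, Set.ncard_image_of_injective _ Gp_inj]
    rw [Set.ncard_union_eq ?dis]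
    case dis =>
      apply Set.disjoint_left.mpr
      rintro ⟨p, e⟩ hp hq
      simp only [Set.mem_prod, Set.mem_setOf_eq] at hp hq
      omega
    rw [ncard_prod', ncard_prod', SB_two, Set.ncard_empty, card_p_eq_two (by omega)]
    have : SC 2 = SC (0+2) := rfl
    rw [this, card_SC]
    simp
  | succ m ih =>
    have h4 : m + 1 + 3 = (m + 3) + 1 := by omega
    rw [h4, RB, Set.ncard_image_of_injective _ Gp_inj]
    rw [Set.ncard_union_eq ?dis]
    case dis =>
      apply Set.disjoint_left.mpr
      rintro ⟨p, e⟩ hp hq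
      simp only [Set.mem_prod, Set.mem_setOf_eq] at hp hq
      omega
    rw [ncard_prod', ncard_prod', ih, card_p_le_one (by omega), card_p_eq_two (by omega)]
    have : SC (m+3) = SC ((m+1)+2) := rfl
    rw [this, card_SC]
    ring

end Sets

section Equivalence
variable {n : ℕ}

lemma mem_DF (α : Equiv.Perm (Fin n)) (i j : Fin n) :
    j ∈ (Finset.univ.filter (fun j => i < j ∧ α i < α j)) ↔ i < j ∧ α i < α j := by simp

lemma setEq (n : ℕ) :
    {α : Equiv.Perm (Fin n) |
        (¬ ∃ i j l : Fin n, i < j ∧ j < l ∧ α i < α l ∧ α l < α j) ∧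
        (∃! t : Fin n × Fin n × Fin n,
          t.1 < t.2.1 ∧ t.2.1 < t.2.2 ∧ α t.1 < α t.2.1 ∧ α t.2.1 < α t.2.2)}
      = SB n := by
  ext α
  simp only [Set.mem_setOf_eq, SB, Pprop]
  constructor
  · rintro ⟨hno, ⟨⟨i0, j0, k0⟩, ⟨h01, h02, h03, h04⟩, huniq⟩⟩
    dsimp only at h01 h02 h03 h04 huniq
    -- basic consequences
    have incr : ∀ a b c : Fin n, a < b → b < c → α a < α b → α a < α c → α b < α c := by
      intro a b c hab hbc h1 h2
      rcases lt_or_gt_of_ne (α.injective.ne hbc.ne) with h | h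
      · exact h
      · exact absurd ⟨a, b, c, hab, hbc, h2, h⟩ hno
    have unique123 : ∀ a b c : Fin n, a < b → b < c → α a < α b → α b < α c →
        a = i0 ∧ b = j0 ∧ c = k0 := by
      intro a b c hab hbc h1 h2
      have := huniq (a, b, c) ⟨hab, hbc, h1, h2⟩
      exact ⟨congrArg Prod.fst this, congrArg (fun t => t.2.1) this,
        congrArg (fun t => t.2.2) this⟩
    have no3 : ∀ a : Fin n, Dst α a ≤ 2 := by
      intro a
      by_contra hcon
      push_neg at hcon
      obtain ⟨t, hts, htc⟩ := Finset.exists_subset_card_eq (show 3 ≤ _ from hcon)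
      obtain ⟨x, y, z, hxy, hxz, hyz, rfl⟩ := Finset.card_eq_three.mp htc
      have hx := (mem_DF α a x).mp (hts (by simp))
      have hy := (mem_DF α a y).mp (hts (by simp))
      have hz := (mem_DF α a z).mp (hts (by simp))
      have sorted : ∃ b c d : Fin n,
          b < c ∧ c < d ∧ (a < b ∧ α a < α b) ∧ (a < c ∧ α a < α c) ∧ (a < d ∧ α a < α d) := by
        rcases lt_trichotomy x y with h1 | h1 | h1
        · rcases lt_trichotomy y z with h2 | h2 | h2
          · exact ⟨x, y, z, h1, h2, hx, hy, hz⟩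
          · exact absurd h2 hyz
          · rcases lt_trichotomy x z with h3 | h3 | h3
            · exact ⟨x, z, y, h3, h2, hx, hz, hy⟩
            · exact absurd h3 hxz
            · exact ⟨z, x, y, h3, h1, hz, hx, hy⟩
        · exact absurd h1 hxy
        · rcases lt_trichotomy x z with h2 | h2 | h2
          · exact ⟨y, x, z, h1, h2, hy, hx, hz⟩
          · exact absurd h2 hxz
          · rcases lt_trichotomy y z with h3 | h3 | h3
            · exact ⟨y, z, x, h3, h2, hy, hz, hx⟩
            · exact absurd h3 hyz
            · exact ⟨z, y, x, h3, h1, hz, hy, hx⟩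
      obtain ⟨b, c, d, hbc, hcd, ⟨hab, hvb⟩, ⟨hac, hvc⟩, ⟨had, hvd⟩⟩ := sorted
      have h1 : α b < α c := incr a b c hab hbc hvb hvc
      have h2 : α b < α d := incr a b d hab (hbc.trans hcd) hvb hvd
      have e1 := (unique123 a b c hab hbc hvb h1).2.2
      have e2 := (unique123 a b d hab (hbc.trans hcd) hvb h2).2.2
      exact absurd (e1.trans e2.symm) hcd.ne
    have eq2 : ∀ a : Fin n, Dst α a = 2 → a = i0 := by
      intro a ha
      obtain ⟨b, c, hbc, hset⟩ := Finset.card_eq_two.mp ha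
      have hb := (mem_DF α a b).mp (by rw [hset]; simp)
      have hc := (mem_DF α a c).mp (by rw [hset]; simp)
      rcases lt_or_gt_of_ne hbc with h | h
      · have := incr a b c hb.1 h hb.2 hc.2
        exact (unique123 a b c hb.1 h hb.2 this).1
      · have := incr a c b hc.1 h hc.2 hb.2
        exact (unique123 a c b hc.1 h hc.2 this).1
    -- D i0 = 2
    have hj0 : j0 ∈ (Finset.univ.filter (fun j => i0 < j ∧ α i0 < α j)) :=
      (mem_DF α i0 j0).mpr ⟨h01, h03⟩
    have hk0 : k0 ∈ (Finset.univ.filter (fun j => i0 < j ∧ α i0 < α j)) :=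
      (mem_DF α i0 k0).mpr ⟨h01.trans h02, h03.trans h04⟩
    have hD2 : Dst α i0 = 2 := by
      have hge : 2 ≤ Dst α i0 := by
        unfold Dst
        exact Finset.one_lt_card.mpr ⟨j0, hj0, k0, hk0, h02.ne⟩
      exact le_antisymm (no3 i0) hge
    have hF : (Finset.univ.filter (fun j => i0 < j ∧ α i0 < α j)) = {j0, k0} := by
      symm
      apply Finset.eq_of_subset_of_card_le
      · intro m hm
        simp only [Finset.mem_insert, Finset.mem_singleton] at hm
        rcases hm with rfl | rfl
        · exact hj0
        · exact hk0
      · rw [show (Finset.univ.filter (fun j => i0 < j ∧ α i0 < α j)).card = Dst α i0 from rfl,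
          hD2, Finset.card_insert_of_notMem (by simp [h02.ne]), Finset.card_singleton]
    have h : (i0 : ℕ) + 1 < n := by
      have l1 : (i0 : ℕ) < (j0 : ℕ) := h01
      have l2 : (j0 : ℕ) < (k0 : ℕ) := h02
      have l3 : (k0 : ℕ) < n := k0.isLt
      omega
    refine ⟨i0, h, hD2, ?_, ?_⟩
    · intro a ha
      have := no3 a
      rcases Nat.lt_or_ge (Dst α a) 2 with h' | h'
      · omega
      · exact absurd (eq2 a (le_antisymm this h')) ha
    · set s : Fin n := ⟨(i0 : ℕ) + 1, h⟩ with hs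
      have hsi0 : i0 < s := by rw [Fin.lt_iff_val_lt_val]; simp [hs]
      have hsle : (s : ℕ) ≤ (j0 : ℕ) := by
        have : (i0 : ℕ) < (j0 : ℕ) := h01
        simp [hs]; omega
      have hle1 : Dst α s ≤ 1 := by
        have := no3 s
        rcases Nat.lt_or_ge (Dst α s) 2 with h' | h'
        · omega
        · have := eq2 s (le_antisymm this h')
          exact absurd (this ▸ hsi0) (lt_irrefl i0)
      have hge1 : 1 ≤ Dst α s := by
        rcases eq_or_lt_of_le hsle with heq | hlt
        · have hseq : s = j0 := Fin.ext heq
          apply Finset.card_pos.mpr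
          exact ⟨k0, (mem_DF α s k0).mpr ⟨hseq ▸ h02, hseq ▸ h04⟩⟩
        · have hsj : s < j0 := hlt
          have hvs : α s < α i0 := by
            rcases lt_or_gt_of_ne (α.injective.ne hsi0.ne') with h' | h'
            · exact h'
            · have : s ∈ ({j0, k0} : Finset (Fin n)) := by
                rw [← hF]; exact (mem_DF α i0 s).mpr ⟨hsi0, h'⟩
              simp only [Finset.mem_insert, Finset.mem_singleton] at this
              rcases this with rfl | rfl
              · exact absurd hsj (lt_irrefl _)
              · exact absurd (hsj.trans h02) (lt_irrefl _)
          apply Finset.card_pos.mpr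
          exact ⟨j0, (mem_DF α s j0).mpr ⟨hsj, hvs.trans h03⟩⟩
      omega
  · rintro ⟨i, h, hD2, hle, hD1⟩
    obtain ⟨j, k, hjk0, hF⟩ := Finset.card_eq_two.mp hD2
    -- order j k
    obtain ⟨j, k, hjk, hF⟩ : ∃ j k : Fin n, j < k ∧
        (Finset.univ.filter (fun m => i < m ∧ α i < α m)) = {j, k} := by
      rcases lt_or_gt_of_ne hjk0 with h' | h'
      · exact ⟨j, k, h', hF⟩
      · exact ⟨k, j, h', by rw [hF, Finset.pair_comm]⟩
    have hj := (mem_DF α i j).mp (by rw [hF]; simp)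
    have hk := (mem_DF α i k).mp (by rw [hF]; simp)
    set s : Fin n := ⟨(i : ℕ) + 1, h⟩ with hs
    have hsi : i < s := by rw [Fin.lt_iff_val_lt_val]; simp [hs]
    have hsle : (s : ℕ) ≤ (j : ℕ) := by
      have : (i : ℕ) < (j : ℕ) := hj.1
      simp [hs]; omega
    -- key claim: α j < α k
    have hjk' : α j < α k := by
      by_contra hcon
      have hkj : α k < α j := lt_of_le_of_ne (not_lt.mp hcon) (α.injective.ne hjk.ne')
      rcases eq_or_lt_of_le hsle with heq | hlt
      · -- s = j : show Dst α s = 0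
        have hseq : s = j := Fin.ext heq
        have : (Finset.univ.filter (fun m => s < m ∧ α s < α m)) = ∅ := by
          ext m
          simp only [Finset.mem_filter, Finset.mem_univ, true_and, Finset.notMem_empty,
            iff_false, not_and]
          intro hm1 hm2
          have hmi : m ∈ ({j, k} : Finset (Fin n)) := by
            rw [← hF]
            exact (mem_DF α i m).mpr ⟨hsi.trans hm1, (hseq ▸ hj.2 : α i < α s).trans hm2⟩
          simp only [Finset.mem_insert, Finset.mem_singleton] at hmi
          rcases hmi with rfl | rfl
          · exact absurd (hseq ▸ hm1) (lt_irrefl _)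
          · exact absurd (hseq ▸ hm2) (not_lt.mpr (le_of_lt hkj))
        have : Dst α s = 0 := by unfold Dst; rw [this]; simp
        omega
      · -- s < j
        have hsj : s < j := hlt
        have hvs : α s < α i := by
          rcases lt_or_gt_of_ne (α.injective.ne hsi.ne') with h' | h'
          · exact h'
          · have : s ∈ ({j, k} : Finset (Fin n)) := by
              rw [← hF]; exact (mem_DF α i s).mpr ⟨hsi, h'⟩
            simp only [Finset.mem_insert, Finset.mem_singleton] at this
            rcases this with rfl | rfl
            · exact absurd hsj (lt_irrefl _)
            · exact absurd (hsj.trans hjk) (lt_irrefl _)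
        have h2 : 2 ≤ Dst α s := by
          apply Finset.one_lt_card.mpr
          exact ⟨j, (mem_DF α s j).mpr ⟨hsj, hvs.trans hj.2⟩,
            k, (mem_DF α s k).mpr ⟨hsj.trans hjk, hvs.trans hk.2⟩, hjk.ne⟩
        omega
    -- the unique triple is (i, j, k)
    have key : ∀ a b c : Fin n, a < b → b < c → α a < α b → α a < α c →
        a = i ∧ b = j ∧ c = k := by
      intro a b c hab hbc h1 h2
      have hmemb := (mem_DF α a b).mpr ⟨hab, h1⟩
      have hmemc := (mem_DF α a c).mpr ⟨hab.trans hbc, h2⟩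
      have h2a : 2 ≤ Dst α a := Finset.one_lt_card.mpr ⟨b, hmemb, c, hmemc, hbc.ne⟩
      have hai : a = i := by
        by_contra hcon
        have := hle a hcon
        omega
      subst hai
      rw [hF] at hmemb hmemc
      simp only [Finset.mem_insert, Finset.mem_singleton] at hmemb hmemc
      rcases hmemb with rfl | rfl
      · rcases hmemc with rfl | rfl
        · exact absurd hbc (lt_irrefl _)
        · exact ⟨rfl, rfl, rfl⟩
      · rcases hmemc with rfl | rfl
        · exact absurd (hjk.trans hbc) (lt_irrefl _)
        · exact absurd hbc (lt_irrefl _)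
    constructor
    · rintro ⟨a, b, c, hab, hbc, h1, h2⟩
      obtain ⟨rfl, rfl, rfl⟩ := key a b c hab hbc (h1.trans h2) h1
      exact absurd h2 (not_lt.mpr (le_of_lt hjk'))
    · refine ⟨(i, j, k), ⟨hj.1, hjk, hj.2, hjk'⟩, ?_⟩
      rintro ⟨a, b, c⟩ ⟨hab, hbc, h1, h2⟩
      dsimp only at hab hbc h1 h2
      obtain ⟨rfl, rfl, rfl⟩ := key a b c hab hbc h1 (h1.trans h2)
      rfl

end Equivalence

theorem stmt8 (n : ℕ) (hn : 3 ≤ n) :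
    Set.ncard {α : Equiv.Perm (Fin n) |
        (¬ ∃ i j l : Fin n, i < j ∧ j < l ∧ α i < α l ∧ α l < α j) ∧
        (∃! t : Fin n × Fin n × Fin n,
          t.1 < t.2.1 ∧ t.2.1 < t.2.2 ∧ α t.1 < α t.2.1 ∧ α t.2.1 < α t.2.2)}
      = (n - 2) * 2 ^ (n - 3) := by
  obtain ⟨m, rfl⟩ : ∃ m, n = m + 3 := ⟨n - 3, by omega⟩
  rw [setEq, card_SB]
  have h1 : m + 3 - 2 = m + 1 := by omega
  have h2 : m + 3 - 3 = m := by omega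
  rw [h1, h2]
end
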